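/- arXiv:1611.03167 — 14 statements merged into one kernel-verified Lean document; each statement's English description precedes it below -/
import Mathlib

section
/- Let τ be a real number with 0 < τ < (1+√5)/2 and set σ_τ := max{(2−τ)/2, (1+τ(τ−1)²)/(2−(1−τ)²)}. Then 0 < σ_τ < 1. -/
theorem sigma_tau_in_unit_interval (τ : ℝ) (hτ0 : 0 < τ) (hτ1 : τ < (1 + Real.sqrt 5) / 2)
    (σ : ℝ) (hσ : σ = max ((2 - τ) / 2) ((1 + τ * (τ - 1) ^ 2) / (2 - (1 - τ) ^ 2))) :
    0 < σ ∧ σ < 1 := by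
  have h5 : Real.sqrt 5 ^ 2 = 5 := Real.sq_sqrt (by norm_num)
  have h5n : Real.sqrt 5 ≥ 0 := Real.sqrt_nonneg 5
  have hτ2 : τ < 2 := by nlinarith
  have h5g : Real.sqrt 5 ≥ 2 := by nlinarith
  have hkey : τ ^ 2 < τ + 1 := by nlinarith [mul_pos (by linarith : (0:ℝ) < Real.sqrt 5 - (2*τ-1)) (by linarith : (0:ℝ) < Real.sqrt 5 + (2*τ-1))]
  have hden : 0 < 2 - (1 - τ) ^ 2 := by nlinarith
  subst hσ
  constructor
  · exact lt_max_of_lt_left (by linarith)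
  · apply max_lt (by linarith)
    rw [div_lt_one hden]
    nlinarith [sq_nonneg (τ - 1)]
end

section
/- Let τ be a real number with 0 < τ < 1 and set σ_τ := max{(2−τ)/2, (1+τ(τ−1)²)/(2−(1−τ)²)}. Then τ²σ_τ < τ(σ_τ − (τ−1)²) < σ_τ − (τ+1)(τ−1)². -/
theorem sigma_tau_chain_lt (τ : ℝ) (hτ0 : 0 < τ) (hτ1 : τ < 1)
    (σ : ℝ) (hσ : σ = max ((2 - τ) / 2) ((1 + τ * (τ - 1) ^ 2) / (2 - (1 - τ) ^ 2))) :
    τ ^ 2 * σ < τ * (σ - (τ - 1) ^ 2) ∧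
      τ * (σ - (τ - 1) ^ 2) < σ - (τ + 1) * (τ - 1) ^ 2 := by
  have h1 : (2 - τ) / 2 ≤ σ := hσ ▸ le_max_left _ _
  have hσgt : σ > 1 - τ := by linarith
  constructor
  · nlinarith [mul_pos hτ0 (sub_pos.mpr hσgt), sq_nonneg (τ - 1)]
  · nlinarith [sub_pos.mpr hσgt, sq_nonneg (τ - 1)]
end

section
/- Let τ be a real number with 1 ≤ τ < (1+√5)/2 and set σ_τ := max{(2−τ)/2, (1+τ(τ−1)²)/(2−(1−τ)²)}. Then τ²σ_τ ≥ τ(σ_τ − (τ−1)²) ≥ σ_τ − (τ+1)(τ−1)² > 0, and the first two inequalities are strict whenever τ > 1. -/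
theorem sigma_tau_chain_ge (τ : ℝ) (hτ0 : 1 ≤ τ) (hτ1 : τ < (1 + Real.sqrt 5) / 2)
    (σ : ℝ) (hσ : σ = max ((2 - τ) / 2) ((1 + τ * (τ - 1) ^ 2) / (2 - (1 - τ) ^ 2))) :
    τ ^ 2 * σ ≥ τ * (σ - (τ - 1) ^ 2) ∧
      τ * (σ - (τ - 1) ^ 2) ≥ σ - (τ + 1) * (τ - 1) ^ 2 ∧
      σ - (τ + 1) * (τ - 1) ^ 2 > 0 ∧
      (1 < τ → τ ^ 2 * σ > τ * (σ - (τ - 1) ^ 2) ∧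
        τ * (σ - (τ - 1) ^ 2) > σ - (τ + 1) * (τ - 1) ^ 2) := by
  have hs : Real.sqrt 5 ^ 2 = 5 := Real.sq_sqrt (by norm_num)
  have hs2 : (2 : ℝ) ≤ Real.sqrt 5 := by
    nlinarith [Real.sqrt_nonneg 5]
  -- τ² < τ + 1
  have ht : τ ^ 2 < τ + 1 := by nlinarith [Real.sqrt_nonneg 5]
  have hτ2 : τ < 2 := by nlinarith
  have hden : 0 < 2 - (1 - τ) ^ 2 := by nlinarith
  have hσ2 : (1 + τ * (τ - 1) ^ 2) / (2 - (1 - τ) ^ 2) ≤ σ := hσ ▸ le_max_right _ _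
  -- key : σ > (τ+1)(τ-1)²
  have hkey : (τ + 1) * (τ - 1) ^ 2 < σ := by
    have h1 : (τ + 1) * (τ - 1) ^ 2 < (1 + τ * (τ - 1) ^ 2) / (2 - (1 - τ) ^ 2) := by
      rw [lt_div_iff₀ hden]
      have e1 : (τ - 1) ^ 2 < 1 := by nlinarith
      have e2 : (τ + 1) * (τ - 1) ^ 2 < 1 := by
        nlinarith [mul_pos (by linarith : (0:ℝ) < τ) (sub_pos.2 ht)]
      nlinarith [mul_pos (sub_pos.2 e1) (sub_pos.2 e2)]
    linarith
  have hσpos : 0 < σ := by nlinarith [sq_nonneg (τ - 1)]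
  have hsum : 0 < σ + τ - 1 := by linarith
  refine ⟨?_, ?_, by linarith, fun hgt => ⟨?_, ?_⟩⟩
  · nlinarith [mul_nonneg (sub_nonneg.2 hτ0) hsum.le]
  · nlinarith [mul_nonneg (sub_nonneg.2 hτ0) hsum.le]
  · nlinarith [mul_pos (sub_pos.2 hgt) hsum]
  · nlinarith [mul_pos (sub_pos.2 hgt) hsum]
end

section
/- Let τ be a real number with 0 < τ < (1+√5)/2 and set σ_τ := max{(2−τ)/2, (1+τ(τ−1)²)/(2−(1−τ)²)}. Then σ_τ(τ+1) − 1 − (σ_τ + τ − 1)·max(1−τ, (τ−1)τ) = 0. -/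
theorem sigma_tau_identity (τ : ℝ) (hτ0 : 0 < τ) (hτ1 : τ < (1 + Real.sqrt 5) / 2)
    (σ : ℝ) (hσ : σ = max ((2 - τ) / 2) ((1 + τ * (τ - 1) ^ 2) / (2 - (1 - τ) ^ 2))) :
    σ * (τ + 1) - 1 - (σ + τ - 1) * max (1 - τ) ((τ - 1) * τ) = 0 := by
  have h5 : Real.sqrt 5 < 3 := by
    nlinarith [Real.sq_sqrt (by norm_num : (5:ℝ) ≥ 0), Real.sqrt_nonneg 5]
  have hτ2 : τ < 2 := by linarith
  have hd : (0:ℝ) < 2 - (1 - τ) ^ 2 := by nlinarith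
  rcases le_or_gt τ 1 with h | h
  · have hmax : max (1 - τ) ((τ - 1) * τ) = 1 - τ := max_eq_left (by nlinarith)
    have hσ' : σ = (2 - τ) / 2 := by
      rw [hσ]
      apply max_eq_left
      rw [div_le_div_iff₀ hd (by norm_num : (0:ℝ) < 2)]
      nlinarith [mul_nonneg (mul_nonneg (sub_nonneg.2 h) hτ0.le) (by linarith : (0:ℝ) ≤ 1 + τ)]
    rw [hσ', hmax]; ring
  · have hmax : max (1 - τ) ((τ - 1) * τ) = (τ - 1) * τ := max_eq_right (by nlinarith)
    have hσ' : σ = (1 + τ * (τ - 1) ^ 2) / (2 - (1 - τ) ^ 2) := by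
      rw [hσ]
      apply max_eq_right
      rw [div_le_div_iff₀ (by norm_num : (0:ℝ) < 2) hd]
      nlinarith
    rw [hσ', hmax]
    field_simp
    ring
end

section
/- Let τ be a real number with 0 < τ < (1+√5)/2, set σ_τ := max{(2−τ)/2, (1+τ(τ−1)²)/(2−(1−τ)²)}, ν_τ := σ_τ(τ+1) + τ − 1, and γ_τ := min{ min(τ²σ_τ, σ_τ − (τ+1)(τ−1)²) / (τ(σ_τ − (τ−1)²)), τσ_τ/ν_τ }. Then 0 < γ_τ < 1. -/
theorem gamma_tau_in_unit_interval (τ : ℝ) (hτ0 : 0 < τ) (hτ1 : τ < (1 + Real.sqrt 5) / 2)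
    (σ ν γ : ℝ) (hσ : σ = max ((2 - τ) / 2) ((1 + τ * (τ - 1) ^ 2) / (2 - (1 - τ) ^ 2)))
    (hν : ν = σ * (τ + 1) + τ - 1)
    (hγ : γ = min (min (τ ^ 2 * σ) (σ - (τ + 1) * (τ - 1) ^ 2) / (τ * (σ - (τ - 1) ^ 2)))
      (τ * σ / ν)) :
    0 < γ ∧ γ < 1 := by
  have h5 : Real.sqrt 5 ^ 2 = 5 := Real.sq_sqrt (by norm_num)
  have h5n : (0:ℝ) ≤ Real.sqrt 5 := Real.sqrt_nonneg 5
  -- key fact: τ² < τ + 1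
  have hs : τ ^ 2 < τ + 1 := by nlinarith [sq_nonneg (2 * τ - 1 - Real.sqrt 5)]
  have hτ2 : τ < 2 := by nlinarith
  have hd : 0 < 2 - (1 - τ) ^ 2 := by nlinarith
  have hσ1 : (2 - τ) / 2 ≤ σ := hσ ▸ le_max_left _ _
  have hσ2 : (1 + τ * (τ - 1) ^ 2) / (2 - (1 - τ) ^ 2) ≤ σ := hσ ▸ le_max_right _ _
  have hσpos : 0 < σ := by nlinarith
  have hνpos : 0 < ν := by nlinarith
  -- σ > (τ-1)²
  have hB : (τ - 1) ^ 2 < σ := by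
    have h : (τ - 1) ^ 2 < (1 + τ * (τ - 1) ^ 2) / (2 - (1 - τ) ^ 2) := by
      rw [lt_div_iff₀ hd]
      nlinarith [mul_pos hτ0 hτ0, mul_pos (mul_pos hτ0 hτ0) hτ0,
        mul_pos hτ0 (sub_pos.mpr hs), mul_pos (mul_pos hτ0 hτ0) (sub_pos.mpr hs),
        sq_nonneg (τ - 1), mul_nonneg (sq_nonneg (τ - 1)) hτ0.le]
    linarith
  -- σ > (τ+1)(τ-1)²
  have hA2 : (τ + 1) * (τ - 1) ^ 2 < σ := by
    have h : (τ + 1) * (τ - 1) ^ 2 < (1 + τ * (τ - 1) ^ 2) / (2 - (1 - τ) ^ 2) := by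
      rw [lt_div_iff₀ hd]
      nlinarith [mul_pos (mul_pos (mul_pos hτ0 hτ0) (by linarith : (0:ℝ) < 2 - τ))
        (sub_pos.mpr hs)]
    linarith
  have hBpos : 0 < τ * (σ - (τ - 1) ^ 2) := mul_pos hτ0 (by linarith)
  have hApos : 0 < min (τ ^ 2 * σ) (σ - (τ + 1) * (τ - 1) ^ 2) :=
    lt_min (mul_pos (pow_pos hτ0 2) hσpos) (by linarith)
  have hCpos : 0 < τ * σ / ν := div_pos (mul_pos hτ0 hσpos) hνpos
  have hC1 : τ * σ / ν < 1 := by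
    rw [div_lt_one hνpos]
    nlinarith
  constructor
  · rw [hγ]
    exact lt_min (div_pos hApos hBpos) hCpos
  · calc γ ≤ τ * σ / ν := hγ ▸ min_le_right _ _
      _ < 1 := hC1
end

section
/- Let (y^k, z^k, x^k)_{k≥0} be an sPADMM sequence with τ > 0. Then for every k ≥ 0, G(w^k − w^{k+1}) ∈ T(w̃^{k+1}), i.e. S(y^k − y^{k+1}) ∈ ∂ϑ_f(y^{k+1}) + A x̃^{k+1}, (T₀ + βBB*)(z^k − z^{k+1}) ∈ ∂φ_g(z^{k+1}) + B x̃^{k+1}, and (τβ)^{-1}(x^k − x^{k+1}) = c − A* y^{k+1} − B* z^{k+1}. -/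
open scoped RealInnerProductSpace

noncomputable section

/-- The subdifferential of a function `f : Y → ℝ ∪ {+∞}` (encoded with values in `EReal`). -/
def subdiff {Y : Type*} [NormedAddCommGroup Y] [InnerProductSpace ℝ Y]
    (f : Y → EReal) (y : Y) : Set Y :=
  {ξ | ∀ y', f y + ((⟪ξ, y' - y⟫ : ℝ) : EReal) ≤ f y'}

theorem sPADMM_inclusion
    {Y Z X : Type*}
    [NormedAddCommGroup Y] [InnerProductSpace ℝ Y] [FiniteDimensional ℝ Y]
    [NormedAddCommGroup Z] [InnerProductSpace ℝ Z] [FiniteDimensional ℝ Z]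
    [NormedAddCommGroup X] [InnerProductSpace ℝ X] [FiniteDimensional ℝ X]
    (ϑf : Y → EReal) (φg : Z → EReal)
    -- ϑ_f is proper, lsc and convex
    (hϑbot : ∀ v, ϑf v ≠ ⊥) (hϑproper : ∃ v, ϑf v ≠ ⊤)
    (hϑlsc : LowerSemicontinuous ϑf)
    (hϑconvex : ∀ (v v' : Y) (a b : ℝ), 0 ≤ a → 0 ≤ b → a + b = 1 →
      ϑf (a • v + b • v') ≤ (a : EReal) * ϑf v + (b : EReal) * ϑf v')
    -- φ_g is proper, lsc and convex
    (hφbot : ∀ v, φg v ≠ ⊥) (hφproper : ∃ v, φg v ≠ ⊤)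
    (hφlsc : LowerSemicontinuous φg)
    (hφconvex : ∀ (v v' : Z) (a b : ℝ), 0 ≤ a → 0 ≤ b → a + b = 1 →
      φg (a • v + b • v') ≤ (a : EReal) * φg v + (b : EReal) * φg v')
    (A : X →ₗ[ℝ] Y) (B : X →ₗ[ℝ] Z) (c : X)
    (β τ : ℝ) (hβ : 0 < β) (hτ : 0 < τ)
    -- S and T₀ are self-adjoint positive semidefinite
    (S : Y →ₗ[ℝ] Y) (hSsym : LinearMap.IsSymmetric S) (hSpsd : ∀ v, 0 ≤ ⟪S v, v⟫)
    (T₀ : Z →ₗ[ℝ] Z) (hTsym : LinearMap.IsSymmetric T₀) (hTpsd : ∀ v, 0 ≤ ⟪T₀ v, v⟫)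
    -- the sPADMM sequence
    (y : ℕ → Y) (z : ℕ → Z) (x : ℕ → X)
    (hADMMy : ∀ k : ℕ,
      -(A (x k)) - β • A (LinearMap.adjoint A (y (k+1)) + LinearMap.adjoint B (z k) - c)
        - S (y (k+1) - y k) ∈ subdiff ϑf (y (k+1)))
    (hADMMz : ∀ k : ℕ,
      -(B (x k)) - β • B (LinearMap.adjoint A (y (k+1)) + LinearMap.adjoint B (z (k+1)) - c)
        - T₀ (z (k+1) - z k) ∈ subdiff φg (z (k+1)))
    (hADMMx : ∀ k : ℕ,
      x (k+1) = x k + (τ * β) • (LinearMap.adjoint A (y (k+1)) + LinearMap.adjoint B (z (k+1)) - c))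
    -- xt^{k+1} := x^k + β (A* y^{k+1} + B* z^k − c)
    (xt : ℕ → X)
    (hxt : ∀ k : ℕ,
      xt (k+1) = x k + β • (LinearMap.adjoint A (y (k+1)) + LinearMap.adjoint B (z k) - c)) :
    ∀ k : ℕ,
      (S (y k - y (k+1)) - A (xt (k+1)) ∈ subdiff ϑf (y (k+1))) ∧
      ((T₀ (z k - z (k+1)) + β • B (LinearMap.adjoint B (z k - z (k+1)))) - B (xt (k+1))
        ∈ subdiff φg (z (k+1))) ∧
      ((τ * β)⁻¹ • (x k - x (k+1))
        = c - LinearMap.adjoint A (y (k+1)) - LinearMap.adjoint B (z (k+1))) := by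
  intro k
  refine ⟨?_, ?_, ?_⟩
  · have h := hADMMy k
    have e : S (y k - y (k+1)) - A (xt (k+1))
        = -(A (x k)) - β • A (LinearMap.adjoint A (y (k+1)) + LinearMap.adjoint B (z k) - c)
          - S (y (k+1) - y k) := by
      rw [hxt k]
      simp only [map_add, map_sub, map_smul]
      module
    rw [e]; exact h
  · have h := hADMMz k
    have e : (T₀ (z k - z (k+1)) + β • B (LinearMap.adjoint B (z k - z (k+1)))) - B (xt (k+1))
        = -(B (x k)) - β • B (LinearMap.adjoint A (y (k+1)) + LinearMap.adjoint B (z (k+1)) - c)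
          - T₀ (z (k+1) - z k) := by
      rw [hxt k]
      simp only [map_add, map_sub, map_smul]
      module
    rw [e]; exact h
  · have hne : (τ * β) ≠ 0 := by positivity
    rw [hADMMx k]
    rw [show x k - (x k + (τ * β) • (LinearMap.adjoint A (y (k+1)) + LinearMap.adjoint B (z (k+1)) - c))
        = -((τ * β) • (LinearMap.adjoint A (y (k+1)) + LinearMap.adjoint B (z (k+1)) - c)) by abel]
    rw [smul_neg, inv_smul_smul₀ hne]
    abel
end
end

section
/- Let (y^k, z^k, x^k)_{k≥0} be an sPADMM sequence with τ > 0 and, for k ≥ 1, set ψ_{k+1} := ⟨A* y^{k+1} + B* z^{k+1} − c, B*(z^{k+1} − z^k)⟩. Then for every k ≥ 1: βψ_{k+1} + ‖z^{k+1} − z^k‖²_{Σ_{φg}} ≤ (max(1−τ, 1−τ^{-1})β/2)·‖A* y^k + B* z^k − c‖² − (1/2)‖z^{k+1} − z^k‖²_{T₀} + (max(1−τ, (τ−1)τ)β/2)·‖B*(z^{k+1} − z^k)‖² + (1/2)‖z^k − z^{k−1}‖²_{T₀}. -/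
/-!
The z-subproblem optimality conditions at two consecutive iterations produce two subgradients of
`φg`; pairing their difference with `z^{k+1} - z^k` and using the strong-monotonicity bound by
`Σ_{φg}` leaves, after the multiplier update `x^k - x^{k-1} = τβ r^k` with the residual
`r^k = A* y^k + B* z^k - c`, the cross term
`(1 - τ) β ⟪r^k, B*(z^{k+1} - z^k)⟫` and the mixed term `⟪T₀(z^k - z^{k-1}), z^{k+1} - z^k⟫`.
The latter is split by Cauchy–Schwarz for the semi-inner product `⟪T₀ ·, ·⟫`, the former by
Young's inequality with weight `1` when `τ ≤ 1` and weight `τ` when `τ > 1`.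
-/

open scoped RealInnerProductSpace

noncomputable section

section

variable {E : Type*} [NormedAddCommGroup E] [InnerProductSpace ℝ E]

theorem LinearMap.IsSymmetric.two_mul_inner_le {T : E →ₗ[ℝ] E} (hT : T.IsSymmetric)
    (hTpsd : ∀ v, 0 ≤ ⟪T v, v⟫) (u v : E) :
    2 * ⟪T u, v⟫ ≤ ⟪u, T u⟫ + ⟪v, T v⟫ := by
  have h := hTpsd (u - v)
  have hvu : ⟪T v, u⟫ = ⟪T u, v⟫ := by rw [hT v u, real_inner_comm]
  rw [real_inner_comm (T u) u, real_inner_comm (T v) v]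
  simp only [map_sub, inner_sub_left, inner_sub_right] at h
  linarith

theorem one_sub_mul_inner_le {β τ : ℝ} (hβ : 0 ≤ β) (hτ : 0 < τ) (u v : E) :
    (1 - τ) * β * ⟪u, v⟫ ≤ max (1 - τ) (1 - τ⁻¹) * β / 2 * ‖u‖ ^ 2
      + max (1 - τ) ((τ - 1) * τ) * β / 2 * ‖v‖ ^ 2 := by
  obtain ⟨hlow, hup⟩ := abs_le.mp (abs_real_inner_le_norm u v)
  rcases le_or_gt τ 1 with hτ1 | hτ1
  · rw [max_eq_left (by linarith [one_le_inv₀ hτ |>.mpr hτ1]),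
      max_eq_left (by nlinarith)]
    have young : ‖u‖ * ‖v‖ ≤ ‖u‖ ^ 2 / 2 + ‖v‖ ^ 2 / 2 := by
      linarith [two_mul_le_add_sq ‖u‖ ‖v‖]
    have hcoef : 0 ≤ (1 - τ) * β := mul_nonneg (by linarith) hβ
    linarith [mul_le_mul_of_nonneg_left (hup.trans young) hcoef]
  · rw [max_eq_right (by linarith [inv_lt_one_of_one_lt₀ hτ1]),
      max_eq_right (by nlinarith)]
    have young : ‖u‖ * ‖v‖ ≤ τ⁻¹ * ‖u‖ ^ 2 / 2 + τ * ‖v‖ ^ 2 / 2 := by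
      have h : 0 ≤ τ⁻¹ * (‖u‖ - τ * ‖v‖) ^ 2 := by positivity
      have hinv : τ⁻¹ * τ = 1 := inv_mul_cancel₀ hτ.ne'
      nlinarith
    have hcoef : 0 ≤ (τ - 1) * β := mul_nonneg (by linarith) hβ
    have key := mul_le_mul_of_nonneg_left ((neg_le.mp hlow).trans young) hcoef
    have hrhs : (τ - 1) * β * (τ⁻¹ * ‖u‖ ^ 2 / 2 + τ * ‖v‖ ^ 2 / 2)
        = (1 - τ⁻¹) * β / 2 * ‖u‖ ^ 2 + (τ - 1) * τ * β / 2 * ‖v‖ ^ 2 := by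
      field_simp
    linarith

end

section

variable {X Z : Type*} [NormedAddCommGroup X] [InnerProductSpace ℝ X]
  [NormedAddCommGroup Z] [InnerProductSpace ℝ Z]

/-- The element of `∂φg(z^{k+1})` supplied by the optimality condition of the `z`-subproblem,
written in terms of the multiplier `x = x^k`, the residual `r = r^{k+1}` and the step
`d = z^{k+1} - z^k`. -/
def zSubgradient (B : X →ₗ[ℝ] Z) (T₀ : Z →ₗ[ℝ] Z) (β : ℝ) (x r : X) (d : Z) : Z :=
  -(B x) - β • B r - T₀ d

theorem inner_zSubgradient_sub (B : X →ₗ[ℝ] Z) (T₀ : Z →ₗ[ℝ] Z) {β τ : ℝ} {x₀ x₁ r₁ : X}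
    (hx : x₁ = x₀ + (τ * β) • r₁) (r₂ : X) (d₁ d₂ : Z) :
    ⟪zSubgradient B T₀ β x₁ r₂ d₂ - zSubgradient B T₀ β x₀ r₁ d₁, d₂⟫
      = (1 - τ) * β * ⟪B r₁, d₂⟫ - β * ⟪B r₂, d₂⟫ - ⟪d₂, T₀ d₂⟫ + ⟪T₀ d₁, d₂⟫ := by
  subst hx
  simp only [zSubgradient, map_add, map_smul, inner_sub_left, inner_add_left, inner_neg_left,
    real_inner_smul_left, real_inner_comm d₂ (T₀ d₂)]
  ring

end

theorem sPADMM_psi_bound_general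
    {Y Z X : Type*}
    [NormedAddCommGroup Y] [InnerProductSpace ℝ Y] [FiniteDimensional ℝ Y]
    [NormedAddCommGroup Z] [InnerProductSpace ℝ Z] [FiniteDimensional ℝ Z]
    [NormedAddCommGroup X] [InnerProductSpace ℝ X] [FiniteDimensional ℝ X]
    (φg : Z → EReal)
    (A : X →ₗ[ℝ] Y) (B : X →ₗ[ℝ] Z) (c : X)
    (β τ : ℝ) (hβ : 0 < β) (hτ : 0 < τ)
    (T₀ : Z →ₗ[ℝ] Z) (hTsym : LinearMap.IsSymmetric T₀) (hTpsd : ∀ v, 0 ≤ ⟪T₀ v, v⟫)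
    (SigZ : Z →ₗ[ℝ] Z)
    (hSigZmono : ∀ (z₁ z₂ η₁ η₂ : Z), η₁ ∈ subdiff φg z₁ → η₂ ∈ subdiff φg z₂ →
      ⟪z₁ - z₂, SigZ (z₁ - z₂)⟫ ≤ ⟪η₁ - η₂, z₁ - z₂⟫)
    (y : ℕ → Y) (z : ℕ → Z) (x : ℕ → X)
    (hADMMz : ∀ k : ℕ,
      -(B (x k)) - β • B (LinearMap.adjoint A (y (k+1)) + LinearMap.adjoint B (z (k+1)) - c)
        - T₀ (z (k+1) - z k) ∈ subdiff φg (z (k+1)))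
    (hADMMx : ∀ k : ℕ,
      x (k+1) = x k + (τ * β) • (LinearMap.adjoint A (y (k+1)) + LinearMap.adjoint B (z (k+1)) - c)) :
    ∀ k : ℕ, 1 ≤ k →
      β * ⟪LinearMap.adjoint A (y (k+1)) + LinearMap.adjoint B (z (k+1)) - c,
          LinearMap.adjoint B (z (k+1) - z k)⟫
        + ⟪z (k+1) - z k, SigZ (z (k+1) - z k)⟫
      ≤ max (1 - τ) (1 - τ⁻¹) * β / 2 *
            ‖LinearMap.adjoint A (y k) + LinearMap.adjoint B (z k) - c‖ ^ 2
        - (1/2) * ⟪z (k+1) - z k, T₀ (z (k+1) - z k)⟫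
        + max (1 - τ) ((τ - 1) * τ) * β / 2 * ‖LinearMap.adjoint B (z (k+1) - z k)‖ ^ 2
        + (1/2) * ⟪z k - z (k-1), T₀ (z k - z (k-1))⟫ := by
  intro k hk
  obtain ⟨j, rfl⟩ := Nat.exists_eq_add_of_le' hk
  rw [Nat.add_sub_cancel]
  set r : ℕ → X := fun i ↦ LinearMap.adjoint A (y i) + LinearMap.adjoint B (z i) - c
  have hmono := hSigZmono _ _ _ _ (hADMMz (j + 1)) (hADMMz j)
  rw [← zSubgradient, ← zSubgradient,
    inner_zSubgradient_sub B T₀ (hADMMx j)] at hmono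
  have hmixed := hTsym.two_mul_inner_le hTpsd (z (j + 1) - z j) (z (j + 1 + 1) - z (j + 1))
  have hcross := one_sub_mul_inner_le hβ.le hτ (r (j + 1))
    (LinearMap.adjoint B (z (j + 1 + 1) - z (j + 1)))
  rw [LinearMap.adjoint_inner_right] at hcross ⊢
  linarith

theorem sPADMM_psi_bound
    {Y Z X : Type*}
    [NormedAddCommGroup Y] [InnerProductSpace ℝ Y] [FiniteDimensional ℝ Y]
    [NormedAddCommGroup Z] [InnerProductSpace ℝ Z] [FiniteDimensional ℝ Z]
    [NormedAddCommGroup X] [InnerProductSpace ℝ X] [FiniteDimensional ℝ X]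
    (ϑf : Y → EReal) (φg : Z → EReal)
    (hϑbot : ∀ v, ϑf v ≠ ⊥) (hϑproper : ∃ v, ϑf v ≠ ⊤)
    (hϑlsc : LowerSemicontinuous ϑf)
    (hϑconvex : ∀ (v v' : Y) (a b : ℝ), 0 ≤ a → 0 ≤ b → a + b = 1 →
      ϑf (a • v + b • v') ≤ (a : EReal) * ϑf v + (b : EReal) * ϑf v')
    (hφbot : ∀ v, φg v ≠ ⊥) (hφproper : ∃ v, φg v ≠ ⊤)
    (hφlsc : LowerSemicontinuous φg)
    (hφconvex : ∀ (v v' : Z) (a b : ℝ), 0 ≤ a → 0 ≤ b → a + b = 1 →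
      φg (a • v + b • v') ≤ (a : EReal) * φg v + (b : EReal) * φg v')
    (A : X →ₗ[ℝ] Y) (B : X →ₗ[ℝ] Z) (c : X)
    (β τ : ℝ) (hβ : 0 < β) (hτ : 0 < τ)
    (S : Y →ₗ[ℝ] Y) (hSsym : LinearMap.IsSymmetric S) (hSpsd : ∀ v, 0 ≤ ⟪S v, v⟫)
    (T₀ : Z →ₗ[ℝ] Z) (hTsym : LinearMap.IsSymmetric T₀) (hTpsd : ∀ v, 0 ≤ ⟪T₀ v, v⟫)
    (SigZ : Z →ₗ[ℝ] Z) (hSigZsym : LinearMap.IsSymmetric SigZ)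
    (hSigZpsd : ∀ v, 0 ≤ ⟪SigZ v, v⟫)
    (hSigZmono : ∀ (z₁ z₂ η₁ η₂ : Z), η₁ ∈ subdiff φg z₁ → η₂ ∈ subdiff φg z₂ →
      ⟪z₁ - z₂, SigZ (z₁ - z₂)⟫ ≤ ⟪η₁ - η₂, z₁ - z₂⟫)
    (y : ℕ → Y) (z : ℕ → Z) (x : ℕ → X)
    (hADMMy : ∀ k : ℕ,
      -(A (x k)) - β • A (LinearMap.adjoint A (y (k+1)) + LinearMap.adjoint B (z k) - c)
        - S (y (k+1) - y k) ∈ subdiff ϑf (y (k+1)))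
    (hADMMz : ∀ k : ℕ,
      -(B (x k)) - β • B (LinearMap.adjoint A (y (k+1)) + LinearMap.adjoint B (z (k+1)) - c)
        - T₀ (z (k+1) - z k) ∈ subdiff φg (z (k+1)))
    (hADMMx : ∀ k : ℕ,
      x (k+1) = x k + (τ * β) • (LinearMap.adjoint A (y (k+1)) + LinearMap.adjoint B (z (k+1)) - c)) :
    ∀ k : ℕ, 1 ≤ k →
      β * ⟪LinearMap.adjoint A (y (k+1)) + LinearMap.adjoint B (z (k+1)) - c,
          LinearMap.adjoint B (z (k+1) - z k)⟫
        + ⟪z (k+1) - z k, SigZ (z (k+1) - z k)⟫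
      ≤ max (1 - τ) (1 - τ⁻¹) * β / 2 *
            ‖LinearMap.adjoint A (y k) + LinearMap.adjoint B (z k) - c‖ ^ 2
        - (1/2) * ⟪z (k+1) - z k, T₀ (z (k+1) - z k)⟫
        + max (1 - τ) ((τ - 1) * τ) * β / 2 * ‖LinearMap.adjoint B (z (k+1) - z k)‖ ^ 2
        + (1/2) * ⟪z k - z (k-1), T₀ (z k - z (k-1))⟫ :=
  sPADMM_psi_bound_general φg A B c β τ hβ hτ T₀ hTsym hTpsd SigZ hSigZmono y z x hADMMz hADMMx
end
end

section
/- Let (y^k, z^k, x^k)_{k≥0} be an sPADMM sequence with 0 < τ < (1+√5)/2. Then for every k ≥ 1: D_G(w̃^{k+1}, w^{k+1}) + η̃_{k+1} ≤ σ_τ · D_G(w̃^{k+1}, w^k) + (1 − γ_τ)·η̃_k. -/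
/-!
Write `r^k = A* y^k + B* z^k - c` and `Δz = z^{k+1} - z^k`. Then `x̃^{k+1} - x^{k+1} = β((1-τ) r^{k+1} - B* Δz)`
and `x̃^{k+1} - x^k = β(r^{k+1} - B* Δz)`, so after multiplying by `2τ` both sides of the inequality are
quadratic forms in `r^{k+1}`, `r^k`, `B* Δz` and the proximal steps. The `Σ`-strong monotonicity of
`∂φ_g` at `z^{k+1}, z^k`, whose subgradients come from two consecutive `z`-updates, together with
`x^k - x^{k-1} = τβ r^k` bounds `β⟪r^{k+1}, B* Δz⟫`. What remains is the cross term
`2(1-τ)(σ+τ-1)β⟪r^k, B* Δz⟫`, which Cauchy–Schwarz absorbs into the `‖r^k‖²` and `‖B* Δz‖²` terms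
because `σ_τ, γ_τ` satisfy a discriminant inequality.
-/

open scoped RealInnerProductSpace

noncomputable section

def sigmaTau (τ : ℝ) : ℝ := max ((2 - τ) / 2) ((1 + τ * (τ - 1) ^ 2) / (2 - (1 - τ) ^ 2))

def nuTau (τ : ℝ) : ℝ := sigmaTau τ * (τ + 1) + τ - 1

def gammaTau (τ : ℝ) : ℝ :=
  min (min (τ ^ 2 * sigmaTau τ) (sigmaTau τ - (τ + 1) * (τ - 1) ^ 2) /
      (τ * (sigmaTau τ - (τ - 1) ^ 2)))
    (τ * sigmaTau τ / nuTau τ)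

section Constants

variable {τ : ℝ}

lemma two_sub_one_sub_sq_pos (hτ : 0 < τ) (hτ2 : τ < 2) : 0 < 2 - (1 - τ) ^ 2 := by
  nlinarith

lemma two_sub_div_two_le_sigmaTau (τ : ℝ) : (2 - τ) / 2 ≤ sigmaTau τ := le_max_left _ _

lemma one_add_mul_sq_le_sigmaTau_mul (hτ : 0 < τ) (hτ2 : τ < 2) :
    1 + τ * (τ - 1) ^ 2 ≤ sigmaTau τ * (2 - (1 - τ) ^ 2) :=
  (div_le_iff₀ (two_sub_one_sub_sq_pos hτ hτ2)).1 (le_max_right _ _)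

lemma sigmaTau_add_sub_one_pos (hτ : 0 < τ) : 0 < sigmaTau τ + τ - 1 := by
  linarith [two_sub_div_two_le_sigmaTau τ]

lemma sq_sub_one_lt_sigmaTau (hτ : 0 < τ) (hτ2 : τ < 2) : (τ - 1) ^ 2 < sigmaTau τ := by
  have h₁ := two_sub_div_two_le_sigmaTau τ
  have h₂ := one_add_mul_sq_le_sigmaTau_mul hτ hτ2
  rcases le_or_gt τ 1 with h | h
  · nlinarith
  · nlinarith [two_sub_one_sub_sq_pos hτ hτ2, pow_pos (sub_pos.2 h) 3]

lemma one_le_sigmaTau_mul (hτ : 0 < τ) (hτ2 : τ < 2) : 1 ≤ sigmaTau τ * (1 + τ) := by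
  have h₁ := two_sub_div_two_le_sigmaTau τ
  have h₂ := one_add_mul_sq_le_sigmaTau_mul hτ hτ2
  rcases le_or_gt τ 1 with h | h
  · nlinarith
  · nlinarith [sq_nonneg (τ - 1)]

lemma sigmaTau_pos (hτ2 : τ < 2) : 0 < sigmaTau τ := by
  linarith [two_sub_div_two_le_sigmaTau τ]

lemma mul_sigmaTau_add_sub_one_eq_nuTau (τ : ℝ) :
    τ * sigmaTau τ + (sigmaTau τ + τ - 1) = nuTau τ := by
  unfold nuTau; ring

lemma mul_sigmaTau_lt_nuTau (hτ : 0 < τ) : τ * sigmaTau τ < nuTau τ := by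
  linarith [sigmaTau_add_sub_one_pos hτ, mul_sigmaTau_add_sub_one_eq_nuTau τ]

lemma nuTau_pos (hτ : 0 < τ) (hτ2 : τ < 2) : 0 < nuTau τ :=
  (mul_pos hτ (sigmaTau_pos hτ2)).trans (mul_sigmaTau_lt_nuTau hτ)

lemma gammaTau_mul_nuTau_le (hτ : 0 < τ) (hτ2 : τ < 2) :
    gammaTau τ * nuTau τ ≤ τ * sigmaTau τ :=
  (le_div_iff₀ (nuTau_pos hτ hτ2)).1 (min_le_right _ _)

lemma gammaTau_le_one (hτ : 0 < τ) (hτ2 : τ < 2) : gammaTau τ ≤ 1 := by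
  have h := (gammaTau_mul_nuTau_le hτ hτ2).trans_lt (mul_sigmaTau_lt_nuTau hτ)
  exact ((mul_lt_iff_lt_one_left (nuTau_pos hτ hτ2)).1 h).le

lemma gammaTau_mul_le_min (hτ : 0 < τ) (hτ2 : τ < 2) :
    gammaTau τ * (τ * (sigmaTau τ - (τ - 1) ^ 2)) ≤
      min (τ ^ 2 * sigmaTau τ) (sigmaTau τ - (τ + 1) * (τ - 1) ^ 2) :=
  (le_div_iff₀ (mul_pos hτ (sub_pos.2 (sq_sub_one_lt_sigmaTau hτ hτ2)))).1 (min_le_left _ _)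

lemma sq_mul_le_one_sub_gammaTau_mul (hτ : 0 < τ) (hτ2 : τ < 2) :
    ((1 - τ) * (sigmaTau τ + τ - 1)) ^ 2 ≤
      ((1 - gammaTau τ) * (sigmaTau τ - (τ - 1) ^ 2)) * (sigmaTau τ * (1 + τ) - 1) := by
  set σ := sigmaTau τ
  set γ := gammaTau τ
  have he := sigmaTau_add_sub_one_pos hτ
  have hγ := gammaTau_mul_le_min hτ hτ2
  rcases le_or_gt τ 1 with h | h
  · have h₁ : (1 - τ) * (σ + τ - 1) ≤ (1 - γ) * (σ - (τ - 1) ^ 2) := by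
      nlinarith [min_le_left (τ ^ 2 * σ) (σ - (τ + 1) * (τ - 1) ^ 2)]
    have h₂ : (1 - τ) * (σ + τ - 1) ≤ σ * (1 + τ) - 1 := by
      nlinarith [two_sub_div_two_le_sigmaTau τ]
    have h₀ : 0 ≤ (1 - τ) * (σ + τ - 1) := mul_nonneg (by linarith) he.le
    nlinarith [mul_le_mul h₁ h₂ h₀ (h₀.trans h₁)]
  · have h₁ : (τ - 1) * (σ + τ - 1) ≤ τ * ((1 - γ) * (σ - (τ - 1) ^ 2)) := by
      nlinarith [min_le_right (τ ^ 2 * σ) (σ - (τ + 1) * (τ - 1) ^ 2)]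
    have h₂ : τ * ((τ - 1) * (σ + τ - 1)) ≤ σ * (1 + τ) - 1 := by
      nlinarith [one_add_mul_sq_le_sigmaTau_mul hτ hτ2]
    have h₀ : 0 ≤ (τ - 1) * (σ + τ - 1) := mul_nonneg (by linarith) he.le
    nlinarith [mul_le_mul h₁ h₂ (mul_nonneg hτ.le h₀) (h₀.trans h₁)]

end Constants

lemma two_mul_inner_le_of_sq_le_mul {F : Type*} [NormedAddCommGroup F] [InnerProductSpace ℝ F]
    {t P Q : ℝ} (h : t ^ 2 ≤ P * Q) (hP : 0 ≤ P) (hQ : 0 ≤ Q) (u v : F) :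
    2 * t * ⟪u, v⟫ ≤ P * ‖u‖ ^ 2 + Q * ‖v‖ ^ 2 := by
  have hcs : t * ⟪u, v⟫ ≤ |t| * (‖u‖ * ‖v‖) := by
    refine (le_abs_self _).trans ?_
    rw [abs_mul]
    exact mul_le_mul_of_nonneg_left (abs_real_inner_le_norm u v) (abs_nonneg t)
  have hamgm : 2 * |t| * (‖u‖ * ‖v‖) ≤ P * ‖u‖ ^ 2 + Q * ‖v‖ ^ 2 := by
    refine (le_abs_self _).trans (abs_le_of_sq_le_sq ?_ (by positivity))
    nlinarith [sq_abs t, sq_nonneg (P * ‖u‖ ^ 2 - Q * ‖v‖ ^ 2), sq_nonneg (‖u‖ * ‖v‖)]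
  linarith

lemma two_mul_inner_map_le {F : Type*} [NormedAddCommGroup F] [InnerProductSpace ℝ F]
    {T : F →ₗ[ℝ] F} (hT : T.IsSymmetric) (hTpsd : ∀ v, 0 ≤ ⟪T v, v⟫) (u v : F) :
    2 * ⟪u, T v⟫ ≤ ⟪u, T u⟫ + ⟪v, T v⟫ := by
  have h := hTpsd (u - v)
  simp only [map_sub, inner_sub_left, inner_sub_right] at h
  linarith [hT u v, real_inner_comm u (T u), real_inner_comm v (T v), real_inner_comm u (T v)]

lemma sPADMM_zStep_inner_le {Z X : Type*}
    [NormedAddCommGroup Z] [InnerProductSpace ℝ Z] [FiniteDimensional ℝ Z]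
    [NormedAddCommGroup X] [InnerProductSpace ℝ X] [FiniteDimensional ℝ X]
    {φ : Z → EReal} {B : X →ₗ[ℝ] Z} {T₀ SigZ : Z →ₗ[ℝ] Z} {β τ : ℝ}
    (hmono : ∀ (z₁ z₂ η₁ η₂ : Z), η₁ ∈ subdiff φ z₁ → η₂ ∈ subdiff φ z₂ →
      ⟪z₁ - z₂, SigZ (z₁ - z₂)⟫ ≤ ⟪η₁ - η₂, z₁ - z₂⟫)
    {z₀ z₁ z₂ : Z} {x₀ x₁ r₁ r₂ : X}
    (h₁ : -(B x₀) - β • B r₁ - T₀ (z₁ - z₀) ∈ subdiff φ z₁)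
    (h₂ : -(B x₁) - β • B r₂ - T₀ (z₂ - z₁) ∈ subdiff φ z₂)
    (hx : x₁ = x₀ + (τ * β) • r₁) :
    ⟪z₂ - z₁, SigZ (z₂ - z₁)⟫ + β * ⟪r₂, LinearMap.adjoint B (z₂ - z₁)⟫
        + (τ - 1) * β * ⟪r₁, LinearMap.adjoint B (z₂ - z₁)⟫ + ⟪z₂ - z₁, T₀ (z₂ - z₁)⟫
      ≤ ⟪z₂ - z₁, T₀ (z₁ - z₀)⟫ := by
  have h := hmono _ _ _ _ h₂ h₁
  rw [hx] at h
  generalize z₂ - z₁ = dz at h ⊢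
  simp only [map_add, map_smul, inner_sub_left, inner_add_left, inner_neg_left,
    real_inner_smul_left, LinearMap.adjoint_inner_right] at h ⊢
  linarith [real_inner_comm dz (T₀ dz), real_inner_comm dz (T₀ (z₁ - z₀))]

/-- `η̃_k = etaTilde S T₀ Σ β τ r^k (y^k - y^{k-1}) (z^k - z^{k-1})`. -/
def etaTilde {Y Z X : Type*}
    [NormedAddCommGroup Y] [InnerProductSpace ℝ Y] [NormedAddCommGroup Z] [InnerProductSpace ℝ Z]
    [NormedAddCommGroup X] (S : Y →ₗ[ℝ] Y) (T₀ SigZ : Z →ₗ[ℝ] Z) (β τ : ℝ)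
    (r : X) (dy : Y) (dz : Z) : ℝ :=
  (sigmaTau τ - (τ - 1) ^ 2) * β / (2 * τ) * ‖r‖ ^ 2 + sigmaTau τ / 2 * ⟪dy, S dy⟫
    + nuTau τ / (2 * τ) * ⟪dz, T₀ dz⟫ + (sigmaTau τ + τ - 1) / τ * ⟪dz, SigZ dz⟫

lemma etaTilde_descent {Y Z X : Type*}
    [NormedAddCommGroup Y] [InnerProductSpace ℝ Y]
    [NormedAddCommGroup Z] [InnerProductSpace ℝ Z] [FiniteDimensional ℝ Z]
    [NormedAddCommGroup X] [InnerProductSpace ℝ X] [FiniteDimensional ℝ X]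
    {S : Y →ₗ[ℝ] Y} {T₀ SigZ : Z →ₗ[ℝ] Z} (B : X →ₗ[ℝ] Z) {β τ : ℝ}
    (hβ : 0 < β) (hτ : 0 < τ) (hτ2 : τ < 2) (hSpsd : ∀ v, 0 ≤ ⟪S v, v⟫)
    (hTsym : T₀.IsSymmetric) (hTpsd : ∀ v, 0 ≤ ⟪T₀ v, v⟫) (hSigZpsd : ∀ v, 0 ≤ ⟪SigZ v, v⟫)
    {a b : X} {dy dy₀ : Y} {dz dz₀ : Z}
    (hmono : ⟪dz, SigZ dz⟫ + β * ⟪a, LinearMap.adjoint B dz⟫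
        + (τ - 1) * β * ⟪b, LinearMap.adjoint B dz⟫ + ⟪dz, T₀ dz⟫ ≤ ⟪dz, T₀ dz₀⟫) :
    1 / 2 * ((τ * β)⁻¹ * ‖β • ((1 - τ) • a - LinearMap.adjoint B dz)‖ ^ 2)
        + etaTilde S T₀ SigZ β τ a dy dz
      ≤ sigmaTau τ * (1 / 2 * (⟪dy, S dy⟫ + ⟪dz, T₀ dz + β • B (LinearMap.adjoint B dz)⟫
          + (τ * β)⁻¹ * ‖β • (a - LinearMap.adjoint B dz)‖ ^ 2))
        + (1 - gammaTau τ) * etaTilde S T₀ SigZ β τ b dy₀ dz₀ := by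
  set m := LinearMap.adjoint B dz
  have hBm : ⟪dz, B m⟫ = ‖m‖ ^ 2 := by
    rw [← LinearMap.adjoint_inner_left, real_inner_self_eq_norm_sq]
  have hcross := two_mul_inner_le_of_sq_le_mul (sq_mul_le_one_sub_gammaTau_mul hτ hτ2)
    (mul_nonneg (sub_nonneg.2 (gammaTau_le_one hτ hτ2))
      (sub_nonneg.2 (sq_sub_one_lt_sigmaTau hτ hτ2).le))
    (sub_nonneg.2 (one_le_sigmaTau_mul hτ hτ2)) b m
  have hT := two_mul_inner_map_le hTsym hTpsd dz dz₀
  have he := sigmaTau_add_sub_one_pos hτ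
  have hγ := gammaTau_le_one hτ hτ2
  have hσ := sigmaTau_pos hτ2
  have hT₀ : 0 ≤ ⟪dz₀, T₀ dz₀⟫ := real_inner_comm dz₀ _ ▸ hTpsd dz₀
  have hS₀ : 0 ≤ ⟪dy₀, S dy₀⟫ := real_inner_comm dy₀ _ ▸ hSpsd dy₀
  have hSig₀ : 0 ≤ ⟪dz₀, SigZ dz₀⟫ := real_inner_comm dz₀ _ ▸ hSigZpsd dz₀
  clear_value m
  unfold etaTilde nuTau
  simp only [inner_add_right, real_inner_smul_right, hBm, norm_smul, mul_pow, norm_sub_sq_real,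
    real_inner_smul_left, Real.norm_eq_abs, sq_abs]
  field_simp
  -- the claim, times `2τ`, is the sum of `h₁, …, h₆`
  have h₁ := mul_le_mul_of_nonneg_left hmono (mul_pos two_pos he).le
  have h₂ := mul_le_mul_of_nonneg_left hT he.le
  have h₃ := mul_le_mul_of_nonneg_left hcross hβ.le
  have h₄ : 0 ≤ ((1 - gammaTau τ) * nuTau τ - (sigmaTau τ + τ - 1)) * ⟪dz₀, T₀ dz₀⟫ :=
    mul_nonneg (by linarith [gammaTau_mul_nuTau_le hτ hτ2, mul_sigmaTau_add_sub_one_eq_nuTau τ]) hT₀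
  have h₅ : 0 ≤ (1 - gammaTau τ) * (τ * sigmaTau τ) * ⟪dy₀, S dy₀⟫ :=
    mul_nonneg (mul_nonneg (sub_nonneg.2 hγ) (mul_pos hτ hσ).le) hS₀
  have h₆ : 0 ≤ (1 - gammaTau τ) * (2 * (sigmaTau τ + τ - 1)) * ⟪dz₀, SigZ dz₀⟫ :=
    mul_nonneg (mul_nonneg (sub_nonneg.2 hγ) (mul_pos two_pos he).le) hSig₀
  unfold nuTau at h₄
  linarith

theorem sPADMM_generalized_HPE_general
    {Y Z X : Type*}
    [NormedAddCommGroup Y] [InnerProductSpace ℝ Y] [FiniteDimensional ℝ Y]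
    [NormedAddCommGroup Z] [InnerProductSpace ℝ Z] [FiniteDimensional ℝ Z]
    [NormedAddCommGroup X] [InnerProductSpace ℝ X] [FiniteDimensional ℝ X]
    (φg : Z → EReal)
    (A : X →ₗ[ℝ] Y) (B : X →ₗ[ℝ] Z) (c : X)
    (β τ : ℝ) (hβ : 0 < β) (hτ : 0 < τ)
    (S : Y →ₗ[ℝ] Y) (hSpsd : ∀ v, 0 ≤ ⟪S v, v⟫)
    (T₀ : Z →ₗ[ℝ] Z) (hTsym : LinearMap.IsSymmetric T₀) (hTpsd : ∀ v, 0 ≤ ⟪T₀ v, v⟫)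
    (hτub : τ < (1 + Real.sqrt 5) / 2)
    (SigZ : Z →ₗ[ℝ] Z)
    (hSigZpsd : ∀ v, 0 ≤ ⟪SigZ v, v⟫)
    (hSigZmono : ∀ (z₁ z₂ η₁ η₂ : Z), η₁ ∈ subdiff φg z₁ → η₂ ∈ subdiff φg z₂ →
      ⟪z₁ - z₂, SigZ (z₁ - z₂)⟫ ≤ ⟪η₁ - η₂, z₁ - z₂⟫)
    (y : ℕ → Y) (z : ℕ → Z) (x : ℕ → X)
    (hADMMz : ∀ k : ℕ,
      -(B (x k)) - β • B (LinearMap.adjoint A (y (k+1)) + LinearMap.adjoint B (z (k+1)) - c)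
        - T₀ (z (k+1) - z k) ∈ subdiff φg (z (k+1)))
    (hADMMx : ∀ k : ℕ,
      x (k+1) = x k + (τ * β) • (LinearMap.adjoint A (y (k+1)) + LinearMap.adjoint B (z (k+1)) - c))
    (xt : ℕ → X)
    (hxt : ∀ k : ℕ,
      xt (k+1) = x k + β • (LinearMap.adjoint A (y (k+1)) + LinearMap.adjoint B (z k) - c))
    (σ ν γ : ℝ)
    (hσ : σ = max ((2 - τ) / 2) ((1 + τ * (τ - 1) ^ 2) / (2 - (1 - τ) ^ 2)))
    (hν : ν = σ * (τ + 1) + τ - 1)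
    (hγ : γ = min (min (τ ^ 2 * σ) (σ - (τ + 1) * (τ - 1) ^ 2) / (τ * (σ - (τ - 1) ^ 2)))
      (τ * σ / ν))
    (et : ℕ → ℝ)
    (het : ∀ k : ℕ, et (k+1) =
      (σ - (τ - 1) ^ 2) * β / (2 * τ) *
          ‖LinearMap.adjoint A (y (k+1)) + LinearMap.adjoint B (z (k+1)) - c‖ ^ 2
        + σ / 2 * ⟪y (k+1) - y k, S (y (k+1) - y k)⟫
        + ν / (2 * τ) * ⟪z (k+1) - z k, T₀ (z (k+1) - z k)⟫
        + (σ + τ - 1) / τ * ⟪z (k+1) - z k, SigZ (z (k+1) - z k)⟫)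
    (DG : Y × Z × X → Y × Z × X → ℝ)
    (hDG : ∀ w w' : Y × Z × X, DG w w' = (1/2) * (⟪w.1 - w'.1, S (w.1 - w'.1)⟫
      + ⟪w.2.1 - w'.2.1, T₀ (w.2.1 - w'.2.1) + β • B (LinearMap.adjoint B (w.2.1 - w'.2.1))⟫
      + (τ * β)⁻¹ * ‖w.2.2 - w'.2.2‖ ^ 2)) :
    ∀ k : ℕ, 1 ≤ k →
      DG (y (k+1), z (k+1), xt (k+1)) (y (k+1), z (k+1), x (k+1)) + et (k+1)
        ≤ σ * DG (y (k+1), z (k+1), xt (k+1)) (y k, z k, x k) + (1 - γ) * et k := by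
  intro k hk
  obtain ⟨k, rfl⟩ := Nat.exists_eq_add_of_le' hk
  obtain rfl : σ = sigmaTau τ := hσ
  obtain rfl : ν = nuTau τ := hν
  obtain rfl : γ = gammaTau τ := hγ
  have hη : ∀ j, et (j + 1) = etaTilde S T₀ SigZ β τ
      (LinearMap.adjoint A (y (j + 1)) + LinearMap.adjoint B (z (j + 1)) - c)
      (y (j + 1) - y j) (z (j + 1) - z j) := het
  have hxt_sub_succ : xt (k + 1 + 1) - x (k + 1 + 1) = β • ((1 - τ) •
      (LinearMap.adjoint A (y (k + 1 + 1)) + LinearMap.adjoint B (z (k + 1 + 1)) - c)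
      - LinearMap.adjoint B (z (k + 1 + 1) - z (k + 1))) := by
    rw [hxt, hADMMx (k + 1), map_sub]; module
  have hxt_sub : xt (k + 1 + 1) - x (k + 1) = β •
      (LinearMap.adjoint A (y (k + 1 + 1)) + LinearMap.adjoint B (z (k + 1 + 1)) - c
      - LinearMap.adjoint B (z (k + 1 + 1) - z (k + 1))) := by
    rw [hxt, map_sub]; module
  rw [hDG, hDG, hη, hη]
  simp only [sub_self, map_zero, smul_zero, add_zero, inner_zero_left, zero_add,
    hxt_sub_succ, hxt_sub]
  exact etaTilde_descent B hβ hτ (hτub.trans Real.goldenRatio_lt_two) hSpsd hTsym hTpsd hSigZpsd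
    (sPADMM_zStep_inner_le hSigZmono (hADMMz k) (hADMMz (k + 1)) (hADMMx k))

theorem sPADMM_generalized_HPE
    {Y Z X : Type*}
    [NormedAddCommGroup Y] [InnerProductSpace ℝ Y] [FiniteDimensional ℝ Y]
    [NormedAddCommGroup Z] [InnerProductSpace ℝ Z] [FiniteDimensional ℝ Z]
    [NormedAddCommGroup X] [InnerProductSpace ℝ X] [FiniteDimensional ℝ X]
    (ϑf : Y → EReal) (φg : Z → EReal)
    (hϑbot : ∀ v, ϑf v ≠ ⊥) (hϑproper : ∃ v, ϑf v ≠ ⊤)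
    (hϑlsc : LowerSemicontinuous ϑf)
    (hϑconvex : ∀ (v v' : Y) (a b : ℝ), 0 ≤ a → 0 ≤ b → a + b = 1 →
      ϑf (a • v + b • v') ≤ (a : EReal) * ϑf v + (b : EReal) * ϑf v')
    (hφbot : ∀ v, φg v ≠ ⊥) (hφproper : ∃ v, φg v ≠ ⊤)
    (hφlsc : LowerSemicontinuous φg)
    (hφconvex : ∀ (v v' : Z) (a b : ℝ), 0 ≤ a → 0 ≤ b → a + b = 1 →
      φg (a • v + b • v') ≤ (a : EReal) * φg v + (b : EReal) * φg v')
    (A : X →ₗ[ℝ] Y) (B : X →ₗ[ℝ] Z) (c : X)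
    (β τ : ℝ) (hβ : 0 < β) (hτ : 0 < τ)
    (S : Y →ₗ[ℝ] Y) (hSsym : LinearMap.IsSymmetric S) (hSpsd : ∀ v, 0 ≤ ⟪S v, v⟫)
    (T₀ : Z →ₗ[ℝ] Z) (hTsym : LinearMap.IsSymmetric T₀) (hTpsd : ∀ v, 0 ≤ ⟪T₀ v, v⟫)
    (hτub : τ < (1 + Real.sqrt 5) / 2)
    (SigZ : Z →ₗ[ℝ] Z) (hSigZsym : LinearMap.IsSymmetric SigZ)
    (hSigZpsd : ∀ v, 0 ≤ ⟪SigZ v, v⟫)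
    (hSigZmono : ∀ (z₁ z₂ η₁ η₂ : Z), η₁ ∈ subdiff φg z₁ → η₂ ∈ subdiff φg z₂ →
      ⟪z₁ - z₂, SigZ (z₁ - z₂)⟫ ≤ ⟪η₁ - η₂, z₁ - z₂⟫)
    (y : ℕ → Y) (z : ℕ → Z) (x : ℕ → X)
    (hADMMy : ∀ k : ℕ,
      -(A (x k)) - β • A (LinearMap.adjoint A (y (k+1)) + LinearMap.adjoint B (z k) - c)
        - S (y (k+1) - y k) ∈ subdiff ϑf (y (k+1)))
    (hADMMz : ∀ k : ℕ,
      -(B (x k)) - β • B (LinearMap.adjoint A (y (k+1)) + LinearMap.adjoint B (z (k+1)) - c)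
        - T₀ (z (k+1) - z k) ∈ subdiff φg (z (k+1)))
    (hADMMx : ∀ k : ℕ,
      x (k+1) = x k + (τ * β) • (LinearMap.adjoint A (y (k+1)) + LinearMap.adjoint B (z (k+1)) - c))
    (xt : ℕ → X)
    (hxt : ∀ k : ℕ,
      xt (k+1) = x k + β • (LinearMap.adjoint A (y (k+1)) + LinearMap.adjoint B (z k) - c))
    (σ ν γ : ℝ)
    (hσ : σ = max ((2 - τ) / 2) ((1 + τ * (τ - 1) ^ 2) / (2 - (1 - τ) ^ 2)))
    (hν : ν = σ * (τ + 1) + τ - 1)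
    (hγ : γ = min (min (τ ^ 2 * σ) (σ - (τ + 1) * (τ - 1) ^ 2) / (τ * (σ - (τ - 1) ^ 2)))
      (τ * σ / ν))
    (et : ℕ → ℝ)
    (het : ∀ k : ℕ, et (k+1) =
      (σ - (τ - 1) ^ 2) * β / (2 * τ) *
          ‖LinearMap.adjoint A (y (k+1)) + LinearMap.adjoint B (z (k+1)) - c‖ ^ 2
        + σ / 2 * ⟪y (k+1) - y k, S (y (k+1) - y k)⟫
        + ν / (2 * τ) * ⟪z (k+1) - z k, T₀ (z (k+1) - z k)⟫
        + (σ + τ - 1) / τ * ⟪z (k+1) - z k, SigZ (z (k+1) - z k)⟫)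
    (DG : Y × Z × X → Y × Z × X → ℝ)
    (hDG : ∀ w w' : Y × Z × X, DG w w' = (1/2) * (⟪w.1 - w'.1, S (w.1 - w'.1)⟫
      + ⟪w.2.1 - w'.2.1, T₀ (w.2.1 - w'.2.1) + β • B (LinearMap.adjoint B (w.2.1 - w'.2.1))⟫
      + (τ * β)⁻¹ * ‖w.2.2 - w'.2.2‖ ^ 2)) :
    ∀ k : ℕ, 1 ≤ k →
      DG (y (k+1), z (k+1), xt (k+1)) (y (k+1), z (k+1), x (k+1)) + et (k+1)
        ≤ σ * DG (y (k+1), z (k+1), xt (k+1)) (y k, z k, x k) + (1 - γ) * et k :=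
  sPADMM_generalized_HPE_general φg A B c β τ hβ hτ S hSpsd T₀ hTsym hTpsd hτub SigZ hSigZpsd
    hSigZmono y z x hADMMz hADMMx xt hxt σ ν γ hσ hν hγ et het DG hDG
end
end

section
/- Let (y^k, z^k, x^k)_{k≥0} be an sPADMM sequence with 0 < τ < (1+√5)/2. Then for every w ∈ H and every k ≥ 1: D_G(w, w^k) − D_G(w, w^{k+1}) + (1 − γ_τ)·η̃_k ≥ (1 − σ_τ)·D_G(w̃^{k+1}, w^k) + ⟨r^{k+1}, w̃^{k+1} − w⟩ + η̃_{k+1}, where r^{k+1} := G(w^k − w^{k+1}). -/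
open scoped RealInnerProductSpace

noncomputable section

private lemma cancelSym {Y : Type*} [NormedAddCommGroup Y] [InnerProductSpace ℝ Y]
    (S : Y →ₗ[ℝ] Y) (hS : LinearMap.IsSymmetric S) (p u v : Y) :
    (1/2:ℝ) * ⟪p - u, S (p - u)⟫ - (1/2) * ⟪p - v, S (p - v)⟫
      - ⟪S (u - v), v - p⟫ = (1/2) * ⟪v - u, S (v - u)⟫ := by
  have key : ∀ a b : Y, (⟪a, S b⟫:ℝ) = ⟪b, S a⟫ := fun a b => by
    rw [← hS, real_inner_comm]
  simp only [map_sub, inner_sub_left, inner_sub_right]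
  linarith [key p u, key p v, key u v, hS u v, hS v u, hS u p, hS v p, hS p p, hS u u, hS v v]

private lemma cancelNorm {X : Type*} [NormedAddCommGroup X] [InnerProductSpace ℝ X]
    (p u v vt : X) :
    (1/2:ℝ) * ‖p - u‖^2 - (1/2) * ‖p - v‖^2 - ⟪u - v, vt - p⟫
      = (1/2) * ‖vt - u‖^2 - (1/2) * ‖vt - v‖^2 := by
  simp only [← real_inner_self_eq_norm_sq, inner_sub_left, inner_sub_right]
  linarith [real_inner_comm p u, real_inner_comm p v, real_inner_comm u v,
    real_inner_comm vt u, real_inner_comm vt v, real_inner_comm vt p]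

private lemma cancelZ {Z X : Type*}
    [NormedAddCommGroup Z] [InnerProductSpace ℝ Z] [FiniteDimensional ℝ Z]
    [NormedAddCommGroup X] [InnerProductSpace ℝ X] [FiniteDimensional ℝ X]
    (T₀ : Z →ₗ[ℝ] Z) (hT : LinearMap.IsSymmetric T₀) (B : X →ₗ[ℝ] Z) (β : ℝ) (p u v : Z) :
    (1/2:ℝ) * ⟪p - u, T₀ (p - u) + β • B (LinearMap.adjoint B (p - u))⟫
      - (1/2) * ⟪p - v, T₀ (p - v) + β • B (LinearMap.adjoint B (p - v))⟫
      - ⟪T₀ (u - v) + β • B (LinearMap.adjoint B (u - v)), v - p⟫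
      = (1/2) * ⟪v - u, T₀ (v - u) + β • B (LinearMap.adjoint B (v - u))⟫ := by
  have hE : ∀ a : Z, T₀ a + β • B (LinearMap.adjoint B a)
      = (T₀ + β • (B ∘ₗ LinearMap.adjoint B)) a := fun a => by
    simp [LinearMap.add_apply, LinearMap.smul_apply, LinearMap.comp_apply]
  have hEsym : LinearMap.IsSymmetric (T₀ + β • (B ∘ₗ LinearMap.adjoint B)) := by
    intro a b
    have h1 := LinearMap.adjoint_inner_right B (LinearMap.adjoint B a) b
    have h2 := LinearMap.adjoint_inner_left B (LinearMap.adjoint B b) a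
    simp only [LinearMap.add_apply, LinearMap.smul_apply, LinearMap.comp_apply,
      inner_add_left, inner_add_right, real_inner_smul_left, real_inner_smul_right]
    rw [hT a b]
    linear_combination β * h2 - β * h1
  simp only [hE]
  exact cancelSym _ hEsym p u v
private lemma quad_aux (a b t : ℝ) (ha : 0 ≤ a) (hb : 0 ≤ b) (h : t^2 ≤ 4*(a*b)) : t ≤ a + b := by
  nlinarith [sq_nonneg (a-b)]

set_option maxHeartbeats 4000000 in
private lemma key_scalar (τ β σ ν γ : ℝ) (hβ : 0 < β) (hτ : 0 < τ)
    (hτub : τ < (1 + Real.sqrt 5) / 2)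
    (hσ : σ = max ((2 - τ) / 2) ((1 + τ * (τ - 1) ^ 2) / (2 - (1 - τ) ^ 2)))
    (hν : ν = σ * (τ + 1) + τ - 1)
    (hγ : γ = min (min (τ ^ 2 * σ) (σ - (τ + 1) * (τ - 1) ^ 2) / (τ * (σ - (τ - 1) ^ 2)))
      (τ * σ / ν))
    (sA sA' tD tD' tDd' sSg sSg' ρ ρ' M2 c1 c1' : ℝ)
    (hsA' : 0 ≤ sA') (htD : 0 ≤ tD) (htD' : 0 ≤ tD') (hsSg' : 0 ≤ sSg')
    (hρ : 0 ≤ ρ) (hρ' : 0 ≤ ρ') (hM2 : 0 ≤ M2)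
    (hCS : c1' ^ 2 ≤ ρ' * M2) (hCST : 2 * tDd' ≤ tD + tD')
    (hstar : sSg + tD - tDd' ≤ β * ((1 - τ) * c1' - c1)) :
    0 ≤ σ * ((1/2) * sA + (1/2) * (tD + β * M2) + (1/2) * (τ * β)⁻¹ * (β^2 * (ρ - 2*c1 + M2)))
      - (1/2) * (τ * β)⁻¹ * (β^2 * ((1 - τ)^2 * ρ - 2*(1 - τ)*c1 + M2))
      + (1 - γ) * ((σ - (τ - 1)^2) * β / (2*τ) * ρ' + σ/2 * sA' + ν/(2*τ) * tD'
          + (σ + τ - 1)/τ * sSg')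
      - ((σ - (τ - 1)^2) * β / (2*τ) * ρ + σ/2 * sA + ν/(2*τ) * tD + (σ + τ - 1)/τ * sSg) := by
  subst hν
  have h5 : Real.sqrt 5 < 2.237 := by
    nlinarith [Real.sq_sqrt (by norm_num : (5:ℝ) ≥ 0), Real.sqrt_nonneg 5]
  have hτ2 : τ < 1.619 := by linarith
  have hs1 : (2 - τ) / 2 ≤ σ := hσ ▸ le_max_left _ _
  have hden : 0 < 2 - (1 - τ)^2 := by nlinarith
  have hs2 : (1 + τ * (τ - 1) ^ 2) / (2 - (1 - τ) ^ 2) ≤ σ := hσ ▸ le_max_right _ _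
  have hs2' : 1 + τ * (τ - 1) ^ 2 ≤ σ * (2 - (1 - τ) ^ 2) := by
    rw [div_le_iff₀ hden] at hs2; linarith
  have hμ : 0 < σ + τ - 1 := by linarith
  have hσpos : 0 < σ := by linarith
  have hDpos : 0 < σ - (τ - 1)^2 := by
    rcases le_or_gt τ 1.5 with h | h
    · nlinarith
    · nlinarith [hs2', hden, sq_nonneg (τ - 1), sq_nonneg (τ*(τ-1)), mul_pos hτ hτ,
        mul_nonneg (sq_nonneg (τ-1)) hτ.le]
  have hnupos : 0 < (σ * (τ + 1) + τ - 1) := by nlinarith [mul_pos hσpos hτ]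
  have hnuτ : τ ≤ (σ * (τ + 1) + τ - 1) := by
    rcases le_or_gt τ 1 with h | h
    · nlinarith [mul_le_mul_of_nonneg_right hs1 (show (0:ℝ) ≤ τ+1 by linarith),
        mul_nonneg hτ.le (show (0:ℝ) ≤ 1-τ by linarith)]
    · nlinarith [mul_le_mul_of_nonneg_right hs2' (show (0:ℝ) ≤ τ+1 by linarith), hden,
        mul_nonneg (mul_nonneg hτ.le (show (0:ℝ) ≤ τ-1 by linarith)) (sq_nonneg τ)]
  have hγ1 : γ ≤ τ * σ / (σ * (τ + 1) + τ - 1) := hγ ▸ min_le_right _ _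
  have hγ2 : γ * (τ * (σ - (τ - 1)^2)) ≤ min (τ ^ 2 * σ) (σ - (τ + 1) * (τ - 1) ^ 2) := by
    have h := hγ ▸ min_le_left (min (τ ^ 2 * σ) (σ - (τ + 1) * (τ - 1) ^ 2) / (τ * (σ - (τ - 1) ^ 2))) (τ * σ / (σ * (τ + 1) + τ - 1))
    have hpos : 0 < τ * (σ - (τ - 1)^2) := by positivity
    calc γ * (τ * (σ - (τ - 1)^2))
        ≤ (min (τ ^ 2 * σ) (σ - (τ + 1) * (τ - 1) ^ 2) / (τ * (σ - (τ - 1) ^ 2))) * (τ * (σ - (τ - 1)^2)) :=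
          mul_le_mul_of_nonneg_right h (le_of_lt hpos)
      _ = min (τ ^ 2 * σ) (σ - (τ + 1) * (τ - 1) ^ 2) := by field_simp
  have hgnu : σ + τ - 1 ≤ (1 - γ) * (σ * (τ + 1) + τ - 1) := by
    have hgn : γ * (σ * (τ + 1) + τ - 1) ≤ τ * σ := by
      calc γ * (σ * (τ + 1) + τ - 1) ≤ (τ * σ / (σ * (τ + 1) + τ - 1)) * (σ * (τ + 1) + τ - 1) := mul_le_mul_of_nonneg_right hγ1 (le_of_lt hnupos)
        _ = τ * σ := by field_simp
    nlinarith
  have h1γ : 0 < 1 - γ := by nlinarith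
  have hDnn : 0 ≤ (1-γ) * (σ - (τ-1)^2) := by positivity
  -- discriminant fact
  have hdisc : (σ + τ - 1)^2 * (1 - τ)^2 ≤ ((σ * (τ + 1) + τ - 1) - τ) * ((1 - γ) * (σ - (τ - 1)^2)) := by
    rcases le_or_gt τ 1 with h | h
    · have hb : γ * (τ * (σ - (τ - 1)^2)) ≤ τ ^ 2 * σ := le_trans hγ2 (min_le_left _ _)
      have hb' : γ * (σ - (τ - 1)^2) ≤ τ * σ := by nlinarith
      have hD1 : (1 - τ) * (σ + τ - 1) ≤ (1 - γ) * (σ - (τ - 1)^2) := by nlinarith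
      have h2 : (σ + τ - 1) * (1 - τ) ≤ (σ * (τ + 1) + τ - 1) - τ := by
        nlinarith [mul_le_mul_of_nonneg_left hs1 (show (0:ℝ) ≤ 2*τ by linarith)]
      have p1 := mul_le_mul h2 hD1
        (mul_nonneg (show (0:ℝ) ≤ 1-τ by linarith) hμ.le) (by linarith)
      nlinarith [p1]
    · have hb : γ * (τ * (σ - (τ - 1)^2)) ≤ σ - (τ + 1) * (τ - 1) ^ 2 :=
        le_trans hγ2 (min_le_right _ _)
      have hD1 : (τ - 1) * (σ + τ - 1) ≤ τ * ((1 - γ) * (σ - (τ - 1)^2)) := by nlinarith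
      have h2 : τ * (σ + τ - 1) * (τ - 1) ≤ (σ * (τ + 1) + τ - 1) - τ := by nlinarith [hs2']
      have p1 := mul_le_mul_of_nonneg_right h2 hDnn
      have p2 := mul_le_mul_of_nonneg_left hD1
        (mul_nonneg hμ.le (show (0:ℝ) ≤ τ - 1 by linarith))
      nlinarith [p1, p2]
  -- quadratic nonnegativity
  have hq : (2*(σ+τ-1)*(1-τ)*c1')^2
      ≤ 4*((((1-γ)*(σ - (τ-1)^2)) * ρ') * (((σ * (τ + 1) + τ - 1) - τ) * M2)) := by
    have p := mul_le_mul hdisc hCS (sq_nonneg c1')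
      (mul_nonneg (by linarith) hDnn)
    nlinarith [p]
  have hquad : 0 ≤ ((1-γ)*(σ - (τ-1)^2)) * ρ' - 2*(σ+τ-1)*(1-τ)*c1' + ((σ * (τ + 1) + τ - 1) - τ) * M2 := by
    have := quad_aux (((1-γ)*(σ - (τ-1)^2)) * ρ') (((σ * (τ + 1) + τ - 1) - τ) * M2) (2*(σ+τ-1)*(1-τ)*c1')
      (mul_nonneg hDnn hρ') (mul_nonneg (by linarith) hM2) hq
    linarith
  -- assemble: everything times 2τ
  have hE : 0 ≤ σ*(τ*sA + τ*tD + τ*β*M2 + β*(ρ - 2*c1 + M2))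
      - β*((1-τ)^2*ρ - 2*(1-τ)*c1 + M2)
      + (1-γ)*((σ-(τ-1)^2)*β*ρ' + τ*σ*sA' + (σ * (τ + 1) + τ - 1)*tD' + 2*(σ+τ-1)*sSg')
      - ((σ-(τ-1)^2)*β*ρ + τ*σ*sA + (σ * (τ + 1) + τ - 1)*tD + 2*(σ+τ-1)*sSg) := by
    have hstar2 : 2*(σ+τ-1)*(sSg + tD - tDd') ≤ 2*(σ+τ-1)*(β*((1-τ)*c1' - c1)) :=
      mul_le_mul_of_nonneg_left hstar (by linarith)
    have hcst2 : (σ+τ-1)*(2*tDd') ≤ (σ+τ-1)*(tD + tD') :=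
      mul_le_mul_of_nonneg_left hCST hμ.le
    have hek : (σ+τ-1) * tD' ≤ ((1-γ)*(σ * (τ + 1) + τ - 1)) * tD' := mul_le_mul_of_nonneg_right hgnu htD'
    have hterms : 0 ≤ (1-γ)*(τ*σ*sA') := by positivity
    have hterms2 : 0 ≤ (1-γ)*(2*(σ+τ-1)*sSg') := by positivity
    have hβQ := mul_le_mul_of_nonneg_left hquad hβ.le
    linarith [hstar2, hcst2, hek, hterms, hterms2, hβQ]
  have hτ0 : τ ≠ 0 := ne_of_gt hτ
  have hβ0 : β ≠ 0 := ne_of_gt hβ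
  have hrw : σ * ((1/2) * sA + (1/2) * (tD + β * M2) + (1/2) * (τ * β)⁻¹ * (β^2 * (ρ - 2*c1 + M2)))
      - (1/2) * (τ * β)⁻¹ * (β^2 * ((1 - τ)^2 * ρ - 2*(1 - τ)*c1 + M2))
      + (1 - γ) * ((σ - (τ - 1)^2) * β / (2*τ) * ρ' + σ/2 * sA' + (σ * (τ + 1) + τ - 1)/(2*τ) * tD'
          + (σ + τ - 1)/τ * sSg')
      - ((σ - (τ - 1)^2) * β / (2*τ) * ρ + σ/2 * sA + (σ * (τ + 1) + τ - 1)/(2*τ) * tD + (σ + τ - 1)/τ * sSg)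
      = (σ*(τ*sA + τ*tD + τ*β*M2 + β*(ρ - 2*c1 + M2))
      - β*((1-τ)^2*ρ - 2*(1-τ)*c1 + M2)
      + (1-γ)*((σ-(τ-1)^2)*β*ρ' + τ*σ*sA' + (σ * (τ + 1) + τ - 1)*tD' + 2*(σ+τ-1)*sSg')
      - ((σ-(τ-1)^2)*β*ρ + τ*σ*sA + (σ * (τ + 1) + τ - 1)*tD + 2*(σ+τ-1)*sSg)) / (2*τ) := by
    field_simp
    ring
  rw [hrw]
  exact div_nonneg hE (by positivity)
set_option maxHeartbeats 2000000 in
theorem sPADMM_key_inequality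
    {Y Z X : Type*}
    [NormedAddCommGroup Y] [InnerProductSpace ℝ Y] [FiniteDimensional ℝ Y]
    [NormedAddCommGroup Z] [InnerProductSpace ℝ Z] [FiniteDimensional ℝ Z]
    [NormedAddCommGroup X] [InnerProductSpace ℝ X] [FiniteDimensional ℝ X]
    (ϑf : Y → EReal) (φg : Z → EReal)
    (hϑbot : ∀ v, ϑf v ≠ ⊥) (hϑproper : ∃ v, ϑf v ≠ ⊤)
    (hϑlsc : LowerSemicontinuous ϑf)
    (hϑconvex : ∀ (v v' : Y) (a b : ℝ), 0 ≤ a → 0 ≤ b → a + b = 1 →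
      ϑf (a • v + b • v') ≤ (a : EReal) * ϑf v + (b : EReal) * ϑf v')
    (hφbot : ∀ v, φg v ≠ ⊥) (hφproper : ∃ v, φg v ≠ ⊤)
    (hφlsc : LowerSemicontinuous φg)
    (hφconvex : ∀ (v v' : Z) (a b : ℝ), 0 ≤ a → 0 ≤ b → a + b = 1 →
      φg (a • v + b • v') ≤ (a : EReal) * φg v + (b : EReal) * φg v')
    (A : X →ₗ[ℝ] Y) (B : X →ₗ[ℝ] Z) (c : X)
    (β τ : ℝ) (hβ : 0 < β) (hτ : 0 < τ)
    (S : Y →ₗ[ℝ] Y) (hSsym : LinearMap.IsSymmetric S) (hSpsd : ∀ v, 0 ≤ ⟪S v, v⟫)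
    (T₀ : Z →ₗ[ℝ] Z) (hTsym : LinearMap.IsSymmetric T₀) (hTpsd : ∀ v, 0 ≤ ⟪T₀ v, v⟫)
    (hτub : τ < (1 + Real.sqrt 5) / 2)
    (SigZ : Z →ₗ[ℝ] Z) (hSigZsym : LinearMap.IsSymmetric SigZ)
    (hSigZpsd : ∀ v, 0 ≤ ⟪SigZ v, v⟫)
    (hSigZmono : ∀ (z₁ z₂ η₁ η₂ : Z), η₁ ∈ subdiff φg z₁ → η₂ ∈ subdiff φg z₂ →
      ⟪z₁ - z₂, SigZ (z₁ - z₂)⟫ ≤ ⟪η₁ - η₂, z₁ - z₂⟫)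
    (y : ℕ → Y) (z : ℕ → Z) (x : ℕ → X)
    (hADMMy : ∀ k : ℕ,
      -(A (x k)) - β • A (LinearMap.adjoint A (y (k+1)) + LinearMap.adjoint B (z k) - c)
        - S (y (k+1) - y k) ∈ subdiff ϑf (y (k+1)))
    (hADMMz : ∀ k : ℕ,
      -(B (x k)) - β • B (LinearMap.adjoint A (y (k+1)) + LinearMap.adjoint B (z (k+1)) - c)
        - T₀ (z (k+1) - z k) ∈ subdiff φg (z (k+1)))
    (hADMMx : ∀ k : ℕ,
      x (k+1) = x k + (τ * β) • (LinearMap.adjoint A (y (k+1)) + LinearMap.adjoint B (z (k+1)) - c))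
    (xt : ℕ → X)
    (hxt : ∀ k : ℕ,
      xt (k+1) = x k + β • (LinearMap.adjoint A (y (k+1)) + LinearMap.adjoint B (z k) - c))
    (σ ν γ : ℝ)
    (hσ : σ = max ((2 - τ) / 2) ((1 + τ * (τ - 1) ^ 2) / (2 - (1 - τ) ^ 2)))
    (hν : ν = σ * (τ + 1) + τ - 1)
    (hγ : γ = min (min (τ ^ 2 * σ) (σ - (τ + 1) * (τ - 1) ^ 2) / (τ * (σ - (τ - 1) ^ 2)))
      (τ * σ / ν))
    (et : ℕ → ℝ)
    (het : ∀ k : ℕ, et (k+1) =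
      (σ - (τ - 1) ^ 2) * β / (2 * τ) *
          ‖LinearMap.adjoint A (y (k+1)) + LinearMap.adjoint B (z (k+1)) - c‖ ^ 2
        + σ / 2 * ⟪y (k+1) - y k, S (y (k+1) - y k)⟫
        + ν / (2 * τ) * ⟪z (k+1) - z k, T₀ (z (k+1) - z k)⟫
        + (σ + τ - 1) / τ * ⟪z (k+1) - z k, SigZ (z (k+1) - z k)⟫)
    (DG : Y × Z × X → Y × Z × X → ℝ)
    (hDG : ∀ w w' : Y × Z × X, DG w w' = (1/2) * (⟪w.1 - w'.1, S (w.1 - w'.1)⟫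
      + ⟪w.2.1 - w'.2.1, T₀ (w.2.1 - w'.2.1) + β • B (LinearMap.adjoint B (w.2.1 - w'.2.1))⟫
      + (τ * β)⁻¹ * ‖w.2.2 - w'.2.2‖ ^ 2)) :
    ∀ (w : Y × Z × X) (k : ℕ), 1 ≤ k →
      DG w (y k, z k, x k) - DG w (y (k+1), z (k+1), x (k+1)) + (1 - γ) * et k
      ≥ (1 - σ) * DG (y (k+1), z (k+1), xt (k+1)) (y k, z k, x k)
        + (⟪S (y k - y (k+1)), y (k+1) - w.1⟫
          + ⟪T₀ (z k - z (k+1)) + β • B (LinearMap.adjoint B (z k - z (k+1))), z (k+1) - w.2.1⟫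
          + ⟪(τ * β)⁻¹ • (x k - x (k+1)), xt (k+1) - w.2.2⟫)
        + et (k+1) := by
  intro w k hk
  obtain ⟨j, rfl⟩ : ∃ j, k = j + 1 := ⟨k - 1, (Nat.succ_pred_eq_of_pos hk).symm⟩
  -- abbreviation-free; heavy expressions written out
  -- STEP 1: the "star" inequality from monotonicity of ∂φg
  have hmono := hSigZmono (z (j+1+1)) (z (j+1)) _ _ (hADMMz (j+1)) (hADMMz j)
  have hBd : ∀ v : X, (⟪B v, z (j+1+1) - z (j+1)⟫ : ℝ)
      = ⟪v, (LinearMap.adjoint B) (z (j+1+1) - z (j+1))⟫ := fun v =>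
    (LinearMap.adjoint_inner_right B v _).symm
  have hstar : ⟪z (j+1+1) - z (j+1), SigZ (z (j+1+1) - z (j+1))⟫
      + ⟪z (j+1+1) - z (j+1), T₀ (z (j+1+1) - z (j+1))⟫
      - ⟪z (j+1+1) - z (j+1), T₀ (z (j+1) - z j)⟫
      ≤ β * ((1 - τ) * ⟪LinearMap.adjoint A (y (j+1)) + LinearMap.adjoint B (z (j+1)) - c,
            (LinearMap.adjoint B) (z (j+1+1) - z (j+1))⟫
          - ⟪LinearMap.adjoint A (y (j+1+1)) + LinearMap.adjoint B (z (j+1+1)) - c,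
            (LinearMap.adjoint B) (z (j+1+1) - z (j+1))⟫) := by
    rw [hADMMx j] at hmono
    have hBd' : ∀ (v : X) (u : Z), (⟪B v, u⟫:ℝ) = ⟪v, LinearMap.adjoint B u⟫ := fun v u =>
      (LinearMap.adjoint_inner_right B v u).symm
    have Tc : ∀ a b : Z, (⟪T₀ a, b⟫:ℝ) = ⟪b, T₀ a⟫ := fun a b => real_inner_comm _ _
    have Sgc : ∀ a b : Z, (⟪SigZ a, b⟫:ℝ) = ⟪b, SigZ a⟫ := fun a b => real_inner_comm _ _
    simp only [map_add, map_sub, map_smul, inner_sub_left, inner_sub_right, inner_add_left,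
      inner_add_right, inner_neg_left, inner_neg_right, real_inner_smul_left,
      real_inner_smul_right, hBd'] at hmono ⊢
    linarith [hmono,
      Tc (z (j+1+1)) (z (j+1+1)), Tc (z (j+1+1)) (z (j+1)), Tc (z (j+1+1)) (z j),
      Tc (z (j+1)) (z (j+1+1)), Tc (z (j+1)) (z (j+1)), Tc (z (j+1)) (z j),
      Tc (z j) (z (j+1+1)), Tc (z j) (z (j+1)), Tc (z j) (z j),
      hTsym (z (j+1+1)) (z (j+1+1)), hTsym (z (j+1+1)) (z (j+1)), hTsym (z (j+1+1)) (z j),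
      hTsym (z (j+1)) (z (j+1+1)), hTsym (z (j+1)) (z (j+1)), hTsym (z (j+1)) (z j),
      hTsym (z j) (z (j+1+1)), hTsym (z j) (z (j+1)), hTsym (z j) (z j),
      Sgc (z (j+1+1)) (z (j+1+1)), Sgc (z (j+1+1)) (z (j+1)),
      Sgc (z (j+1)) (z (j+1+1)), Sgc (z (j+1)) (z (j+1)),
      hSigZsym (z (j+1+1)) (z (j+1+1)), hSigZsym (z (j+1+1)) (z (j+1)),
      hSigZsym (z (j+1)) (z (j+1+1)), hSigZsym (z (j+1)) (z (j+1))]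
  -- STEP 2: component cancellation identities
  have E1 := cancelSym S hSsym w.1 (y (j+1)) (y (j+1+1))
  have E2 := cancelZ T₀ hTsym B β w.2.1 (z (j+1)) (z (j+1+1))
  have E2b : (⟪z (j+1+1) - z (j+1), T₀ (z (j+1+1) - z (j+1))
        + β • B ((LinearMap.adjoint B) (z (j+1+1) - z (j+1)))⟫ : ℝ)
      = ⟪z (j+1+1) - z (j+1), T₀ (z (j+1+1) - z (j+1))⟫
        + β * ‖(LinearMap.adjoint B) (z (j+1+1) - z (j+1))‖ ^ 2 := by
    rw [inner_add_right, real_inner_smul_right,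
      real_inner_comm (B ((LinearMap.adjoint B) (z (j+1+1) - z (j+1))))
        (z (j+1+1) - z (j+1)),
      ← LinearMap.adjoint_inner_right B, real_inner_self_eq_norm_sq]
  have E3 := cancelNorm w.2.2 (x (j+1)) (x (j+1+1)) (xt (j+1+1))
  have E3a : (⟪(τ * β)⁻¹ • (x (j+1) - x (j+1+1)), xt (j+1+1) - w.2.2⟫ : ℝ)
      = (τ * β)⁻¹ * ⟪x (j+1) - x (j+1+1), xt (j+1+1) - w.2.2⟫ :=
    real_inner_smul_left _ _ _
  have hRt : LinearMap.adjoint A (y (j+1+1)) + LinearMap.adjoint B (z (j+1)) - c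
      = (LinearMap.adjoint A (y (j+1+1)) + LinearMap.adjoint B (z (j+1+1)) - c)
        - (LinearMap.adjoint B) (z (j+1+1) - z (j+1)) := by
    rw [map_sub]; abel
  have hv1 : xt (j+1+1) - x (j+1)
      = β • ((LinearMap.adjoint A (y (j+1+1)) + LinearMap.adjoint B (z (j+1+1)) - c)
            - (LinearMap.adjoint B) (z (j+1+1) - z (j+1))) := by
    rw [hxt (j+1), hRt]; abel
  have hv2 : xt (j+1+1) - x (j+1+1)
      = β • ((1 - τ) • (LinearMap.adjoint A (y (j+1+1)) + LinearMap.adjoint B (z (j+1+1)) - c)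
            - (LinearMap.adjoint B) (z (j+1+1) - z (j+1))) := by
    rw [hxt (j+1), hADMMx (j+1), hRt]; module
  have E4 : ‖xt (j+1+1) - x (j+1)‖ ^ 2
      = β ^ 2 * (‖LinearMap.adjoint A (y (j+1+1)) + LinearMap.adjoint B (z (j+1+1)) - c‖ ^ 2
        - 2 * ⟪LinearMap.adjoint A (y (j+1+1)) + LinearMap.adjoint B (z (j+1+1)) - c,
            (LinearMap.adjoint B) (z (j+1+1) - z (j+1))⟫
        + ‖(LinearMap.adjoint B) (z (j+1+1) - z (j+1))‖ ^ 2) := by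
    rw [hv1, norm_smul, mul_pow, Real.norm_eq_abs, sq_abs, norm_sub_sq_real]
  have E5 : ‖xt (j+1+1) - x (j+1+1)‖ ^ 2
      = β ^ 2 * ((1 - τ) ^ 2 * ‖LinearMap.adjoint A (y (j+1+1)) + LinearMap.adjoint B (z (j+1+1)) - c‖ ^ 2
        - 2 * (1 - τ) * ⟪LinearMap.adjoint A (y (j+1+1)) + LinearMap.adjoint B (z (j+1+1)) - c,
            (LinearMap.adjoint B) (z (j+1+1) - z (j+1))⟫
        + ‖(LinearMap.adjoint B) (z (j+1+1) - z (j+1))‖ ^ 2) := by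
    rw [hv2, norm_smul, mul_pow, Real.norm_eq_abs, sq_abs, norm_sub_sq_real, norm_smul,
      mul_pow, Real.norm_eq_abs, sq_abs, real_inner_smul_left]
    ring
  rw [E4, E5] at E3
  rw [E2b] at E2
  -- STEP 3: nonnegativity facts
  have hsA' : (0:ℝ) ≤ ⟪y (j+1) - y j, S (y (j+1) - y j)⟫ := by
    rw [real_inner_comm]; exact hSpsd _
  have htDn : (0:ℝ) ≤ ⟪z (j+1+1) - z (j+1), T₀ (z (j+1+1) - z (j+1))⟫ := by
    rw [real_inner_comm]; exact hTpsd _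
  have htD' : (0:ℝ) ≤ ⟪z (j+1) - z j, T₀ (z (j+1) - z j)⟫ := by
    rw [real_inner_comm]; exact hTpsd _
  have hsSg' : (0:ℝ) ≤ ⟪z (j+1) - z j, SigZ (z (j+1) - z j)⟫ := by
    rw [real_inner_comm]; exact hSigZpsd _
  have hCST : 2 * (⟪z (j+1+1) - z (j+1), T₀ (z (j+1) - z j)⟫ : ℝ)
      ≤ ⟪z (j+1+1) - z (j+1), T₀ (z (j+1+1) - z (j+1))⟫ + ⟪z (j+1) - z j, T₀ (z (j+1) - z j)⟫ := by
    have h := hTpsd ((z (j+1+1) - z (j+1)) - (z (j+1) - z j))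
    have Tc : ∀ a b : Z, (⟪T₀ a, b⟫:ℝ) = ⟪b, T₀ a⟫ := fun a b => real_inner_comm _ _
    simp only [map_sub, inner_sub_left, inner_sub_right] at h ⊢
    linarith [h,
      Tc (z (j+1+1)) (z (j+1+1)), Tc (z (j+1+1)) (z (j+1)), Tc (z (j+1+1)) (z j),
      Tc (z (j+1)) (z (j+1+1)), Tc (z (j+1)) (z (j+1)), Tc (z (j+1)) (z j),
      Tc (z j) (z (j+1+1)), Tc (z j) (z (j+1)), Tc (z j) (z j),
      hTsym (z (j+1+1)) (z (j+1+1)), hTsym (z (j+1+1)) (z (j+1)), hTsym (z (j+1+1)) (z j),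
      hTsym (z (j+1)) (z (j+1+1)), hTsym (z (j+1)) (z (j+1)), hTsym (z (j+1)) (z j),
      hTsym (z j) (z (j+1+1)), hTsym (z j) (z (j+1)), hTsym (z j) (z j)]
  have hCS : (⟪LinearMap.adjoint A (y (j+1)) + LinearMap.adjoint B (z (j+1)) - c,
        (LinearMap.adjoint B) (z (j+1+1) - z (j+1))⟫ : ℝ) ^ 2
      ≤ ‖LinearMap.adjoint A (y (j+1)) + LinearMap.adjoint B (z (j+1)) - c‖ ^ 2
        * ‖(LinearMap.adjoint B) (z (j+1+1) - z (j+1))‖ ^ 2 := by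
    have h := real_inner_mul_inner_self_le
      (LinearMap.adjoint A (y (j+1)) + LinearMap.adjoint B (z (j+1)) - c)
      ((LinearMap.adjoint B) (z (j+1+1) - z (j+1)))
    rw [real_inner_self_eq_norm_sq, real_inner_self_eq_norm_sq] at h
    rw [pow_two]
    exact h
  -- STEP 4: the scalar inequality
  have hT := key_scalar τ β σ ν γ hβ hτ hτub hσ hν hγ
    (⟪y (j+1+1) - y (j+1), S (y (j+1+1) - y (j+1))⟫ : ℝ)
    (⟪y (j+1) - y j, S (y (j+1) - y j)⟫ : ℝ)
    (⟪z (j+1+1) - z (j+1), T₀ (z (j+1+1) - z (j+1))⟫ : ℝ)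
    (⟪z (j+1) - z j, T₀ (z (j+1) - z j)⟫ : ℝ)
    (⟪z (j+1+1) - z (j+1), T₀ (z (j+1) - z j)⟫ : ℝ)
    (⟪z (j+1+1) - z (j+1), SigZ (z (j+1+1) - z (j+1))⟫ : ℝ)
    (⟪z (j+1) - z j, SigZ (z (j+1) - z j)⟫ : ℝ)
    (‖LinearMap.adjoint A (y (j+1+1)) + LinearMap.adjoint B (z (j+1+1)) - c‖ ^ 2)
    (‖LinearMap.adjoint A (y (j+1)) + LinearMap.adjoint B (z (j+1)) - c‖ ^ 2)
    (‖(LinearMap.adjoint B) (z (j+1+1) - z (j+1))‖ ^ 2)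
    (⟪LinearMap.adjoint A (y (j+1+1)) + LinearMap.adjoint B (z (j+1+1)) - c,
        (LinearMap.adjoint B) (z (j+1+1) - z (j+1))⟫ : ℝ)
    (⟪LinearMap.adjoint A (y (j+1)) + LinearMap.adjoint B (z (j+1)) - c,
        (LinearMap.adjoint B) (z (j+1+1) - z (j+1))⟫ : ℝ)
    hsA' htDn htD' hsSg' (sq_nonneg _) (sq_nonneg _) (sq_nonneg _) hCS hCST hstar
  -- STEP 5: the algebraic identity reducing the goal to the scalar inequality
  have hEq : DG w (y (j+1), z (j+1), x (j+1)) - DG w (y (j+1+1), z (j+1+1), x (j+1+1))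
        + (1 - γ) * et (j+1)
      - ((1 - σ) * DG (y (j+1+1), z (j+1+1), xt (j+1+1)) (y (j+1), z (j+1), x (j+1))
        + (⟪S (y (j+1) - y (j+1+1)), y (j+1+1) - w.1⟫
          + ⟪T₀ (z (j+1) - z (j+1+1)) + β • B (LinearMap.adjoint B (z (j+1) - z (j+1+1))),
              z (j+1+1) - w.2.1⟫
          + ⟪(τ * β)⁻¹ • (x (j+1) - x (j+1+1)), xt (j+1+1) - w.2.2⟫)
        + et (j+1+1))
      = σ * ((1/2) * ⟪y (j+1+1) - y (j+1), S (y (j+1+1) - y (j+1))⟫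
          + (1/2) * (⟪z (j+1+1) - z (j+1), T₀ (z (j+1+1) - z (j+1))⟫
              + β * ‖(LinearMap.adjoint B) (z (j+1+1) - z (j+1))‖ ^ 2)
          + (1/2) * (τ * β)⁻¹ * (β ^ 2 *
              (‖LinearMap.adjoint A (y (j+1+1)) + LinearMap.adjoint B (z (j+1+1)) - c‖ ^ 2
              - 2 * ⟪LinearMap.adjoint A (y (j+1+1)) + LinearMap.adjoint B (z (j+1+1)) - c,
                  (LinearMap.adjoint B) (z (j+1+1) - z (j+1))⟫
              + ‖(LinearMap.adjoint B) (z (j+1+1) - z (j+1))‖ ^ 2)))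
        - (1/2) * (τ * β)⁻¹ * (β ^ 2 *
            ((1 - τ) ^ 2 * ‖LinearMap.adjoint A (y (j+1+1)) + LinearMap.adjoint B (z (j+1+1)) - c‖ ^ 2
            - 2 * (1 - τ) * ⟪LinearMap.adjoint A (y (j+1+1)) + LinearMap.adjoint B (z (j+1+1)) - c,
                (LinearMap.adjoint B) (z (j+1+1) - z (j+1))⟫
            + ‖(LinearMap.adjoint B) (z (j+1+1) - z (j+1))‖ ^ 2))
        + (1 - γ) * ((σ - (τ - 1) ^ 2) * β / (2 * τ)
              * ‖LinearMap.adjoint A (y (j+1)) + LinearMap.adjoint B (z (j+1)) - c‖ ^ 2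
            + σ / 2 * ⟪y (j+1) - y j, S (y (j+1) - y j)⟫
            + ν / (2 * τ) * ⟪z (j+1) - z j, T₀ (z (j+1) - z j)⟫
            + (σ + τ - 1) / τ * ⟪z (j+1) - z j, SigZ (z (j+1) - z j)⟫)
        - ((σ - (τ - 1) ^ 2) * β / (2 * τ)
              * ‖LinearMap.adjoint A (y (j+1+1)) + LinearMap.adjoint B (z (j+1+1)) - c‖ ^ 2
            + σ / 2 * ⟪y (j+1+1) - y (j+1), S (y (j+1+1) - y (j+1))⟫
            + ν / (2 * τ) * ⟪z (j+1+1) - z (j+1), T₀ (z (j+1+1) - z (j+1))⟫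
            + (σ + τ - 1) / τ * ⟪z (j+1+1) - z (j+1), SigZ (z (j+1+1) - z (j+1))⟫) := by
    simp only [hDG, het]
    rw [E2b, E4, E3a]
    linear_combination E1 + E2 + (τ * β)⁻¹ * E3
  linarith [hEq, hT]
end
end

section
/- Let (y^k, z^k, x^k)_{k≥0} be an sPADMM sequence with 0 < τ < (1+√5)/2 and let w* = (y*, z*, x*) be a point with 0 ∈ T(w*) (a KKT point). Then for every k ≥ 1: D_M(w*, w^{k+1}) + η_{k+1} ≤ D_M(w*, w^k) − (1 − σ_τ)·D_G(w̃^{k+1}, w^k) + (1 − γ_τ)·η_k. -/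
open scoped RealInnerProductSpace

noncomputable section

section Helpers
variable {E : Type*} [NormedAddCommGroup E] [InnerProductSpace ℝ E]

lemma sym_expand2 (Q : E →ₗ[ℝ] E) (hQ : Q.IsSymmetric) (p q : E) :
    ⟪Q (q - p), p⟫ = (⟪q, Q q⟫ - ⟪p, Q p⟫ - ⟪q - p, Q (q - p)⟫)/2 := by
  have h1 := hQ q p
  have h2 := real_inner_comm p (Q q)
  have h3 := real_inner_comm (Q p) p
  have h4 := real_inner_comm p (Q p)
  simp only [map_sub, inner_sub_left, inner_sub_right]
  linarith

lemma psd_cauchy2 (Q : E →ₗ[ℝ] E) (hQ : Q.IsSymmetric) (hpsd : ∀ w, 0 ≤ ⟪Q w, w⟫) (p q : E) :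
    ⟪Q p, q⟫ ≤ (⟪p, Q p⟫ + ⟪q, Q q⟫)/2 := by
  have h := hpsd (p - q)
  simp only [map_sub, inner_sub_left, inner_sub_right] at h
  have h1 := hQ q p
  have h2 := real_inner_comm (Q p) q
  have h3 := real_inner_comm (Q p) p
  have h4 := real_inner_comm (Q q) q
  have h5 := real_inner_comm p (Q q)
  linarith

lemma psd_sub_le2 (Q : E →ₗ[ℝ] E) (hQ : Q.IsSymmetric) (hpsd : ∀ w, 0 ≤ ⟪Q w, w⟫) (p q : E) :
    ⟪p - q, Q (p - q)⟫ ≤ 2*⟪p, Q p⟫ + 2*⟪q, Q q⟫ := by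
  have h := hpsd (p + q)
  simp only [map_add, map_sub, inner_add_left, inner_add_right, inner_sub_left,
    inner_sub_right] at h ⊢
  have h1 := hQ q p
  have h2 := real_inner_comm (Q q) p
  have h3 := real_inner_comm (Q p) p
  have h4 := real_inner_comm (Q q) q
  have h5 := real_inner_comm (Q p) q
  have h6 := real_inner_comm p (Q q)
  have h7 := real_inner_comm q (Q p)
  linarith

lemma expand_sq (c : ℝ) (p q : E) : ‖c • p + q‖^2 = c^2*‖p‖^2 + 2*c*⟪p,q⟫ + ‖q‖^2 := by
  rw [norm_add_sq_real, norm_smul, real_inner_smul_left]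
  simp only [Real.norm_eq_abs, mul_pow, sq_abs]
  ring

lemma expand_sq2 (a b : ℝ) (p q : E) :
    ‖a • p + b • q‖^2 = a^2*‖p‖^2 + 2*(a*b)*⟪p,q⟫ + b^2*‖q‖^2 := by
  rw [norm_add_sq_real, norm_smul, norm_smul, real_inner_smul_left, real_inner_smul_right]
  simp only [Real.norm_eq_abs, mul_pow, sq_abs]
  ring

end Helpers

set_option maxHeartbeats 4000000

theorem sPADMM_contraction_to_KKT
    {Y Z X : Type*}
    [NormedAddCommGroup Y] [InnerProductSpace ℝ Y] [FiniteDimensional ℝ Y]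
    [NormedAddCommGroup Z] [InnerProductSpace ℝ Z] [FiniteDimensional ℝ Z]
    [NormedAddCommGroup X] [InnerProductSpace ℝ X] [FiniteDimensional ℝ X]
    (ϑf : Y → EReal) (φg : Z → EReal)
    (hϑbot : ∀ v, ϑf v ≠ ⊥) (hϑproper : ∃ v, ϑf v ≠ ⊤)
    (hϑlsc : LowerSemicontinuous ϑf)
    (hϑconvex : ∀ (v v' : Y) (a b : ℝ), 0 ≤ a → 0 ≤ b → a + b = 1 →
      ϑf (a • v + b • v') ≤ (a : EReal) * ϑf v + (b : EReal) * ϑf v')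
    (hφbot : ∀ v, φg v ≠ ⊥) (hφproper : ∃ v, φg v ≠ ⊤)
    (hφlsc : LowerSemicontinuous φg)
    (hφconvex : ∀ (v v' : Z) (a b : ℝ), 0 ≤ a → 0 ≤ b → a + b = 1 →
      φg (a • v + b • v') ≤ (a : EReal) * φg v + (b : EReal) * φg v')
    (A : X →ₗ[ℝ] Y) (B : X →ₗ[ℝ] Z) (c : X)
    (β τ : ℝ) (hβ : 0 < β) (hτ : 0 < τ)
    (S : Y →ₗ[ℝ] Y) (hSsym : LinearMap.IsSymmetric S) (hSpsd : ∀ v, 0 ≤ ⟪S v, v⟫)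
    (T₀ : Z →ₗ[ℝ] Z) (hTsym : LinearMap.IsSymmetric T₀) (hTpsd : ∀ v, 0 ≤ ⟪T₀ v, v⟫)
    (hτub : τ < (1 + Real.sqrt 5) / 2)
    (SigY : Y →ₗ[ℝ] Y) (hSigYsym : LinearMap.IsSymmetric SigY)
    (hSigYpsd : ∀ v, 0 ≤ ⟪SigY v, v⟫)
    (hSigYmono : ∀ (y₁ y₂ ξ₁ ξ₂ : Y), ξ₁ ∈ subdiff ϑf y₁ → ξ₂ ∈ subdiff ϑf y₂ →
      ⟪y₁ - y₂, SigY (y₁ - y₂)⟫ ≤ ⟪ξ₁ - ξ₂, y₁ - y₂⟫)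
    (SigZ : Z →ₗ[ℝ] Z) (hSigZsym : LinearMap.IsSymmetric SigZ)
    (hSigZpsd : ∀ v, 0 ≤ ⟪SigZ v, v⟫)
    (hSigZmono : ∀ (z₁ z₂ η₁ η₂ : Z), η₁ ∈ subdiff φg z₁ → η₂ ∈ subdiff φg z₂ →
      ⟪z₁ - z₂, SigZ (z₁ - z₂)⟫ ≤ ⟪η₁ - η₂, z₁ - z₂⟫)
    (y : ℕ → Y) (z : ℕ → Z) (x : ℕ → X)
    (hADMMy : ∀ k : ℕ,
      -(A (x k)) - β • A (LinearMap.adjoint A (y (k+1)) + LinearMap.adjoint B (z k) - c)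
        - S (y (k+1) - y k) ∈ subdiff ϑf (y (k+1)))
    (hADMMz : ∀ k : ℕ,
      -(B (x k)) - β • B (LinearMap.adjoint A (y (k+1)) + LinearMap.adjoint B (z (k+1)) - c)
        - T₀ (z (k+1) - z k) ∈ subdiff φg (z (k+1)))
    (hADMMx : ∀ k : ℕ,
      x (k+1) = x k + (τ * β) • (LinearMap.adjoint A (y (k+1)) + LinearMap.adjoint B (z (k+1)) - c))
    (xt : ℕ → X)
    (hxt : ∀ k : ℕ,
      xt (k+1) = x k + β • (LinearMap.adjoint A (y (k+1)) + LinearMap.adjoint B (z k) - c))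
    (σ ν γ : ℝ)
    (hσ : σ = max ((2 - τ) / 2) ((1 + τ * (τ - 1) ^ 2) / (2 - (1 - τ) ^ 2)))
    (hν : ν = σ * (τ + 1) + τ - 1)
    (hγ : γ = min (min (τ ^ 2 * σ) (σ - (τ + 1) * (τ - 1) ^ 2) / (τ * (σ - (τ - 1) ^ 2)))
      (τ * σ / ν))
    (et : ℕ → ℝ)
    (het : ∀ k : ℕ, et (k+1) =
      (σ - (τ - 1) ^ 2) * β / (2 * τ) *
          ‖LinearMap.adjoint A (y (k+1)) + LinearMap.adjoint B (z (k+1)) - c‖ ^ 2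
        + σ / 2 * ⟪y (k+1) - y k, S (y (k+1) - y k)⟫
        + ν / (2 * τ) * ⟪z (k+1) - z k, T₀ (z (k+1) - z k)⟫
        + (σ + τ - 1) / τ * ⟪z (k+1) - z k, SigZ (z (k+1) - z k)⟫)
    (eta : ℕ → ℝ)
    (heta : ∀ k : ℕ, eta (k+1) = et (k+1)
      + (1/4) * (⟪y (k+1) - y k, SigY (y (k+1) - y k)⟫
        + ⟪z (k+1) - z k, SigZ (z (k+1) - z k)⟫))
    (DG : Y × Z × X → Y × Z × X → ℝ)
    (hDG : ∀ w w' : Y × Z × X, DG w w' = (1/2) * (⟪w.1 - w'.1, S (w.1 - w'.1)⟫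
      + ⟪w.2.1 - w'.2.1, T₀ (w.2.1 - w'.2.1) + β • B (LinearMap.adjoint B (w.2.1 - w'.2.1))⟫
      + (τ * β)⁻¹ * ‖w.2.2 - w'.2.2‖ ^ 2))
    (DM : Y × Z × X → Y × Z × X → ℝ)
    (hDM : ∀ w w' : Y × Z × X, DM w w' =
      (1/2) * (⟪w.1 - w'.1, S (w.1 - w'.1) + SigY (w.1 - w'.1)⟫
      + ⟪w.2.1 - w'.2.1, T₀ (w.2.1 - w'.2.1) + β • B (LinearMap.adjoint B (w.2.1 - w'.2.1))
          + SigZ (w.2.1 - w'.2.1)⟫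
      + (τ * β)⁻¹ * ‖w.2.2 - w'.2.2‖ ^ 2))
    (ys : Y) (zs : Z) (xs : X)
    (hs1 : -(A xs) ∈ subdiff ϑf ys) (hs2 : -(B xs) ∈ subdiff φg zs)
    (hs3 : LinearMap.adjoint A ys + LinearMap.adjoint B zs = c) :
    ∀ k : ℕ, 1 ≤ k →
      DM (ys, zs, xs) (y (k+1), z (k+1), x (k+1)) + eta (k+1)
      ≤ DM (ys, zs, xs) (y k, z k, x k)
        - (1 - σ) * DG (y (k+1), z (k+1), xt (k+1)) (y k, z k, x k)
        + (1 - γ) * eta k := by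
  intro k hk
  obtain ⟨j, rfl⟩ : ∃ j, k = j + 1 := ⟨k - 1, by omega⟩
  have h5 : Real.sqrt 5 ^ 2 = 5 := Real.sq_sqrt (by norm_num)
  have h5n : 0 ≤ Real.sqrt 5 := Real.sqrt_nonneg 5
  have h51 : 1 ≤ Real.sqrt 5 := by nlinarith only [h5, h5n]
  have hs3' : Real.sqrt 5 < 3 := by nlinarith only [h5, h5n]
  have hτ2 : τ < 2 := by linarith only [hτub, hs3']
  have hσ1 : (2 - τ) / 2 ≤ σ := hσ ▸ le_max_left _ _
  have hσ2 : (1 + τ * (τ - 1) ^ 2) / (2 - (1 - τ) ^ 2) ≤ σ := hσ ▸ le_max_right _ _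
  have hden : 0 < 2 - (1 - τ) ^ 2 := by nlinarith only [hτ, hτ2, mul_pos hτ (show (0:ℝ) < 2 - τ by linarith only [hτ2])]
  have hσ2' : 1 + τ * (τ - 1) ^ 2 ≤ σ * (2 - (1 - τ) ^ 2) := by
    have := (div_le_iff₀ hden).mp hσ2; linarith only [this]
  have hσpos : 0 < σ := by linarith only [hσ1, hτ2]
  have hL : 0 ≤ σ + τ - 1 := by linarith only [hσ1, hτ]
  have hphi : τ ^ 2 - τ - 1 < 0 := by
    have ha : 0 < Real.sqrt 5 - (2*τ - 1) := by linarith only [hτub]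
    have hb : 0 < Real.sqrt 5 + (2*τ - 1) := by linarith only [h51, hτ]
    linarith only [mul_pos ha hb, h5]
  have hd : 0 < σ - (τ - 1) ^ 2 := by
    rcases le_or_gt τ 1 with h1 | h1
    · linarith only [hσ1, mul_pos hτ (show (0:ℝ) < 3 - 2*τ by linarith only [h1])]
    · have h2 : (0:ℝ) < τ ^ 2 - τ := by
        nlinarith only [mul_pos hτ (show (0:ℝ) < τ - 1 by linarith only [h1])]
      have ha' : (τ - 1) ^ 2 < 1 := by
        nlinarith only [mul_pos hτ (show (0:ℝ) < 2 - τ by linarith only [hτ2])]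
      have h3 : (0:ℝ) < 1 + (τ - 1) ^ 2 * (τ ^ 2 - τ - 1) := by
        nlinarith only [ha', mul_nonneg (sq_nonneg (τ - 1)) h2.le]
      nlinarith only [hσ2', hden, h3]
  have hνpos : 0 < ν := by linarith only [hν, hL, mul_pos hτ hσpos]
  have hdd : 0 < τ * (σ - (τ - 1) ^ 2) := mul_pos hτ hd
  have hγm : γ ≤ min (τ ^ 2 * σ) (σ - (τ + 1) * (τ - 1) ^ 2) / (τ * (σ - (τ - 1) ^ 2)) :=
    hγ ▸ min_le_left _ _
  have hγs : γ ≤ τ * σ / ν := hγ ▸ min_le_right _ _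
  have hγd : γ * (τ * (σ - (τ - 1) ^ 2)) ≤ min (τ ^ 2 * σ) (σ - (τ + 1) * (τ - 1) ^ 2) :=
    (le_div_iff₀ hdd).mp hγm
  have hγ1 : γ * (τ * (σ - (τ - 1) ^ 2)) ≤ τ ^ 2 * σ := hγd.trans (min_le_left _ _)
  have hγ2 : γ * (τ * (σ - (τ - 1) ^ 2)) ≤ σ - (τ + 1) * (τ - 1) ^ 2 :=
    hγd.trans (min_le_right _ _)
  have hγν : γ * ν ≤ τ * σ := (le_div_iff₀ hνpos).mp hγs
  have htσν : τ * σ ≤ ν := by linarith only [hν, hL]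
  have hγle1 : γ ≤ 1 := hγs.trans ((div_le_one hνpos).mpr htσν)
  have hτ0 : τ ≠ 0 := ne_of_gt hτ
  have hβ0 : β ≠ 0 := ne_of_gt hβ
  have hmy := hSigYmono ys (y (j+1+1)) _ _ hs1 (hADMMy (j+1))
  have hmz := hSigZmono zs (z (j+1+1)) _ _ hs2 (hADMMz (j+1))
  have hmz2 := hSigZmono (z (j+1+1)) (z (j+1)) _ _ (hADMMz (j+1)) (hADMMz j)
  have hx1 := hADMMx j
  have hx2 := hADMMx (j+1)
  have hxt2 := hxt (j+1)
  simp only [hDM, hDG, heta, het]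

  set u := y (j+1+1) - y (j+1) with hu
  set v := z (j+1+1) - z (j+1) with hv
  set u' := y (j+1) - y j with hu'
  set v' := z (j+1) - z j with hv'
  set ye := ys - y (j+1+1) with hye
  set yek := ys - y (j+1) with hyek
  set ze := zs - z (j+1+1) with hze
  set zek := zs - z (j+1) with hzek
  set R2 := LinearMap.adjoint A (y (j+1+1)) + LinearMap.adjoint B (z (j+1+1)) - c with hR2
  set R1 := LinearMap.adjoint A (y (j+1)) + LinearMap.adjoint B (z (j+1)) - c with hR1
  set r2 := LinearMap.adjoint A (y (j+1+1)) + LinearMap.adjoint B (z (j+1)) - c with hr2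

  -- basic vector identities
  have hr2' : r2 = R2 - LinearMap.adjoint B v := by
    rw [hr2, hR2, hv, map_sub]; abel
  have hABze : LinearMap.adjoint A ye + LinearMap.adjoint B ze = -R2 := by
    rw [hye, hze, hR2, map_sub, map_sub, ← hs3]; abel
  have e1 : -A xs - (-A (x (j+1)) - β • A r2 - S u)
      = A (β • r2 - (xs - x (j+1))) + S u := by
    simp only [map_sub, map_smul]; abel
  have H1 : ⟪ye, SigY ye⟫ ≤ ⟪β • r2 - (xs - x (j+1)), LinearMap.adjoint A ye⟫ + ⟪S u, ye⟫ := by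
    refine hmy.trans (le_of_eq ?_)
    rw [e1, inner_add_left, LinearMap.adjoint_inner_right]
  have e2 : -B xs - (-B (x (j+1)) - β • B R2 - T₀ v)
      = B (β • R2 - (xs - x (j+1))) + T₀ v := by
    simp only [map_sub, map_smul]; abel
  have H2 : ⟪ze, SigZ ze⟫ ≤ ⟪β • R2 - (xs - x (j+1)), LinearMap.adjoint B ze⟫ + ⟪T₀ v, ze⟫ := by
    refine hmz.trans (le_of_eq ?_)
    rw [e2, inner_add_left, LinearMap.adjoint_inner_right]
  have hbr : β • R2 - (xs - x (j+1))
      = (β • r2 - (xs - x (j+1))) + β • (LinearMap.adjoint B v) := by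
    rw [hr2']; module
  have q1 : ⟪β • r2 - (xs - x (j+1)), LinearMap.adjoint A ye⟫
      + ⟪β • r2 - (xs - x (j+1)), LinearMap.adjoint B ze⟫
      = ⟪xs - x (j+1), R2⟫ - β*‖R2‖^2 + β*⟪LinearMap.adjoint B v, R2⟫ := by
    rw [← inner_add_right, hABze, inner_neg_right, inner_sub_left, real_inner_smul_left, hr2',
      inner_sub_left, real_inner_self_eq_norm_sq]
    ring
  have q2 : ⟪β • (LinearMap.adjoint B v), LinearMap.adjoint B ze⟫
      = β * ⟪LinearMap.adjoint B v, LinearMap.adjoint B ze⟫ := real_inner_smul_left _ _ _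
  have Hsum : ⟪ye, SigY ye⟫ + ⟪ze, SigZ ze⟫ ≤ ⟪xs - x (j+1), R2⟫ - β*‖R2‖^2
      + β*⟪LinearMap.adjoint B v, R2⟫ + β*⟪LinearMap.adjoint B v, LinearMap.adjoint B ze⟫
      + ⟪S u, ye⟫ + ⟪T₀ v, ze⟫ := by
    have h := add_le_add H1 H2
    rw [hbr, inner_add_left] at h
    linarith [q1, q2]
  have hueq : yek - ye = u := by rw [hu, hye, hyek]; abel
  have hveq : zek - ze = v := by rw [hv, hze, hzek]; abel
  have idS : ⟪S u, ye⟫ = (⟪yek, S yek⟫ - ⟪ye, S ye⟫ - ⟪u, S u⟫)/2 := by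
    have h := sym_expand2 S hSsym ye yek
    rw [hueq] at h; exact h
  have idT : ⟪T₀ v, ze⟫ = (⟪zek, T₀ zek⟫ - ⟪ze, T₀ ze⟫ - ⟪v, T₀ v⟫)/2 := by
    have h := sym_expand2 T₀ hTsym ze zek
    rw [hveq] at h; exact h
  have hBveq : LinearMap.adjoint B zek - LinearMap.adjoint B ze = LinearMap.adjoint B v := by
    rw [← map_sub, hveq]
  have idB0 : ⟪LinearMap.adjoint B v, LinearMap.adjoint B ze⟫
      = (‖LinearMap.adjoint B zek‖^2 - ‖LinearMap.adjoint B ze‖^2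
        - ‖LinearMap.adjoint B v‖^2)/2 := by
    have h := norm_sub_sq_real (LinearMap.adjoint B zek) (LinearMap.adjoint B ze)
    rw [hBveq] at h
    have h2 : ⟪LinearMap.adjoint B zek, LinearMap.adjoint B ze⟫
        = ⟪LinearMap.adjoint B v, LinearMap.adjoint B ze⟫ + ‖LinearMap.adjoint B ze‖^2 := by
      rw [← hBveq, inner_sub_left, real_inner_self_eq_norm_sq]; ring
    linarith
  have idB : β * ⟪LinearMap.adjoint B v, LinearMap.adjoint B ze⟫
      = β * ((‖LinearMap.adjoint B zek‖^2 - ‖LinearMap.adjoint B ze‖^2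
        - ‖LinearMap.adjoint B v‖^2)/2) := by rw [idB0]
  have idDMy2 : ⟪ye, S ye + SigY ye⟫ = ⟪ye, S ye⟫ + ⟪ye, SigY ye⟫ := inner_add_right _ _ _
  have idDMy1 : ⟪yek, S yek + SigY yek⟫ = ⟪yek, S yek⟫ + ⟪yek, SigY yek⟫ := inner_add_right _ _ _
  have idDMz2 : ⟪ze, T₀ ze + β • B (LinearMap.adjoint B ze) + SigZ ze⟫
      = ⟪ze, T₀ ze⟫ + β*‖LinearMap.adjoint B ze‖^2 + ⟪ze, SigZ ze⟫ := by
    rw [inner_add_right, inner_add_right, real_inner_smul_right,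
      ← LinearMap.adjoint_inner_left B (LinearMap.adjoint B ze) ze,
      real_inner_self_eq_norm_sq]
  have idDMz1 : ⟪zek, T₀ zek + β • B (LinearMap.adjoint B zek) + SigZ zek⟫
      = ⟪zek, T₀ zek⟫ + β*‖LinearMap.adjoint B zek‖^2 + ⟪zek, SigZ zek⟫ := by
    rw [inner_add_right, inner_add_right, real_inner_smul_right,
      ← LinearMap.adjoint_inner_left B (LinearMap.adjoint B zek) zek,
      real_inner_self_eq_norm_sq]
  have idvT : (1-σ) * ⟪v, T₀ v + β • B (LinearMap.adjoint B v)⟫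
      = (1-σ) * (⟪v, T₀ v⟫ + β*‖LinearMap.adjoint B v‖^2) := by
    congr 1
    rw [inner_add_right, real_inner_smul_right,
      ← LinearMap.adjoint_inner_left B (LinearMap.adjoint B v) v,
      real_inner_self_eq_norm_sq]
  have idX : (τ*β)⁻¹ * ‖xs - x (j+1+1)‖^2 = (τ*β)⁻¹ * ‖xs - x (j+1)‖^2
      - 2*⟪xs - x (j+1), R2⟫ + (τ*β)*‖R2‖^2 := by
    have hvec : xs - x (j+1+1) = (-(τ*β)) • R2 + (xs - x (j+1)) := by
      rw [hx2, neg_smul]; abel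
    rw [hvec, expand_sq, real_inner_comm R2 (xs - x (j+1))]
    field_simp
    ring
  have idDG : (1-σ) * ((τ*β)⁻¹ * ‖xt (j+1+1) - x (j+1)‖^2)
      = (1-σ) * ((β/τ) * (‖R2‖^2 - 2*⟪LinearMap.adjoint B v, R2⟫
        + ‖LinearMap.adjoint B v‖^2)) := by
    congr 1
    have hvec : xt (j+1+1) - x (j+1) = (-β) • (LinearMap.adjoint B v) + β • R2 := by
      rw [hxt2, hr2']; module
    rw [hvec, expand_sq2]
    field_simp
    ring
  have hx0 : x j = x (j+1) - (τ*β) • R1 := by rw [hx1]; abel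
  have e3 : -B (x (j+1)) - β • B R2 - T₀ v - (-B (x j) - β • B R1 - T₀ v')
      = B (((1-τ)*β) • R1 - β • R2) + (T₀ v' - T₀ v) := by
    rw [hx0]
    have hsm : ((1-τ)*β) • R1 = β • R1 - (τ*β) • R1 := by rw [sub_mul, one_mul, sub_smul]
    simp only [map_sub, map_smul, hsm]
    abel
  have H3 : ⟪v, SigZ v⟫ ≤ (1-τ)*β*⟪LinearMap.adjoint B v, R1⟫
      - β*⟪LinearMap.adjoint B v, R2⟫ - ⟪v, T₀ v⟫ + ⟪T₀ v', v⟫ := by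
    refine hmz2.trans (le_of_eq ?_)
    rw [e3, inner_add_left, ← LinearMap.adjoint_inner_right, inner_sub_left, inner_sub_left,
      real_inner_smul_left, real_inner_smul_left, real_inner_comm R1 (LinearMap.adjoint B v),
      real_inner_comm R2 (LinearMap.adjoint B v), real_inner_comm (T₀ v) v]
    ring
  have H4 : ⟪T₀ v', v⟫ ≤ (⟪v', T₀ v'⟫ + ⟪v, T₀ v⟫)/2 := psd_cauchy2 T₀ hTsym hTpsd v' v
  have H6a : ⟪u, SigY u⟫ ≤ 2*⟪yek, SigY yek⟫ + 2*⟪ye, SigY ye⟫ := by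
    have h := psd_sub_le2 SigY hSigYsym hSigYpsd yek ye
    rw [hueq] at h; exact h
  have H6b : ⟪v, SigZ v⟫ ≤ 2*⟪zek, SigZ zek⟫ + 2*⟪ze, SigZ ze⟫ := by
    have h := psd_sub_le2 SigZ hSigZsym hSigZpsd zek ze
    rw [hveq] at h; exact h
  have c5 : (0:ℝ) ≤ τ^2*‖LinearMap.adjoint B v‖^2 + 2*τ*⟪LinearMap.adjoint B v, R1⟫
      + ‖R1‖^2 := by
    have h : (0:ℝ) ≤ ‖τ • (LinearMap.adjoint B v) + R1‖^2 := by positivity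
    rwa [expand_sq] at h
  have c5' : (0:ℝ) ≤ ‖LinearMap.adjoint B v‖^2 - 2*⟪LinearMap.adjoint B v, R1⟫ + ‖R1‖^2 := by
    have h : (0:ℝ) ≤ ‖(-1:ℝ) • (LinearMap.adjoint B v) + R1‖^2 := by positivity
    rw [expand_sq] at h
    nlinarith only [h]
  have htT' : 0 ≤ ⟪v', T₀ v'⟫ := by rw [real_inner_comm]; exact hTpsd v'
  have haS' : 0 ≤ ⟪u', S u'⟫ := by rw [real_inner_comm]; exact hSpsd u'
  have hsZ1' : 0 ≤ ⟪v', SigZ v'⟫ := by rw [real_inner_comm]; exact hSigZpsd v'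
  have hsY1' : 0 ≤ ⟪u', SigY u'⟫ := by rw [real_inner_comm]; exact hSigYpsd u'
  have hbN : (0:ℝ) ≤ ‖LinearMap.adjoint B v‖^2 := by positivity
  have hρ1 : (0:ℝ) ≤ ‖R1‖^2 := by positivity
  have hq1 : 0 ≤ (1-γ) * ⟪u', SigY u'⟫ := mul_nonneg (by linarith only [hγle1]) hsY1'
  have hq2 : 0 ≤ (1-γ) * ⟪v', SigZ v'⟫ := mul_nonneg (by linarith only [hγle1]) hsZ1'
  have hE2 : (0:ℝ) ≤ τ * (-(σ + τ - 1) * ⟪v, T₀ v⟫ + (σ * (τ + 1) - 1) * β * ‖LinearMap.adjoint B v‖^2 - 2 * (σ + τ - 1) * β * ⟪LinearMap.adjoint B v, R2⟫ - 2 * (σ + τ - 1) * ⟪v, SigZ v⟫) + τ * (1 - γ) * ((σ - (τ - 1) ^ 2) * β * ‖R1‖^2 + σ * τ * ⟪u', S u'⟫ + ν * ⟪v', T₀ v'⟫ + 2 * (σ + τ - 1) * ⟪v', SigZ v'⟫) := by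
    have hLτ : 0 ≤ 2 * τ * (σ + τ - 1) := by positivity
    have m3 : 0 ≤ 2 * τ * (σ + τ - 1) * ((1 - τ) * β * ⟪LinearMap.adjoint B v, R1⟫
        - β * ⟪LinearMap.adjoint B v, R2⟫ - ⟪v, T₀ v⟫ + ⟪T₀ v', v⟫ - ⟪v, SigZ v⟫) :=
      mul_nonneg hLτ (by linarith only [H3])
    have m4 : 0 ≤ 2 * τ * (σ + τ - 1) * ((⟪v', T₀ v'⟫ + ⟪v, T₀ v⟫) / 2 - ⟪T₀ v', v⟫) :=
      mul_nonneg hLτ (by linarith only [H4])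
    have m8 : 0 ≤ τ * ((1 - γ) * ν - (σ + τ - 1)) * ⟪v', T₀ v'⟫ := by
      refine mul_nonneg (mul_nonneg hτ.le ?_) htT'
      linarith only [hγν, hν]
    have m9 : 0 ≤ τ * (1 - γ) * σ * τ * ⟪u', S u'⟫ := by
      have h1 : (0:ℝ) ≤ 1 - γ := by linarith only [hγle1]
      have := mul_nonneg (mul_nonneg (mul_nonneg (mul_nonneg hτ.le h1) hσpos.le) hτ.le) haS'
      linarith only [this]
    have m10 : 0 ≤ 2 * τ * (1 - γ) * (σ + τ - 1) * ⟪v', SigZ v'⟫ := by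
      have h1 : (0:ℝ) ≤ 1 - γ := by linarith only [hγle1]
      have := mul_nonneg (mul_nonneg (mul_nonneg
        (by positivity : (0:ℝ) ≤ 2*τ) h1) hL) hsZ1'
      linarith only [this]
    rcases le_or_gt τ 1 with h1 | h1
    · have m5 : 0 ≤ τ * (σ + τ - 1) * (1 - τ) * (β * (‖LinearMap.adjoint B v‖^2
          - 2 * ⟪LinearMap.adjoint B v, R1⟫ + ‖R1‖^2)) :=
        mul_nonneg (mul_nonneg (mul_nonneg hτ.le hL) (by linarith only [h1])) (mul_nonneg hβ.le c5')
      have m6 : 0 ≤ τ * ((σ * (τ + 1) - 1) - (σ + τ - 1) * (1 - τ))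
          * (β * ‖LinearMap.adjoint B v‖^2) := by
        refine mul_nonneg (mul_nonneg hτ.le ?_) (mul_nonneg hβ.le hbN)
        linarith only [mul_le_mul_of_nonneg_left hσ1 hτ.le]
      have m7 : 0 ≤ τ * ((1 - γ) * (σ - (τ - 1) ^ 2) - (σ + τ - 1) * (1 - τ))
          * (β * ‖R1‖^2) := by
        refine mul_nonneg ?_ (mul_nonneg hβ.le hρ1)
        linarith only [hγ1]
      linarith only [m3, m4, m5, m6, m7, m8, m9, m10]
    · have m5 : 0 ≤ (σ + τ - 1) * (τ - 1) * (β * (τ ^ 2 * ‖LinearMap.adjoint B v‖^2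
          + 2 * τ * ⟪LinearMap.adjoint B v, R1⟫ + ‖R1‖^2)) :=
        mul_nonneg (mul_nonneg hL (by linarith only [h1])) (mul_nonneg hβ.le c5)
      have m6 : 0 ≤ τ * ((σ * (τ + 1) - 1) - τ * (σ + τ - 1) * (τ - 1))
          * (β * ‖LinearMap.adjoint B v‖^2) := by
        refine mul_nonneg (mul_nonneg hτ.le ?_) (mul_nonneg hβ.le hbN)
        linarith only [hσ2']
      have m7 : 0 ≤ (τ * (1 - γ) * (σ - (τ - 1) ^ 2) - (σ + τ - 1) * (τ - 1))
          * (β * ‖R1‖^2) := by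
        refine mul_nonneg ?_ (mul_nonneg hβ.le hρ1)
        linarith only [hγ2]
      linarith only [m3, m4, m5, m6, m7, m8, m9, m10]
  have hE2div : (0:ℝ) ≤ (τ * (-(σ + τ - 1) * ⟪v, T₀ v⟫ + (σ * (τ + 1) - 1) * β * ‖LinearMap.adjoint B v‖^2 - 2 * (σ + τ - 1) * β * ⟪LinearMap.adjoint B v, R2⟫ - 2 * (σ + τ - 1) * ⟪v, SigZ v⟫) + τ * (1 - γ) * ((σ - (τ - 1) ^ 2) * β * ‖R1‖^2 + σ * τ * ⟪u', S u'⟫ + ν * ⟪v', T₀ v'⟫ + 2 * (σ + τ - 1) * ⟪v', SigZ v'⟫)) / (2*τ^2) := div_nonneg hE2 (by positivity)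
  have hlink : (1/2 * ⟪u, S u⟫ + 1/2 * ⟪v, T₀ v⟫ + 1/2 * (β * ‖LinearMap.adjoint B v‖^2) + (2 - τ) * β / 2 * ‖R2‖^2 - β * ⟪LinearMap.adjoint B v, R2⟫) - ((σ - (τ - 1) ^ 2) * β / (2 * τ) * ‖R2‖ ^ 2 + σ / 2 * ⟪u, S u⟫ + ν / (2 * τ) * ⟪v, T₀ v⟫ + (σ + τ - 1) / τ * ⟪v, SigZ v⟫ + (1 - σ) * (1/2 * (⟪u, S u⟫ + (⟪v, T₀ v⟫ + β * ‖LinearMap.adjoint B v‖^2) + (β/τ) * (‖R2‖^2 - 2*⟪LinearMap.adjoint B v, R2⟫ + ‖LinearMap.adjoint B v‖^2))) - (1 - γ) * ((σ - (τ - 1) ^ 2) * β / (2 * τ) * ‖R1‖ ^ 2 + σ / 2 * ⟪u', S u'⟫ + ν / (2 * τ) * ⟪v', T₀ v'⟫ + (σ + τ - 1) / τ * ⟪v', SigZ v'⟫)) = (τ * (-(σ + τ - 1) * ⟪v, T₀ v⟫ + (σ * (τ + 1) - 1) * β * ‖LinearMap.adjoint B v‖^2 - 2 * (σ + τ - 1)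 * β * ⟪LinearMap.adjoint B v, R2⟫ - 2 * (σ + τ - 1) * ⟪v, SigZ v⟫) + τ * (1 - γ) * ((σ - (τ - 1) ^ 2) * β * ‖R1‖^2 + σ * τ * ⟪u', S u'⟫ + ν * ⟪v', T₀ v'⟫ + 2 * (σ + τ - 1) * ⟪v', SigZ v'⟫)) / (2*τ^2) := by
    rw [eq_div_iff (by positivity : (2*τ^2) ≠ 0), hν]
    field_simp
    ring
  linarith only [Hsum, idS, idT, idB, idDMy2, idDMy1, idDMz2, idDMz1, idvT, idX, idDG, H6a, H6b,
    hq1, hq2, hE2div, hlink]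
end
end

section
/- Let (y^k, z^k, x^k)_{k≥0} be an sPADMM sequence with 0 < τ < (1+√5)/2. Fix k ≥ 1 and nonnegative reals α_1, …, α_{k+1} with α_1 = 0 and Σ_{i=1}^k α_{i+1} = 1, and define w̄^k := Σ_{i=1}^k α_{i+1} w̃^{i+1}, r̄^k := Σ_{i=1}^k α_{i+1} r^{i+1}, and ε̄^k := Σ_{i=1}^k α_{i+1}⟨w̃^{i+1} − w̄^k, r^{i+1} − r̄^k⟩, where r^{i+1} := G(w^i − w^{i+1}). Then ε̄^k ≥ 0 and r̄^k ∈ T^{[ε̄^k]}(w̄^k). -/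
open scoped RealInnerProductSpace

noncomputable section

/-!
Rewriting the optimality conditions of one sPADMM step shows that `r^{i+1} ∈ T(w̃^{i+1})`.
The operator `T` is monotone: its coupling part `(A x, B x, -A* y - B* z)` is skew, so only the
subdifferentials contribute to `⟨v - v', w - w'⟩`. For a monotone operator and points
`r_i ∈ T(w_i)` averaged with weights `a_i`, expanding the bilinear pairing gives
`∑ a_i ⟨w' - w_i, v' - r_i⟩ = ⟨w' - w̄, v' - r̄⟩ + ε̄`. Taking `v' ∈ T(w')` gives
`r̄ ∈ T^{[ε̄]}(w̄)`, and taking `(w', v') = (w_j, r_j)` and averaging over `j` gives `2 ε̄ ≥ 0`.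
This is the transportation formula of Burachik, Iusem and Svaiter.
-/

open Finset

section Transport

variable {E F ι : Type*} [AddCommGroup E] [Module ℝ E] [AddCommGroup F] [Module ℝ F]
  (p : E →ₗ[ℝ] F →ₗ[ℝ] ℝ) (s : Finset ι) (a : ι → ℝ) (w : ι → E) (r : ι → F)

def transportError : ℝ :=
  ∑ i ∈ s, a i * p (w i - ∑ j ∈ s, a j • w j) (r i - ∑ j ∈ s, a j • r j)

def enlargement (T : E → Set F) (ε : ℝ) (w₀ : E) : Set F :=
  {v₀ | ∀ w v, v ∈ T w → -ε ≤ p (w - w₀) (v - v₀)}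

theorem sum_mul_apply_sub_sub (hs : ∑ i ∈ s, a i = 1) (w₀ : E) (v₀ : F) :
    ∑ i ∈ s, a i * p (w₀ - w i) (v₀ - r i) =
      p w₀ v₀ - p w₀ (∑ i ∈ s, a i • r i) - p (∑ i ∈ s, a i • w i) v₀
        + ∑ i ∈ s, a i * p (w i) (r i) := by
  simp only [map_sub, LinearMap.sub_apply, mul_sub, sum_sub_distrib, ← sum_mul, hs, one_mul,
    map_sum, map_smul, LinearMap.sum_apply, LinearMap.smul_apply, smul_eq_mul]
  ring

theorem sum_mul_apply_sub_sub_eq_add_transportError (hs : ∑ i ∈ s, a i = 1) (w₀ : E) (v₀ : F) :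
    ∑ i ∈ s, a i * p (w₀ - w i) (v₀ - r i) =
      p (w₀ - ∑ i ∈ s, a i • w i) (v₀ - ∑ i ∈ s, a i • r i) + transportError p s a w r := by
  have hflip : ∀ i, p (w i - ∑ j ∈ s, a j • w j) (r i - ∑ j ∈ s, a j • r j) =
      p (∑ j ∈ s, a j • w j - w i) (∑ j ∈ s, a j • r j - r i) := fun i => by
    simp only [map_sub, LinearMap.sub_apply]
    ring
  rw [transportError, sum_congr rfl fun i _ => congrArg (a i * ·) (hflip i),
    sum_mul_apply_sub_sub p s a w r hs, sum_mul_apply_sub_sub p s a w r hs]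
  simp only [map_sub, LinearMap.sub_apply]
  ring

variable {p s a w r} {T : E → Set F}
  (hT : ∀ ⦃w₁ w₂ v₁ v₂⦄, v₁ ∈ T w₁ → v₂ ∈ T w₂ → 0 ≤ p (w₁ - w₂) (v₁ - v₂))
  (ha : ∀ i ∈ s, 0 ≤ a i) (hs : ∑ i ∈ s, a i = 1) (hr : ∀ i ∈ s, r i ∈ T (w i))
include hT ha hs hr

theorem transportError_nonneg : 0 ≤ transportError p s a w r := by
  have hpairs : 0 ≤ ∑ j ∈ s, a j * ∑ i ∈ s, a i * p (w j - w i) (r j - r i) :=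
    sum_nonneg fun j hj => mul_nonneg (ha j hj) <|
      sum_nonneg fun i hi => mul_nonneg (ha i hi) (hT (hr j hj) (hr i hi))
  simp_rw [sum_mul_apply_sub_sub_eq_add_transportError p s a w r hs, mul_add, sum_add_distrib,
    ← sum_mul, hs, one_mul] at hpairs
  rw [← transportError] at hpairs
  linarith

theorem sum_smul_mem_enlargement :
    ∑ i ∈ s, a i • r i ∈ enlargement p T (transportError p s a w r) (∑ i ∈ s, a i • w i) := by
  intro w₀ v₀ hv₀
  have hsum : 0 ≤ ∑ i ∈ s, a i * p (w₀ - w i) (v₀ - r i) :=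
    sum_nonneg fun i hi => mul_nonneg (ha i hi) (hT hv₀ (hr i hi))
  rw [sum_mul_apply_sub_sub_eq_add_transportError p s a w r hs] at hsum
  linarith

end Transport

section Subdiff

variable {E : Type*} [NormedAddCommGroup E] [InnerProductSpace ℝ E] {f : E → EReal}
  (hbot : ∀ v, f v ≠ ⊥) (hproper : ∃ v, f v ≠ ⊤)
include hbot hproper

theorem coe_toReal_of_mem_subdiff {u ξ : E} (hξ : ξ ∈ subdiff f u) :
    ((f u).toReal : EReal) = f u := by
  refine EReal.coe_toReal (fun htop => ?_) (hbot u)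
  obtain ⟨v, hv⟩ := hproper
  have h := hξ v
  rw [htop, EReal.top_add_coe, top_le_iff] at h
  exact hv h

theorem inner_sub_sub_nonneg_of_mem_subdiff {u u' ξ η : E} (hξ : ξ ∈ subdiff f u)
    (hη : η ∈ subdiff f u') : 0 ≤ ⟪ξ - η, u - u'⟫ := by
  have h₁ := hξ u'
  have h₂ := hη u
  rw [← coe_toReal_of_mem_subdiff hbot hproper hξ,
    ← coe_toReal_of_mem_subdiff hbot hproper hη] at h₁ h₂
  norm_cast at h₁ h₂
  have hflip : ⟪ξ, u - u'⟫ = -⟪ξ, u' - u⟫ := by rw [← inner_neg_right, neg_sub]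
  rw [inner_sub_left, hflip]
  linarith

end Subdiff

section KKT

open LinearMap (adjoint)

variable {Y Z X : Type*} [NormedAddCommGroup Y] [InnerProductSpace ℝ Y]
  [NormedAddCommGroup Z] [InnerProductSpace ℝ Z] [NormedAddCommGroup X] [InnerProductSpace ℝ X]

variable (Y Z X) in
def prodInner : (Y × Z × X) →ₗ[ℝ] (Y × Z × X) →ₗ[ℝ] ℝ :=
  LinearMap.mk₂ ℝ (fun w v => ⟪w.1, v.1⟫ + ⟪w.2.1, v.2.1⟫ + ⟪w.2.2, v.2.2⟫)
    (fun _ _ _ => by simp only [Prod.fst_add, Prod.snd_add, inner_add_left]; ring)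
    (fun _ _ _ => by simp only [Prod.smul_fst, Prod.smul_snd, real_inner_smul_left]; ring)
    (fun _ _ _ => by simp only [Prod.fst_add, Prod.snd_add, inner_add_right]; ring)
    (fun _ _ _ => by simp only [Prod.smul_fst, Prod.smul_snd, real_inner_smul_right]; ring)

@[simp]
theorem prodInner_apply (w v : Y × Z × X) :
    prodInner Y Z X w v = ⟪w.1, v.1⟫ + ⟪w.2.1, v.2.1⟫ + ⟪w.2.2, v.2.2⟫ := rfl

variable [FiniteDimensional ℝ Y] [FiniteDimensional ℝ Z] [FiniteDimensional ℝ X]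
  {ϑf : Y → EReal} {φg : Z → EReal} {A : X →ₗ[ℝ] Y} {B : X →ₗ[ℝ] Z} {c : X}

variable (ϑf φg A B c) in
/-- The KKT operator `T(y, z, x) = (∂ϑf y + A x) × (∂φg z + B x) × {c - A* y - B* z}`. -/
def kktOperator (w : Y × Z × X) : Set (Y × Z × X) :=
  {v | v.1 - A w.2.2 ∈ subdiff ϑf w.1 ∧ v.2.1 - B w.2.2 ∈ subdiff φg w.2.1 ∧
    v.2.2 = c - adjoint A w.1 - adjoint B w.2.1}

theorem kktOperator_monotone (hϑbot : ∀ v, ϑf v ≠ ⊥) (hϑproper : ∃ v, ϑf v ≠ ⊤)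
    (hφbot : ∀ v, φg v ≠ ⊥) (hφproper : ∃ v, φg v ≠ ⊤) ⦃w w' v v' : Y × Z × X⦄
    (hv : v ∈ kktOperator ϑf φg A B c w) (hv' : v' ∈ kktOperator ϑf φg A B c w') :
    0 ≤ prodInner Y Z X (w - w') (v - v') := by
  obtain ⟨hy, hz, hx⟩ := hv
  obtain ⟨hy', hz', hx'⟩ := hv'
  have my := inner_sub_sub_nonneg_of_mem_subdiff hϑbot hϑproper hy hy'
  have mz := inner_sub_sub_nonneg_of_mem_subdiff hφbot hφproper hz hz'
  have hskew : ⟪w.2.2 - w'.2.2, v.2.2 - v'.2.2⟫ =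
      -⟪A (w.2.2 - w'.2.2), w.1 - w'.1⟫ - ⟪B (w.2.2 - w'.2.2), w.2.1 - w'.2.1⟫ := by
    rw [hx, hx']
    simp only [map_sub, inner_sub_left, inner_sub_right, LinearMap.adjoint_inner_right]
    ring
  have eA : v.1 - A w.2.2 - (v'.1 - A w'.2.2) = (v.1 - v'.1) - A (w.2.2 - w'.2.2) := by
    rw [map_sub]; abel
  have eB : v.2.1 - B w.2.2 - (v'.2.1 - B w'.2.2) = (v.2.1 - v'.2.1) - B (w.2.2 - w'.2.2) := by
    rw [map_sub]; abel
  rw [eA, inner_sub_left] at my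
  rw [eB, inner_sub_left] at mz
  simp only [prodInner_apply, Prod.fst_sub, Prod.snd_sub, hskew]
  linarith [real_inner_comm (w.1 - w'.1) (v.1 - v'.1),
    real_inner_comm (w.2.1 - w'.2.1) (v.2.1 - v'.2.1)]

theorem sPADMM_step_mem_kktOperator {β τ : ℝ} (hτβ : τ * β ≠ 0) (S : Y →ₗ[ℝ] Y)
    (T₀ : Z →ₗ[ℝ] Z) {y₀ y₁ : Y} {z₀ z₁ : Z} {x₀ x₁ : X}
    (hy : -(A x₀) - β • A (adjoint A y₁ + adjoint B z₀ - c) - S (y₁ - y₀) ∈ subdiff ϑf y₁)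
    (hz : -(B x₀) - β • B (adjoint A y₁ + adjoint B z₁ - c) - T₀ (z₁ - z₀) ∈ subdiff φg z₁)
    (hx : x₁ = x₀ + (τ * β) • (adjoint A y₁ + adjoint B z₁ - c)) :
    (S (y₀ - y₁), T₀ (z₀ - z₁) + β • B (adjoint B (z₀ - z₁)), (τ * β)⁻¹ • (x₀ - x₁)) ∈
      kktOperator ϑf φg A B c (y₁, z₁, x₀ + β • (adjoint A y₁ + adjoint B z₀ - c)) := by
  refine ⟨?_, ?_, ?_⟩
  · convert hy using 1
    simp only [map_add, map_smul, map_sub]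
    module
  · convert hz using 1
    simp only [map_add, map_smul, map_sub]
    module
  · rw [hx, sub_add_cancel_left, smul_neg, inv_smul_smul₀ hτβ]
    dsimp only
    abel

end KKT

theorem sPADMM_enlargement_general
    {Y Z X : Type*}
    [NormedAddCommGroup Y] [InnerProductSpace ℝ Y] [FiniteDimensional ℝ Y]
    [NormedAddCommGroup Z] [InnerProductSpace ℝ Z] [FiniteDimensional ℝ Z]
    [NormedAddCommGroup X] [InnerProductSpace ℝ X] [FiniteDimensional ℝ X]
    (ϑf : Y → EReal) (φg : Z → EReal)
    (hϑbot : ∀ v, ϑf v ≠ ⊥) (hϑproper : ∃ v, ϑf v ≠ ⊤)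
    (hφbot : ∀ v, φg v ≠ ⊥) (hφproper : ∃ v, φg v ≠ ⊤)
    (A : X →ₗ[ℝ] Y) (B : X →ₗ[ℝ] Z) (c : X)
    (β τ : ℝ) (hβ : 0 < β) (hτ : 0 < τ)
    (S : Y →ₗ[ℝ] Y)
    (T₀ : Z →ₗ[ℝ] Z)
    (y : ℕ → Y) (z : ℕ → Z) (x : ℕ → X)
    (hADMMy : ∀ k : ℕ,
      -(A (x k)) - β • A (LinearMap.adjoint A (y (k+1)) + LinearMap.adjoint B (z k) - c)
        - S (y (k+1) - y k) ∈ subdiff ϑf (y (k+1)))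
    (hADMMz : ∀ k : ℕ,
      -(B (x k)) - β • B (LinearMap.adjoint A (y (k+1)) + LinearMap.adjoint B (z (k+1)) - c)
        - T₀ (z (k+1) - z k) ∈ subdiff φg (z (k+1)))
    (hADMMx : ∀ k : ℕ,
      x (k+1) = x k + (τ * β) • (LinearMap.adjoint A (y (k+1)) + LinearMap.adjoint B (z (k+1)) - c))
    (xt : ℕ → X)
    (hxt : ∀ k : ℕ,
      xt (k+1) = x k + β • (LinearMap.adjoint A (y (k+1)) + LinearMap.adjoint B (z k) - c))
    (k : ℕ) (α : ℕ → ℝ)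
    (hαnn : ∀ i, 1 ≤ i → i ≤ k + 1 → 0 ≤ α i)
    (hαsum : ∑ i ∈ Finset.Icc 1 k, α (i+1) = 1)
    (ybar : Y) (hybar : ybar = ∑ i ∈ Finset.Icc 1 k, α (i+1) • y (i+1))
    (zbar : Z) (hzbar : zbar = ∑ i ∈ Finset.Icc 1 k, α (i+1) • z (i+1))
    (xbar : X) (hxbar : xbar = ∑ i ∈ Finset.Icc 1 k, α (i+1) • xt (i+1))
    (r1 : ℕ → Y) (hr1 : ∀ i : ℕ, r1 (i+1) = S (y i - y (i+1)))
    (r2 : ℕ → Z) (hr2 : ∀ i : ℕ,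
      r2 (i+1) = T₀ (z i - z (i+1)) + β • B (LinearMap.adjoint B (z i - z (i+1))))
    (r3 : ℕ → X) (hr3 : ∀ i : ℕ, r3 (i+1) = (τ * β)⁻¹ • (x i - x (i+1)))
    (rbar1 : Y) (hrbar1 : rbar1 = ∑ i ∈ Finset.Icc 1 k, α (i+1) • r1 (i+1))
    (rbar2 : Z) (hrbar2 : rbar2 = ∑ i ∈ Finset.Icc 1 k, α (i+1) • r2 (i+1))
    (rbar3 : X) (hrbar3 : rbar3 = ∑ i ∈ Finset.Icc 1 k, α (i+1) • r3 (i+1))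
    (epsb : ℝ) (hepsb : epsb = ∑ i ∈ Finset.Icc 1 k, α (i+1) *
      (⟪y (i+1) - ybar, r1 (i+1) - rbar1⟫ + ⟪z (i+1) - zbar, r2 (i+1) - rbar2⟫
        + ⟪xt (i+1) - xbar, r3 (i+1) - rbar3⟫)) :
    0 ≤ epsb ∧
      ∀ (y' : Y) (z' : Z) (x' : X) (v1 : Y) (v2 : Z) (v3 : X),
        v1 - A x' ∈ subdiff ϑf y' → v2 - B x' ∈ subdiff φg z' →
        v3 = c - LinearMap.adjoint A y' - LinearMap.adjoint B z' →
        ⟪v1 - rbar1, y' - ybar⟫ + ⟪v2 - rbar2, z' - zbar⟫ + ⟪v3 - rbar3, x' - xbar⟫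
          ≥ -epsb := by
  set w : ℕ → Y × Z × X := fun i => (y (i+1), z (i+1), xt (i+1))
  set ρ : ℕ → Y × Z × X := fun i => (r1 (i+1), r2 (i+1), r3 (i+1))
  have hmono := kktOperator_monotone (A := A) (B := B) (c := c) hϑbot hϑproper hφbot hφproper
  have hα : ∀ i ∈ Finset.Icc 1 k, 0 ≤ α (i+1) := fun i hi => by
    rw [Finset.mem_Icc] at hi
    exact hαnn (i+1) (by omega) (by omega)
  have hρ : ∀ i ∈ Finset.Icc 1 k, ρ i ∈ kktOperator ϑf φg A B c (w i) := fun i _ => by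
    simp only [ρ, w, hr1, hr2, hr3, hxt]
    exact sPADMM_step_mem_kktOperator (by positivity) S T₀ (hADMMy i) (hADMMz i) (hADMMx i)
  have hwbar : ∑ i ∈ Finset.Icc 1 k, α (i+1) • w i = (ybar, zbar, xbar) := by
    simp only [w, hybar, hzbar, hxbar, Prod.ext_iff, Prod.fst_sum, Prod.snd_sum, Prod.smul_fst,
      Prod.smul_snd, and_self]
  have hρbar : ∑ i ∈ Finset.Icc 1 k, α (i+1) • ρ i = (rbar1, rbar2, rbar3) := by
    simp only [ρ, hrbar1, hrbar2, hrbar3, Prod.ext_iff, Prod.fst_sum, Prod.snd_sum, Prod.smul_fst,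
      Prod.smul_snd, and_self]
  have hε : transportError (prodInner Y Z X) (Finset.Icc 1 k) (fun i => α (i+1)) w ρ = epsb := by
    simp only [transportError, hwbar, hρbar, hepsb, prodInner_apply, w, ρ, Prod.mk_sub_mk]
  refine ⟨hε ▸ transportError_nonneg hmono hα hαsum hρ, fun y' z' x' v1 v2 v3 h1 h2 h3 => ?_⟩
  have hbar := sum_smul_mem_enlargement hmono hα hαsum hρ (y', z', x') (v1, v2, v3) ⟨h1, h2, h3⟩
  simp only [hwbar, hρbar, hε, prodInner_apply, Prod.mk_sub_mk] at hbar
  linarith [real_inner_comm (v1 - rbar1) (y' - ybar), real_inner_comm (v2 - rbar2) (z' - zbar),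
    real_inner_comm (v3 - rbar3) (x' - xbar)]

theorem sPADMM_enlargement
    {Y Z X : Type*}
    [NormedAddCommGroup Y] [InnerProductSpace ℝ Y] [FiniteDimensional ℝ Y]
    [NormedAddCommGroup Z] [InnerProductSpace ℝ Z] [FiniteDimensional ℝ Z]
    [NormedAddCommGroup X] [InnerProductSpace ℝ X] [FiniteDimensional ℝ X]
    (ϑf : Y → EReal) (φg : Z → EReal)
    (hϑbot : ∀ v, ϑf v ≠ ⊥) (hϑproper : ∃ v, ϑf v ≠ ⊤)
    (hϑlsc : LowerSemicontinuous ϑf)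
    (hϑconvex : ∀ (v v' : Y) (a b : ℝ), 0 ≤ a → 0 ≤ b → a + b = 1 →
      ϑf (a • v + b • v') ≤ (a : EReal) * ϑf v + (b : EReal) * ϑf v')
    (hφbot : ∀ v, φg v ≠ ⊥) (hφproper : ∃ v, φg v ≠ ⊤)
    (hφlsc : LowerSemicontinuous φg)
    (hφconvex : ∀ (v v' : Z) (a b : ℝ), 0 ≤ a → 0 ≤ b → a + b = 1 →
      φg (a • v + b • v') ≤ (a : EReal) * φg v + (b : EReal) * φg v')
    (A : X →ₗ[ℝ] Y) (B : X →ₗ[ℝ] Z) (c : X)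
    (β τ : ℝ) (hβ : 0 < β) (hτ : 0 < τ)
    (S : Y →ₗ[ℝ] Y) (hSsym : LinearMap.IsSymmetric S) (hSpsd : ∀ v, 0 ≤ ⟪S v, v⟫)
    (T₀ : Z →ₗ[ℝ] Z) (hTsym : LinearMap.IsSymmetric T₀) (hTpsd : ∀ v, 0 ≤ ⟪T₀ v, v⟫)
    (hτub : τ < (1 + Real.sqrt 5) / 2)
    (y : ℕ → Y) (z : ℕ → Z) (x : ℕ → X)
    (hADMMy : ∀ k : ℕ,
      -(A (x k)) - β • A (LinearMap.adjoint A (y (k+1)) + LinearMap.adjoint B (z k) - c)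
        - S (y (k+1) - y k) ∈ subdiff ϑf (y (k+1)))
    (hADMMz : ∀ k : ℕ,
      -(B (x k)) - β • B (LinearMap.adjoint A (y (k+1)) + LinearMap.adjoint B (z (k+1)) - c)
        - T₀ (z (k+1) - z k) ∈ subdiff φg (z (k+1)))
    (hADMMx : ∀ k : ℕ,
      x (k+1) = x k + (τ * β) • (LinearMap.adjoint A (y (k+1)) + LinearMap.adjoint B (z (k+1)) - c))
    (xt : ℕ → X)
    (hxt : ∀ k : ℕ,
      xt (k+1) = x k + β • (LinearMap.adjoint A (y (k+1)) + LinearMap.adjoint B (z k) - c))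
    (k : ℕ) (hk : 1 ≤ k) (α : ℕ → ℝ)
    (hαnn : ∀ i, 1 ≤ i → i ≤ k + 1 → 0 ≤ α i) (hα1 : α 1 = 0)
    (hαsum : ∑ i ∈ Finset.Icc 1 k, α (i+1) = 1)
    (ybar : Y) (hybar : ybar = ∑ i ∈ Finset.Icc 1 k, α (i+1) • y (i+1))
    (zbar : Z) (hzbar : zbar = ∑ i ∈ Finset.Icc 1 k, α (i+1) • z (i+1))
    (xbar : X) (hxbar : xbar = ∑ i ∈ Finset.Icc 1 k, α (i+1) • xt (i+1))
    (r1 : ℕ → Y) (hr1 : ∀ i : ℕ, r1 (i+1) = S (y i - y (i+1)))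
    (r2 : ℕ → Z) (hr2 : ∀ i : ℕ,
      r2 (i+1) = T₀ (z i - z (i+1)) + β • B (LinearMap.adjoint B (z i - z (i+1))))
    (r3 : ℕ → X) (hr3 : ∀ i : ℕ, r3 (i+1) = (τ * β)⁻¹ • (x i - x (i+1)))
    (rbar1 : Y) (hrbar1 : rbar1 = ∑ i ∈ Finset.Icc 1 k, α (i+1) • r1 (i+1))
    (rbar2 : Z) (hrbar2 : rbar2 = ∑ i ∈ Finset.Icc 1 k, α (i+1) • r2 (i+1))
    (rbar3 : X) (hrbar3 : rbar3 = ∑ i ∈ Finset.Icc 1 k, α (i+1) • r3 (i+1))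
    (epsb : ℝ) (hepsb : epsb = ∑ i ∈ Finset.Icc 1 k, α (i+1) *
      (⟪y (i+1) - ybar, r1 (i+1) - rbar1⟫ + ⟪z (i+1) - zbar, r2 (i+1) - rbar2⟫
        + ⟪xt (i+1) - xbar, r3 (i+1) - rbar3⟫)) :
    0 ≤ epsb ∧
      ∀ (y' : Y) (z' : Z) (x' : X) (v1 : Y) (v2 : Z) (v3 : X),
        v1 - A x' ∈ subdiff ϑf y' → v2 - B x' ∈ subdiff φg z' →
        v3 = c - LinearMap.adjoint A y' - LinearMap.adjoint B z' →
        ⟪v1 - rbar1, y' - ybar⟫ + ⟪v2 - rbar2, z' - zbar⟫ + ⟪v3 - rbar3, x' - xbar⟫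
          ≥ -epsb :=
  sPADMM_enlargement_general ϑf φg hϑbot hϑproper hφbot hφproper A B c β τ hβ hτ S T₀ y z x hADMMy
    hADMMz hADMMx xt hxt k α hαnn hαsum ybar hybar zbar hzbar xbar hxbar r1 hr1 r2 hr2 r3 hr3 rbar1
    hrbar1 rbar2 hrbar2 rbar3 hrbar3 epsb hepsb
end
end

section
/- Let (y^k, z^k, x^k)_{k≥0} be an sPADMM sequence with τ > 0, and assume T^{-1}(0) is nonempty. Then ‖y^1 − y^0‖²_{S + Σ_{ϑf} + βAA*} ≤ dist²_{H₁}(w^0, T^{-1}(0)), where H₁ := Diag(2(S + Σ_{ϑf} + 4βAA*), 7βBB*, 7β^{-1}I). -/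
open scoped RealInnerProductSpace

set_option maxHeartbeats 1000000

noncomputable section

theorem sPADMM_first_step_y_bound
    {Y Z X : Type*}
    [NormedAddCommGroup Y] [InnerProductSpace ℝ Y] [FiniteDimensional ℝ Y]
    [NormedAddCommGroup Z] [InnerProductSpace ℝ Z] [FiniteDimensional ℝ Z]
    [NormedAddCommGroup X] [InnerProductSpace ℝ X] [FiniteDimensional ℝ X]
    (ϑf : Y → EReal) (φg : Z → EReal)
    (hϑbot : ∀ v, ϑf v ≠ ⊥) (hϑproper : ∃ v, ϑf v ≠ ⊤)
    (hϑlsc : LowerSemicontinuous ϑf)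
    (hϑconvex : ∀ (v v' : Y) (a b : ℝ), 0 ≤ a → 0 ≤ b → a + b = 1 →
      ϑf (a • v + b • v') ≤ (a : EReal) * ϑf v + (b : EReal) * ϑf v')
    (hφbot : ∀ v, φg v ≠ ⊥) (hφproper : ∃ v, φg v ≠ ⊤)
    (hφlsc : LowerSemicontinuous φg)
    (hφconvex : ∀ (v v' : Z) (a b : ℝ), 0 ≤ a → 0 ≤ b → a + b = 1 →
      φg (a • v + b • v') ≤ (a : EReal) * φg v + (b : EReal) * φg v')
    (A : X →ₗ[ℝ] Y) (B : X →ₗ[ℝ] Z) (c : X)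
    (β τ : ℝ) (hβ : 0 < β) (hτ : 0 < τ)
    (S : Y →ₗ[ℝ] Y) (hSsym : LinearMap.IsSymmetric S) (hSpsd : ∀ v, 0 ≤ ⟪S v, v⟫)
    (T₀ : Z →ₗ[ℝ] Z) (hTsym : LinearMap.IsSymmetric T₀) (hTpsd : ∀ v, 0 ≤ ⟪T₀ v, v⟫)
    (SigY : Y →ₗ[ℝ] Y) (hSigYsym : LinearMap.IsSymmetric SigY)
    (hSigYpsd : ∀ v, 0 ≤ ⟪SigY v, v⟫)
    (hSigYmono : ∀ (y₁ y₂ ξ₁ ξ₂ : Y), ξ₁ ∈ subdiff ϑf y₁ → ξ₂ ∈ subdiff ϑf y₂ →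
      ⟪y₁ - y₂, SigY (y₁ - y₂)⟫ ≤ ⟪ξ₁ - ξ₂, y₁ - y₂⟫)
    (SigZ : Z →ₗ[ℝ] Z) (hSigZsym : LinearMap.IsSymmetric SigZ)
    (hSigZpsd : ∀ v, 0 ≤ ⟪SigZ v, v⟫)
    (hSigZmono : ∀ (z₁ z₂ η₁ η₂ : Z), η₁ ∈ subdiff φg z₁ → η₂ ∈ subdiff φg z₂ →
      ⟪z₁ - z₂, SigZ (z₁ - z₂)⟫ ≤ ⟪η₁ - η₂, z₁ - z₂⟫)
    (y : ℕ → Y) (z : ℕ → Z) (x : ℕ → X)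
    (hADMMy : ∀ k : ℕ,
      -(A (x k)) - β • A (LinearMap.adjoint A (y (k+1)) + LinearMap.adjoint B (z k) - c)
        - S (y (k+1) - y k) ∈ subdiff ϑf (y (k+1)))
    (hADMMz : ∀ k : ℕ,
      -(B (x k)) - β • B (LinearMap.adjoint A (y (k+1)) + LinearMap.adjoint B (z (k+1)) - c)
        - T₀ (z (k+1) - z k) ∈ subdiff φg (z (k+1)))
    (hADMMx : ∀ k : ℕ,
      x (k+1) = x k + (τ * β) • (LinearMap.adjoint A (y (k+1)) + LinearMap.adjoint B (z (k+1)) - c))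
    (KKT : Y × Z × X → Prop)
    (hKKT : ∀ w : Y × Z × X, KKT w ↔
      (-(A w.2.2) ∈ subdiff ϑf w.1 ∧ -(B w.2.2) ∈ subdiff φg w.2.1 ∧
        LinearMap.adjoint A w.1 + LinearMap.adjoint B w.2.1 = c))
    (hne : ∃ w, KKT w)
    (H1sq : Y → Z → X → ℝ)
    (hH1 : ∀ (vy : Y) (vz : Z) (vx : X), H1sq vy vz vx =
      2 * (⟪vy, S vy⟫ + ⟪vy, SigY vy⟫ + 4 * β * ‖LinearMap.adjoint A vy‖ ^ 2)
        + 7 * β * ‖LinearMap.adjoint B vz‖ ^ 2 + 7 * β⁻¹ * ‖vx‖ ^ 2) :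
    ⟪y 1 - y 0, S (y 1 - y 0)⟫ + ⟪y 1 - y 0, SigY (y 1 - y 0)⟫
        + β * ‖LinearMap.adjoint A (y 1 - y 0)‖ ^ 2
      ≤ (⨅ w : {w : Y × Z × X // KKT w},
      Real.sqrt (H1sq (w.1.1 - y 0) (w.1.2.1 - z 0) (w.1.2.2 - x 0))) ^ 2 := by

  classical
  haveI hNE : Nonempty {w : Y × Z × X // KKT w} := ⟨⟨hne.choose, hne.choose_spec⟩⟩
  set d : Y := y 1 - y 0 with hd
  have hL0 : 0 ≤ ⟪d, S d⟫ + ⟪d, SigY d⟫ + β * ‖LinearMap.adjoint A d‖ ^ 2 := by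
    have h1 := hSpsd d
    have h2 := hSigYpsd d
    rw [real_inner_comm] at h1 h2
    have h3 : 0 ≤ β * ‖LinearMap.adjoint A d‖ ^ 2 :=
      mul_nonneg hβ.le (sq_nonneg _)
    linarith
  have hkey : ∀ w : Y × Z × X, KKT w →
      ⟪d, S d⟫ + ⟪d, SigY d⟫ + β * ‖LinearMap.adjoint A d‖ ^ 2
        ≤ H1sq (w.1 - y 0) (w.2.1 - z 0) (w.2.2 - x 0) := by
    rintro ⟨yb, zb, xb⟩ hw
    rw [hKKT] at hw
    obtain ⟨hky, hkz, hc⟩ := hw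
    simp only at hky hkz hc ⊢
    set u : Y := y 1 - yb with hu
    set e : Y := yb - y 0 with he
    set a : X := LinearMap.adjoint A u with ha
    set f : X := LinearMap.adjoint A e with hf
    set p : X := xb - x 0 with hp
    set q : X := LinearMap.adjoint B (zb - z 0) with hq
    have hdue : d = u + e := by rw [hd, hu, he]; abel
    have hA0 : -(A (x 0)) - β • A (LinearMap.adjoint A (y 1) + LinearMap.adjoint B (z 0) - c)
        - S (y 1 - y 0) ∈ subdiff ϑf (y 1) := hADMMy 0
    have hmono := hSigYmono (y 1) yb _ (-(A xb)) hA0 hky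
    have hξ : (-(A (x 0)) - β • A (LinearMap.adjoint A (y 1) + LinearMap.adjoint B (z 0) - c)
        - S (y 1 - y 0)) - -(A xb) = A p - β • A (a - q) - S d := by
      rw [← hc, hp, ha, hq, hu, ← hd]
      simp only [map_sub, map_add, smul_sub, smul_add]
      abel
    rw [hξ] at hmono
    have e1 : ⟪A p, u⟫ = ⟪p, a⟫ := (LinearMap.adjoint_inner_right A p u).symm
    have e2 : ⟪A (a - q), u⟫ = ⟪a, a⟫ - ⟪q, a⟫ := by
      rw [(LinearMap.adjoint_inner_right A (a - q) u).symm, ← ha, inner_sub_left]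
    have hstar : ⟪u, SigY u⟫ + ⟪S d, u⟫ + β * ⟪a, a⟫ ≤ ⟪p, a⟫ + β * ⟪q, a⟫ := by
      have hexp : ⟪A p - β • A (a - q) - S d, u⟫
          = ⟪p, a⟫ - β * (⟪a, a⟫ - ⟪q, a⟫) - ⟪S d, u⟫ := by
        rw [inner_sub_left, inner_sub_left, real_inner_smul_left, e1, e2]
      rw [hexp] at hmono
      linarith
    -- expand quadratic forms
    have gS : ⟪d, S d⟫ = ⟪u, S u⟫ + 2 * ⟪S u, e⟫ + ⟪e, S e⟫ := by
      rw [hdue, map_add, inner_add_left, inner_add_right, inner_add_right]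
      linarith [real_inner_comm e (S u), hSsym u e]
    have gSig : ⟪d, SigY d⟫ = ⟪u, SigY u⟫ + 2 * ⟪SigY u, e⟫ + ⟪e, SigY e⟫ := by
      rw [hdue, map_add, inner_add_left, inner_add_right, inner_add_right]
      linarith [real_inner_comm e (SigY u), hSigYsym u e]
    have gA : ‖LinearMap.adjoint A d‖ ^ 2 = ⟪a, a⟫ + 2 * ⟪a, f⟫ + ⟪f, f⟫ := by
      rw [← real_inner_self_eq_norm_sq, hdue, map_add, ← ha, ← hf,
        inner_add_left, inner_add_right, inner_add_right]
      linarith [real_inner_comm f a]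
    have gSdu : ⟪S d, u⟫ = ⟪u, S u⟫ + ⟪S u, e⟫ := by
      rw [hdue, map_add, inner_add_left]
      linarith [hSsym e u, real_inner_comm e (S u), real_inner_comm (S u) u]
    have gF : ‖LinearMap.adjoint A e‖ ^ 2 = ⟪f, f⟫ := by
      rw [← real_inner_self_eq_norm_sq, hf]
    -- positivity facts
    have c2 : 0 ≤ ⟪u, SigY u⟫ - 2 * ⟪SigY u, e⟫ + ⟪e, SigY e⟫ := by
      have h := hSigYpsd (u - e)
      simp only [map_sub, inner_sub_left, inner_sub_right] at h
      linarith [hSigYsym e u, real_inner_comm e (SigY u), real_inner_comm (SigY u) u,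
        real_inner_comm (SigY e) e]
    have c3 : 0 ≤ β * (⟪a, a⟫ - 4 * ⟪a, f⟫ + 4 * ⟪f, f⟫) := by
      apply mul_nonneg hβ.le
      have h := real_inner_self_nonneg (x := a - (2:ℝ) • f)
      simp only [inner_sub_left, inner_sub_right, real_inner_smul_left,
        real_inner_smul_right] at h
      linarith [real_inner_comm f a]
    have c4 : 2 * ⟪p, a⟫ ≤ 4 * β⁻¹ * ‖p‖ ^ 2 + (β / 4) * ⟪a, a⟫ := by
      have h : 0 ≤ 16 * ‖p‖ ^ 2 - 8 * β * ⟪p, a⟫ + β ^ 2 * ⟪a, a⟫ := by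
        have h0 := real_inner_self_nonneg (x := (4:ℝ) • p - β • a)
        simp only [inner_sub_left, inner_sub_right, real_inner_smul_left,
          real_inner_smul_right] at h0
        rw [real_inner_comm p a, real_inner_self_eq_norm_sq] at h0
        nlinarith [h0]
      have h2 : 2 * ⟪p, a⟫ ≤ (16 * ‖p‖ ^ 2 + β ^ 2 * ⟪a, a⟫) / (4 * β) := by
        rw [le_div_iff₀ (by positivity)]
        nlinarith [h]
      have h3 : (16 * ‖p‖ ^ 2 + β ^ 2 * ⟪a, a⟫) / (4 * β)
          = 4 * β⁻¹ * ‖p‖ ^ 2 + (β / 4) * ⟪a, a⟫ := by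
        field_simp
        ring
      linarith [h2, h3.le, h3.ge]
    have c5 : 2 * (β * ⟪q, a⟫) ≤ 4 * β * ‖q‖ ^ 2 + (β / 4) * ⟪a, a⟫ := by
      have h0 := real_inner_self_nonneg (x := (4:ℝ) • q - a)
      simp only [inner_sub_left, inner_sub_right, real_inner_smul_left,
        real_inner_smul_right] at h0
      rw [real_inner_comm q a, real_inner_self_eq_norm_sq] at h0
      nlinarith [mul_nonneg hβ.le h0]
    have nsuu : 0 ≤ ⟪u, S u⟫ := by rw [real_inner_comm]; exact hSpsd u
    have nsee : 0 ≤ ⟪e, S e⟫ := by rw [real_inner_comm]; exact hSpsd e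
    have nseeS : 0 ≤ ⟪e, SigY e⟫ := by rw [real_inner_comm]; exact hSigYpsd e
    have nff : 0 ≤ β * ⟪f, f⟫ := mul_nonneg hβ.le real_inner_self_nonneg
    have nnp : 0 ≤ β⁻¹ * ‖p‖ ^ 2 := mul_nonneg (inv_nonneg.mpr hβ.le) (sq_nonneg _)
    have nnq : 0 ≤ β * ‖q‖ ^ 2 := mul_nonneg hβ.le (sq_nonneg _)
    rw [hH1, gS, gSig, gA, gF]
    rw [gSdu] at hstar
    nlinarith [hstar, c2, c3, c4, c5, nsuu, nsee, nseeS, nff, nnp, nnq]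
  have hsq : Real.sqrt (⟪d, S d⟫ + ⟪d, SigY d⟫ + β * ‖LinearMap.adjoint A d‖ ^ 2)
      ≤ ⨅ w : {w : Y × Z × X // KKT w},
        Real.sqrt (H1sq (w.1.1 - y 0) (w.1.2.1 - z 0) (w.1.2.2 - x 0)) :=
    le_ciInf fun w => Real.sqrt_le_sqrt (hkey w.1 w.2)
  calc ⟪d, S d⟫ + ⟪d, SigY d⟫ + β * ‖LinearMap.adjoint A d‖ ^ 2
      = Real.sqrt (⟪d, S d⟫ + ⟪d, SigY d⟫ + β * ‖LinearMap.adjoint A d‖ ^ 2) ^ 2 :=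
        (Real.sq_sqrt hL0).symm
    _ ≤ _ ^ 2 := pow_le_pow_left₀ (Real.sqrt_nonneg _) hsq 2
end
end

section
/- Let (y^k, z^k, x^k)_{k≥0} be an sPADMM sequence with τ > 0, and assume T^{-1}(0) is nonempty. Then ‖z^1 − z^0‖²_{T₀ + βBB* + Σ_{φg}} ≤ dist²_{H₂}(w^0, T^{-1}(0)), where H₂ := Diag(28(S + Σ_{ϑf} + 5βAA*), 2(T₀ + Σ_{φg} + 53βBB*), 105β^{-1}I). -/
open scoped RealInnerProductSpace

noncomputable section

section AuxHSZ

open scoped RealInnerProductSpace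


private lemma young_aux (β s E A : ℝ) (hβ : 0 < β) (hE : 0 ≤ E) (hA : 0 ≤ A)
    (h : s * s ≤ E * A) : -s ≤ β / 4 * A + β⁻¹ * E := by
  set t := Real.sqrt A with htdef
  set u := Real.sqrt E with hudef
  have ht2 : t ^ 2 = A := Real.sq_sqrt hA
  have hu2 : u ^ 2 = E := Real.sq_sqrt hE
  have htn : 0 ≤ t := Real.sqrt_nonneg A
  have hun : 0 ≤ u := Real.sqrt_nonneg E
  have h' : s * s ≤ (u * t) * (u * t) := by nlinarith [h, ht2, hu2]
  have hs : -s ≤ u * t := by nlinarith [h', mul_nonneg hun htn]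
  have key : u * t ≤ β / 4 * t ^ 2 + β⁻¹ * u ^ 2 := by
    have h2 : 0 ≤ β⁻¹ * (β / 2 * t - u) ^ 2 := by positivity
    have h3 : β⁻¹ * (β / 2 * t - u) ^ 2 = β / 4 * t ^ 2 - u * t + β⁻¹ * u ^ 2 := by
      field_simp
      ring
    linarith
  have hfin : β / 4 * t ^ 2 + β⁻¹ * u ^ 2 = β / 4 * A + β⁻¹ * E := by rw [ht2, hu2]
  linarith

private lemma young1 (s E A : ℝ) (hE : 0 ≤ E) (hA : 0 ≤ A) (h : s * s ≤ E * A) :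
    s ≤ 1/4 * A + E := by
  have h2 := young_aux 1 (-s) E A one_pos hE hA (by nlinarith)
  norm_num at h2
  linarith

private lemma expand_sym {Z : Type*} [NormedAddCommGroup Z] [InnerProductSpace ℝ Z]
    (T : Z →ₗ[ℝ] Z) (hT : LinearMap.IsSymmetric T) (p q : Z) :
    ⟪p + q, T (p + q)⟫ = ⟪T p, p⟫ + 2 * ⟪T q, p⟫ + ⟪T q, q⟫ := by
  have h1 : ⟪p, T q⟫ = ⟪T q, p⟫ := real_inner_comm _ _
  have h2 : ⟪q, T p⟫ = ⟪T q, p⟫ := by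
    rw [← hT q p]
  have h3 : ⟪p, T p⟫ = ⟪T p, p⟫ := real_inner_comm _ _
  have h4 : ⟪q, T q⟫ = ⟪T q, q⟫ := real_inner_comm _ _
  simp only [map_add, inner_add_left, inner_add_right]
  rw [h1, h2, h3, h4]; ring

private lemma psd_mix {Z : Type*} [NormedAddCommGroup Z] [InnerProductSpace ℝ Z]
    (T : Z →ₗ[ℝ] Z) (hT : LinearMap.IsSymmetric T) (hpsd : ∀ w, 0 ≤ ⟪T w, w⟫) (p q : Z) :
    0 ≤ ⟪T p, p⟫ + ⟪T q, p⟫ + 1/4 * ⟪T q, q⟫ := by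
  have h := hpsd (p + (1/2 : ℝ) • q)
  have hqp : ⟪T p, q⟫ = ⟪T q, p⟫ := by
    rw [hT p q]; exact real_inner_comm _ _
  simp only [map_add, map_smul, inner_add_left, inner_add_right, real_inner_smul_left,
    real_inner_smul_right, smul_eq_mul] at h
  rw [hqp] at h
  linarith

private lemma psd_diff {Z : Type*} [NormedAddCommGroup Z] [InnerProductSpace ℝ Z]
    (T : Z →ₗ[ℝ] Z) (hT : LinearMap.IsSymmetric T) (hpsd : ∀ w, 0 ≤ ⟪T w, w⟫) (p q : Z) :
    0 ≤ ⟪T p, p⟫ - 2 * ⟪T q, p⟫ + ⟪T q, q⟫ := by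
  have h := hpsd (p - q)
  have hqp : ⟪T p, q⟫ = ⟪T q, p⟫ := by
    rw [hT p q]; exact real_inner_comm _ _
  simp only [map_sub, inner_sub_left, inner_sub_right] at h
  rw [hqp] at h
  linarith

end AuxHSZ

set_option maxHeartbeats 1000000 in
theorem sPADMM_first_step_z_bound
    {Y Z X : Type*}
    [NormedAddCommGroup Y] [InnerProductSpace ℝ Y] [FiniteDimensional ℝ Y]
    [NormedAddCommGroup Z] [InnerProductSpace ℝ Z] [FiniteDimensional ℝ Z]
    [NormedAddCommGroup X] [InnerProductSpace ℝ X] [FiniteDimensional ℝ X]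
    (ϑf : Y → EReal) (φg : Z → EReal)
    (hϑbot : ∀ v, ϑf v ≠ ⊥) (hϑproper : ∃ v, ϑf v ≠ ⊤)
    (hϑlsc : LowerSemicontinuous ϑf)
    (hϑconvex : ∀ (v v' : Y) (a b : ℝ), 0 ≤ a → 0 ≤ b → a + b = 1 →
      ϑf (a • v + b • v') ≤ (a : EReal) * ϑf v + (b : EReal) * ϑf v')
    (hφbot : ∀ v, φg v ≠ ⊥) (hφproper : ∃ v, φg v ≠ ⊤)
    (hφlsc : LowerSemicontinuous φg)
    (hφconvex : ∀ (v v' : Z) (a b : ℝ), 0 ≤ a → 0 ≤ b → a + b = 1 →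
      φg (a • v + b • v') ≤ (a : EReal) * φg v + (b : EReal) * φg v')
    (A : X →ₗ[ℝ] Y) (B : X →ₗ[ℝ] Z) (c : X)
    (β τ : ℝ) (hβ : 0 < β) (hτ : 0 < τ)
    (S : Y →ₗ[ℝ] Y) (hSsym : LinearMap.IsSymmetric S) (hSpsd : ∀ v, 0 ≤ ⟪S v, v⟫)
    (T₀ : Z →ₗ[ℝ] Z) (hTsym : LinearMap.IsSymmetric T₀) (hTpsd : ∀ v, 0 ≤ ⟪T₀ v, v⟫)
    (SigY : Y →ₗ[ℝ] Y) (hSigYsym : LinearMap.IsSymmetric SigY)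
    (hSigYpsd : ∀ v, 0 ≤ ⟪SigY v, v⟫)
    (hSigYmono : ∀ (y₁ y₂ ξ₁ ξ₂ : Y), ξ₁ ∈ subdiff ϑf y₁ → ξ₂ ∈ subdiff ϑf y₂ →
      ⟪y₁ - y₂, SigY (y₁ - y₂)⟫ ≤ ⟪ξ₁ - ξ₂, y₁ - y₂⟫)
    (SigZ : Z →ₗ[ℝ] Z) (hSigZsym : LinearMap.IsSymmetric SigZ)
    (hSigZpsd : ∀ v, 0 ≤ ⟪SigZ v, v⟫)
    (hSigZmono : ∀ (z₁ z₂ η₁ η₂ : Z), η₁ ∈ subdiff φg z₁ → η₂ ∈ subdiff φg z₂ →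
      ⟪z₁ - z₂, SigZ (z₁ - z₂)⟫ ≤ ⟪η₁ - η₂, z₁ - z₂⟫)
    (y : ℕ → Y) (z : ℕ → Z) (x : ℕ → X)
    (hADMMy : ∀ k : ℕ,
      -(A (x k)) - β • A (LinearMap.adjoint A (y (k+1)) + LinearMap.adjoint B (z k) - c)
        - S (y (k+1) - y k) ∈ subdiff ϑf (y (k+1)))
    (hADMMz : ∀ k : ℕ,
      -(B (x k)) - β • B (LinearMap.adjoint A (y (k+1)) + LinearMap.adjoint B (z (k+1)) - c)
        - T₀ (z (k+1) - z k) ∈ subdiff φg (z (k+1)))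
    (hADMMx : ∀ k : ℕ,
      x (k+1) = x k + (τ * β) • (LinearMap.adjoint A (y (k+1)) + LinearMap.adjoint B (z (k+1)) - c))
    (KKT : Y × Z × X → Prop)
    (hKKT : ∀ w : Y × Z × X, KKT w ↔
      (-(A w.2.2) ∈ subdiff ϑf w.1 ∧ -(B w.2.2) ∈ subdiff φg w.2.1 ∧
        LinearMap.adjoint A w.1 + LinearMap.adjoint B w.2.1 = c))
    (hne : ∃ w, KKT w)
    (H2sq : Y → Z → X → ℝ)
    (hH2 : ∀ (vy : Y) (vz : Z) (vx : X), H2sq vy vz vx =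
      28 * (⟪vy, S vy⟫ + ⟪vy, SigY vy⟫ + 5 * β * ‖LinearMap.adjoint A vy‖ ^ 2)
        + 2 * (⟪vz, T₀ vz⟫ + ⟪vz, SigZ vz⟫ + 53 * β * ‖LinearMap.adjoint B vz‖ ^ 2)
        + 105 * β⁻¹ * ‖vx‖ ^ 2) :
    ⟪z 1 - z 0, T₀ (z 1 - z 0)⟫ + β * ‖LinearMap.adjoint B (z 1 - z 0)‖ ^ 2
        + ⟪z 1 - z 0, SigZ (z 1 - z 0)⟫
      ≤ (⨅ w : {w : Y × Z × X // KKT w},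
      Real.sqrt (H2sq (w.1.1 - y 0) (w.1.2.1 - z 0) (w.1.2.2 - x 0))) ^ 2 := by
  -- extract KKT components
  obtain ⟨w₀, hw₀⟩ := hne
  have key : ∀ ybar zbar xbar, KKT (ybar, zbar, xbar) →
      ⟪z 1 - z 0, T₀ (z 1 - z 0)⟫ + β * ‖LinearMap.adjoint B (z 1 - z 0)‖ ^ 2
        + ⟪z 1 - z 0, SigZ (z 1 - z 0)⟫
      ≤ H2sq (ybar - y 0) (zbar - z 0) (xbar - x 0) := by
    intro ybar zbar xbar hw
    obtain ⟨hwy', hwz', hwc'⟩ := (hKKT (ybar, zbar, xbar)).mp hw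
    have hwy : -(A xbar) ∈ subdiff ϑf ybar := hwy'
    have hwz : -(B xbar) ∈ subdiff φg zbar := hwz'
    have hc : LinearMap.adjoint A ybar + LinearMap.adjoint B zbar = c := hwc'
    have hAD1 := hADMMy 0
    have hAD2 := hADMMz 0
    simp only [zero_add] at hAD1 hAD2
    have h1 := hSigYmono (y 1) ybar _ _ hAD1 hwy
    have h2 := hSigZmono (z 1) zbar _ _ hAD2 hwz
    have id1 : ⟪(-(A (x 0)) - β • A (LinearMap.adjoint A (y 1) + LinearMap.adjoint B (z 0) - c)
          - S (y 1 - y 0)) - -(A xbar), y 1 - ybar⟫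
        = -⟪(x 0 - xbar), (LinearMap.adjoint A (y 1 - ybar))⟫ - β * ⟪(LinearMap.adjoint A (y 1 - ybar)), (LinearMap.adjoint A (y 1 - ybar))⟫ + β * ⟪(LinearMap.adjoint B (zbar - z 0)), (LinearMap.adjoint A (y 1 - ybar))⟫ - ⟪S (y 1 - ybar), (y 1 - ybar)⟫ - ⟪S (ybar - y 0), (y 1 - ybar)⟫ := by
      rw [← hc]
      simp only [map_sub, map_add, map_neg, inner_sub_left, inner_add_left, inner_neg_left,
        real_inner_smul_left, inner_sub_right, inner_add_right, inner_neg_right,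
        LinearMap.adjoint_inner_right]
      ring
    have id2 : ⟪(-(B (x 0)) - β • B (LinearMap.adjoint A (y 1) + LinearMap.adjoint B (z 1) - c)
          - T₀ (z 1 - z 0)) - -(B xbar), z 1 - zbar⟫
        = -⟪(x 0 - xbar), (LinearMap.adjoint B (z 1 - zbar))⟫ - β * ⟪(LinearMap.adjoint A (y 1 - ybar)), (LinearMap.adjoint B (z 1 - zbar))⟫ - β * ⟪(LinearMap.adjoint B (z 1 - zbar)), (LinearMap.adjoint B (z 1 - zbar))⟫ - ⟪T₀ (z 1 - zbar), (z 1 - zbar)⟫ - ⟪T₀ (zbar - z 0), (z 1 - zbar)⟫ := by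
      rw [← hc]
      simp only [map_sub, map_add, map_neg, inner_sub_left, inner_add_left, inner_neg_left,
        real_inner_smul_left, inner_sub_right, inner_add_right, inner_neg_right,
        LinearMap.adjoint_inner_right]
      ring
    rw [id1] at h1
    rw [id2] at h2
    -- Cauchy–Schwarz / Young facts
    have yeA : -⟪(x 0 - xbar), (LinearMap.adjoint A (y 1 - ybar))⟫ ≤ β/4 * ⟪(LinearMap.adjoint A (y 1 - ybar)), (LinearMap.adjoint A (y 1 - ybar))⟫ + β⁻¹ * ⟪(x 0 - xbar), (x 0 - xbar)⟫ :=
      young_aux β _ _ _ hβ real_inner_self_nonneg real_inner_self_nonneg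
        (real_inner_mul_inner_self_le (x 0 - xbar) (LinearMap.adjoint A (y 1 - ybar)))
    have yeB : -⟪(x 0 - xbar), (LinearMap.adjoint B (z 1 - zbar))⟫ ≤ β/4 * ⟪(LinearMap.adjoint B (z 1 - zbar)), (LinearMap.adjoint B (z 1 - zbar))⟫ + β⁻¹ * ⟪(x 0 - xbar), (x 0 - xbar)⟫ :=
      young_aux β _ _ _ hβ real_inner_self_nonneg real_inner_self_nonneg
        (real_inner_mul_inner_self_le (x 0 - xbar) (LinearMap.adjoint B (z 1 - zbar)))
    have yrA : ⟪(LinearMap.adjoint B (zbar - z 0)), (LinearMap.adjoint A (y 1 - ybar))⟫ ≤ 1/4 * ⟪(LinearMap.adjoint A (y 1 - ybar)), (LinearMap.adjoint A (y 1 - ybar))⟫ + ⟪(LinearMap.adjoint B (zbar - z 0)), (LinearMap.adjoint B (zbar - z 0))⟫ :=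
      young1 _ _ _ real_inner_self_nonneg real_inner_self_nonneg
        (real_inner_mul_inner_self_le (LinearMap.adjoint B (zbar - z 0)) (LinearMap.adjoint A (y 1 - ybar)))
    have yaB : -⟪(LinearMap.adjoint A (y 1 - ybar)), (LinearMap.adjoint B (z 1 - zbar))⟫ ≤ 1/4 * ⟪(LinearMap.adjoint B (z 1 - zbar)), (LinearMap.adjoint B (z 1 - zbar))⟫ + ⟪(LinearMap.adjoint A (y 1 - ybar)), (LinearMap.adjoint A (y 1 - ybar))⟫ := by
      have h := young1 (-⟪(LinearMap.adjoint A (y 1 - ybar)), (LinearMap.adjoint B (z 1 - zbar))⟫) ⟪(LinearMap.adjoint A (y 1 - ybar)), (LinearMap.adjoint A (y 1 - ybar))⟫ ⟪(LinearMap.adjoint B (z 1 - zbar)), (LinearMap.adjoint B (z 1 - zbar))⟫ real_inner_self_nonneg real_inner_self_nonneg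
        (by rw [neg_mul_neg]; exact real_inner_mul_inner_self_le (LinearMap.adjoint A (y 1 - ybar)) (LinearMap.adjoint B (z 1 - zbar)))
      linarith
    have hβrA : β * ⟪(LinearMap.adjoint B (zbar - z 0)), (LinearMap.adjoint A (y 1 - ybar))⟫ ≤ β * (1/4 * ⟪(LinearMap.adjoint A (y 1 - ybar)), (LinearMap.adjoint A (y 1 - ybar))⟫ + ⟪(LinearMap.adjoint B (zbar - z 0)), (LinearMap.adjoint B (zbar - z 0))⟫) :=
      mul_le_mul_of_nonneg_left yrA hβ.le
    have hβaB : β * -⟪(LinearMap.adjoint A (y 1 - ybar)), (LinearMap.adjoint B (z 1 - zbar))⟫ ≤ β * (1/4 * ⟪(LinearMap.adjoint B (z 1 - zbar)), (LinearMap.adjoint B (z 1 - zbar))⟫ + ⟪(LinearMap.adjoint A (y 1 - ybar)), (LinearMap.adjoint A (y 1 - ybar))⟫) :=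
      mul_le_mul_of_nonneg_left yaB hβ.le
    have hbr0 : (0:ℝ) ≤ ⟪(LinearMap.adjoint B (z 1 - zbar)), (LinearMap.adjoint B (z 1 - zbar))⟫ - 2 * ⟪(LinearMap.adjoint B (z 1 - zbar)), (LinearMap.adjoint B (zbar - z 0))⟫ + ⟪(LinearMap.adjoint B (zbar - z 0)), (LinearMap.adjoint B (zbar - z 0))⟫ := by
      have h : (0:ℝ) ≤ ⟪(LinearMap.adjoint B (z 1 - zbar)) - (LinearMap.adjoint B (zbar - z 0)), (LinearMap.adjoint B (z 1 - zbar)) - (LinearMap.adjoint B (zbar - z 0))⟫ := real_inner_self_nonneg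
      rw [real_inner_sub_sub_self] at h
      linarith
    have hβbr : 0 ≤ β * (⟪(LinearMap.adjoint B (z 1 - zbar)), (LinearMap.adjoint B (z 1 - zbar))⟫ - 2 * ⟪(LinearMap.adjoint B (z 1 - zbar)), (LinearMap.adjoint B (zbar - z 0))⟫ + ⟪(LinearMap.adjoint B (zbar - z 0)), (LinearMap.adjoint B (zbar - z 0))⟫) :=
      mul_nonneg hβ.le hbr0
    -- psd quadratic facts
    have pS : 0 ≤ ⟪S (y 1 - ybar), (y 1 - ybar)⟫ + ⟪S (ybar - y 0), (y 1 - ybar)⟫ + 1/4 * ⟪S (ybar - y 0), (ybar - y 0)⟫ := psd_mix S hSsym hSpsd (y 1 - ybar) (ybar - y 0)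
    have pT : 0 ≤ ⟪T₀ (z 1 - zbar), (z 1 - zbar)⟫ + ⟪T₀ (zbar - z 0), (z 1 - zbar)⟫ + 1/4 * ⟪T₀ (zbar - z 0), (zbar - z 0)⟫ := psd_mix T₀ hTsym hTpsd (z 1 - zbar) (zbar - z 0)
    have pZ : 0 ≤ ⟪SigZ (z 1 - zbar), (z 1 - zbar)⟫ - 2 * ⟪SigZ (zbar - z 0), (z 1 - zbar)⟫ + ⟪SigZ (zbar - z 0), (zbar - z 0)⟫ := psd_diff SigZ hSigZsym hSigZpsd (z 1 - zbar) (zbar - z 0)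
    have hσu : 0 ≤ ⟪y 1 - ybar, SigY (y 1 - ybar)⟫ := by
      rw [real_inner_comm]; exact hSigYpsd _
    have hσv : 0 ≤ ⟪z 1 - zbar, SigZ (z 1 - zbar)⟫ := by
      rw [real_inner_comm]; exact hSigZpsd _
    have hcv : ⟪z 1 - zbar, SigZ (z 1 - zbar)⟫ = ⟪SigZ (z 1 - zbar), (z 1 - zbar)⟫ := real_inner_comm _ _
    have htvn : 0 ≤ ⟪T₀ (z 1 - zbar), (z 1 - zbar)⟫ := hTpsd _
    -- step I1
    have I1 : β * ⟪(LinearMap.adjoint A (y 1 - ybar)), (LinearMap.adjoint A (y 1 - ybar))⟫ ≤ 2 * β⁻¹ * ⟪(x 0 - xbar), (x 0 - xbar)⟫ + 2 * β * ⟪(LinearMap.adjoint B (zbar - z 0)), (LinearMap.adjoint B (zbar - z 0))⟫ + 1/2 * ⟪S (ybar - y 0), (ybar - y 0)⟫ := by linarith [h1, yeA, hβrA, pS, hσu]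
    -- step D
    have hD : β * ⟪(LinearMap.adjoint B (z 1 - zbar)), (LinearMap.adjoint B (z 1 - zbar))⟫ ≤ -⟪(x 0 - xbar), (LinearMap.adjoint B (z 1 - zbar))⟫ - β * ⟪(LinearMap.adjoint A (y 1 - ybar)), (LinearMap.adjoint B (z 1 - zbar))⟫ + 1/4 * ⟪T₀ (zbar - z 0), (zbar - z 0)⟫ := by linarith [h2, pT, hσv, hcv]
    -- step E
    have hE : -⟪(x 0 - xbar), (LinearMap.adjoint B (z 1 - zbar))⟫ - β * ⟪(LinearMap.adjoint A (y 1 - ybar)), (LinearMap.adjoint B (z 1 - zbar))⟫ ≤ 1/4 * ⟪T₀ (zbar - z 0), (zbar - z 0)⟫ + 2 * β⁻¹ * ⟪(x 0 - xbar), (x 0 - xbar)⟫ + 2 * β * ⟪(LinearMap.adjoint A (y 1 - ybar)), (LinearMap.adjoint A (y 1 - ybar))⟫ := by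
      linarith [hD, yeB, hβaB]
    -- main inequality on expanded goal
    have GF : (⟪T₀ (z 1 - zbar), (z 1 - zbar)⟫ + 2 * ⟪T₀ (zbar - z 0), (z 1 - zbar)⟫ + ⟪T₀ (zbar - z 0), (zbar - z 0)⟫) + β * (⟪(LinearMap.adjoint B (z 1 - zbar)), (LinearMap.adjoint B (z 1 - zbar))⟫ + 2 * ⟪(LinearMap.adjoint B (z 1 - zbar)), (LinearMap.adjoint B (zbar - z 0))⟫ + ⟪(LinearMap.adjoint B (zbar - z 0)), (LinearMap.adjoint B (zbar - z 0))⟫)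
        + (⟪SigZ (z 1 - zbar), (z 1 - zbar)⟫ + 2 * ⟪SigZ (zbar - z 0), (z 1 - zbar)⟫ + ⟪SigZ (zbar - z 0), (zbar - z 0)⟫)
        ≤ 2 * ⟪S (ybar - y 0), (ybar - y 0)⟫ + 3/2 * ⟪T₀ (zbar - z 0), (zbar - z 0)⟫ + 2 * ⟪SigZ (zbar - z 0), (zbar - z 0)⟫ + 10 * (β * ⟪(LinearMap.adjoint B (zbar - z 0)), (LinearMap.adjoint B (zbar - z 0))⟫) + 12 * (β⁻¹ * ⟪(x 0 - xbar), (x 0 - xbar)⟫) := by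
      linarith [h2, hE, I1, pZ, hβbr, htvn, hcv]
    -- identify the goal LHS
    have hdz : z 1 - z 0 = (z 1 - zbar) + (zbar - z 0) := by abel
    have idL : ⟪z 1 - z 0, T₀ (z 1 - z 0)⟫ + β * ‖LinearMap.adjoint B (z 1 - z 0)‖ ^ 2
          + ⟪z 1 - z 0, SigZ (z 1 - z 0)⟫
        = (⟪T₀ (z 1 - zbar), (z 1 - zbar)⟫ + 2 * ⟪T₀ (zbar - z 0), (z 1 - zbar)⟫ + ⟪T₀ (zbar - z 0), (zbar - z 0)⟫) + β * (⟪(LinearMap.adjoint B (z 1 - zbar)), (LinearMap.adjoint B (z 1 - zbar))⟫ + 2 * ⟪(LinearMap.adjoint B (z 1 - zbar)), (LinearMap.adjoint B (zbar - z 0))⟫ + ⟪(LinearMap.adjoint B (zbar - z 0)), (LinearMap.adjoint B (zbar - z 0))⟫)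
          + (⟪SigZ (z 1 - zbar), (z 1 - zbar)⟫ + 2 * ⟪SigZ (zbar - z 0), (z 1 - zbar)⟫ + ⟪SigZ (zbar - z 0), (zbar - z 0)⟫) := by
      rw [hdz, expand_sym T₀ hTsym, expand_sym SigZ hSigZsym]
      have hb2 : ‖LinearMap.adjoint B ((z 1 - zbar) + (zbar - z 0))‖ ^ 2 = ⟪(LinearMap.adjoint B (z 1 - zbar)), (LinearMap.adjoint B (z 1 - zbar))⟫ + 2 * ⟪(LinearMap.adjoint B (z 1 - zbar)), (LinearMap.adjoint B (zbar - z 0))⟫ + ⟪(LinearMap.adjoint B (zbar - z 0)), (LinearMap.adjoint B (zbar - z 0))⟫ := by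
        rw [← real_inner_self_eq_norm_sq, map_add, real_inner_add_add_self]
      rw [hb2]
    rw [idL, hH2]
    -- remaining conversions and slack
    have c1 : ⟪ybar - y 0, S (ybar - y 0)⟫ = ⟪S (ybar - y 0), (ybar - y 0)⟫ := real_inner_comm _ _
    have c2 : ⟪zbar - z 0, T₀ (zbar - z 0)⟫ = ⟪T₀ (zbar - z 0), (zbar - z 0)⟫ := real_inner_comm _ _
    have c3 : ⟪zbar - z 0, SigZ (zbar - z 0)⟫ = ⟪SigZ (zbar - z 0), (zbar - z 0)⟫ := real_inner_comm _ _
    have c4 : β * ‖LinearMap.adjoint B (zbar - z 0)‖ ^ 2 = β * ⟪(LinearMap.adjoint B (zbar - z 0)), (LinearMap.adjoint B (zbar - z 0))⟫ := by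
      rw [← real_inner_self_eq_norm_sq]
    have c5 : β⁻¹ * ‖xbar - x 0‖ ^ 2 = β⁻¹ * ⟪(x 0 - xbar), (x 0 - xbar)⟫ := by
      rw [← real_inner_self_eq_norm_sq, ← neg_sub (x 0) xbar, inner_neg_neg]
    have n1 : 0 ≤ ⟪ybar - y 0, SigY (ybar - y 0)⟫ := by
      rw [real_inner_comm]; exact hSigYpsd _
    have n2 : 0 ≤ β * ‖LinearMap.adjoint A (ybar - y 0)‖ ^ 2 := by positivity
    have n3 : 0 ≤ ⟪S (ybar - y 0), (ybar - y 0)⟫ := hSpsd _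
    have n4 : 0 ≤ ⟪T₀ (zbar - z 0), (zbar - z 0)⟫ := hTpsd _
    have n5 : 0 ≤ ⟪SigZ (zbar - z 0), (zbar - z 0)⟫ := hSigZpsd _
    have n6 : 0 ≤ β * ⟪(LinearMap.adjoint B (zbar - z 0)), (LinearMap.adjoint B (zbar - z 0))⟫ := mul_nonneg hβ.le real_inner_self_nonneg
    have n7 : 0 ≤ β⁻¹ * ⟪(x 0 - xbar), (x 0 - xbar)⟫ := mul_nonneg (inv_nonneg.mpr hβ.le) real_inner_self_nonneg
    linarith [GF, c1, c2, c3, c4, c5, n1, n2, n3, n4, n5, n6, n7]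
  -- finish: pass to the infimum
  have hLnn : 0 ≤ ⟪z 1 - z 0, T₀ (z 1 - z 0)⟫ + β * ‖LinearMap.adjoint B (z 1 - z 0)‖ ^ 2
      + ⟪z 1 - z 0, SigZ (z 1 - z 0)⟫ := by
    have h1t : 0 ≤ ⟪z 1 - z 0, T₀ (z 1 - z 0)⟫ := by rw [real_inner_comm]; exact hTpsd _
    have h2t : 0 ≤ ⟪z 1 - z 0, SigZ (z 1 - z 0)⟫ := by rw [real_inner_comm]; exact hSigZpsd _
    have h3t : 0 ≤ β * ‖LinearMap.adjoint B (z 1 - z 0)‖ ^ 2 := by positivity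
    linarith
  haveI : Nonempty {w : Y × Z × X // KKT w} := ⟨⟨w₀, hw₀⟩⟩
  have hsq : Real.sqrt (⟪z 1 - z 0, T₀ (z 1 - z 0)⟫ + β * ‖LinearMap.adjoint B (z 1 - z 0)‖ ^ 2
      + ⟪z 1 - z 0, SigZ (z 1 - z 0)⟫)
      ≤ ⨅ w : {w : Y × Z × X // KKT w},
        Real.sqrt (H2sq (w.1.1 - y 0) (w.1.2.1 - z 0) (w.1.2.2 - x 0)) := by
    apply le_ciInf
    intro w
    exact Real.sqrt_le_sqrt (key w.1.1 w.1.2.1 w.1.2.2 w.2)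
  calc ⟪z 1 - z 0, T₀ (z 1 - z 0)⟫ + β * ‖LinearMap.adjoint B (z 1 - z 0)‖ ^ 2
      + ⟪z 1 - z 0, SigZ (z 1 - z 0)⟫
      = Real.sqrt (⟪z 1 - z 0, T₀ (z 1 - z 0)⟫ + β * ‖LinearMap.adjoint B (z 1 - z 0)‖ ^ 2
        + ⟪z 1 - z 0, SigZ (z 1 - z 0)⟫) ^ 2 := (Real.sq_sqrt hLnn).symm
    _ ≤ _ := pow_le_pow_left₀ (Real.sqrt_nonneg _) hsq 2
end
end

section
/- Let (y^k, z^k, x^k)_{k≥0} be an sPADMM sequence with τ > 0, and assume T^{-1}(0) is nonempty. Then (τβ)^{-1}‖x^1 − x^0‖² ≤ dist²_{H₃}(w^0, T^{-1}(0)), where H₃ := 4τ·Diag(30(S + Σ_{ϑf} + 5βAA*), 2(T₀ + Σ_{φg} + 57βBB*), 112β^{-1}I). -/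
/-!
Write `r := A* y¹ + B* z¹ - c`, so that `x¹ - x⁰ = τβ r`, and fix a KKT point `(ȳ, z̄, x̄)`.
Monotonicity of `∂ϑ_f` and `∂φ_g`, tested on the first `y`- and `z`-updates against the KKT
inclusions, gives two variational inequalities. Their sum, after completing squares, yields
`β‖r‖² ≤ ‖ȳ - y⁰‖²_S + ‖z̄ - z⁰‖²_{T₀} + 2β‖B*(z̄ - z⁰)‖² + 4β⁻¹‖x̄ - x⁰‖²`,
which is dominated by `τ⁻¹ ‖w̄ - w⁰‖²_{H₃}`; it remains to take the infimum over KKT points.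
-/

open scoped RealInnerProductSpace

noncomputable section

section

variable {E X : Type*} [NormedAddCommGroup E] [InnerProductSpace ℝ E]
  [NormedAddCommGroup X] [InnerProductSpace ℝ X]

theorem LinearMap.IsSymmetric.neg_inner_le_four_mul_inner_map_add {S : E →ₗ[ℝ] E}
    (hS : S.IsSymmetric) (hpsd : ∀ v, 0 ≤ ⟪S v, v⟫) (a d : E) :
    -⟪S d, d⟫ ≤ 4 * ⟪S (a + d), a⟫ := by
  have h := hpsd ((2 : ℝ) • a + d)
  simp only [map_add, map_smul, inner_add_left, inner_add_right, real_inner_smul_left,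
    real_inner_smul_right] at h ⊢
  linarith [hS a d, real_inner_comm (S d) a]

/-- The variational inequality obtained by testing an update
`-(A p) - β A v - S q ∈ ∂f y₁` against a KKT inclusion `-(A xbar) ∈ ∂f ybar`. -/
theorem inner_map_le_of_mem_subdiff [FiniteDimensional ℝ E] [FiniteDimensional ℝ X]
    {f : E → EReal} {Sig : E →ₗ[ℝ] E} (hSig : ∀ v, 0 ≤ ⟪Sig v, v⟫)
    (hmono : ∀ y₁ y₂ ξ₁ ξ₂, ξ₁ ∈ subdiff f y₁ → ξ₂ ∈ subdiff f y₂ →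
      ⟪y₁ - y₂, Sig (y₁ - y₂)⟫ ≤ ⟪ξ₁ - ξ₂, y₁ - y₂⟫)
    (A : X →ₗ[ℝ] E) (S : E →ₗ[ℝ] E) (β : ℝ) {p v xbar : X} {q y₁ ybar : E}
    (h₁ : -(A p) - β • A v - S q ∈ subdiff f y₁) (h₂ : -(A xbar) ∈ subdiff f ybar) :
    ⟪S q, y₁ - ybar⟫ ≤ ⟪xbar - p - β • v, LinearMap.adjoint A (y₁ - ybar)⟫ := by
  have hpos : 0 ≤ ⟪y₁ - ybar, Sig (y₁ - ybar)⟫ := real_inner_comm (y₁ - ybar) _ ▸ hSig _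
  have h := hpos.trans (hmono _ _ _ _ h₁ h₂)
  have hξ : -(A p) - β • A v - S q - -(A xbar) = A (xbar - p - β • v) - S q := by
    simp only [map_sub, map_smul]; abel
  rw [hξ, inner_sub_left, ← LinearMap.adjoint_inner_right] at h
  linarith

/-- Completing squares: the difference of the two sides is
`β⁻¹‖2 dx - β r‖² + 2β‖u‖² + 2β‖r - u - e‖²`. -/
theorem mul_norm_sq_add_four_mul_inner_le {β : ℝ} (hβ : 0 < β) (r u e dx : X) :
    β * ‖r‖ ^ 2 + 4 * (⟪dx - β • (r - u - e), r - u⟫ + ⟪dx - β • r, u⟫)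
      ≤ 4 * β⁻¹ * ‖dx‖ ^ 2 + 2 * β * ‖e‖ ^ 2 := by
  have h₁ : 0 ≤ β⁻¹ * ‖(2 : ℝ) • dx - β • r‖ ^ 2 := by positivity
  have h₂ : 0 ≤ β * ‖u‖ ^ 2 := by positivity
  have h₃ : 0 ≤ β * ‖r - u - e‖ ^ 2 := by positivity
  simp only [← real_inner_self_eq_norm_sq, inner_sub_left, inner_sub_right,
    real_inner_smul_left, real_inner_smul_right] at h₁ h₂ h₃ ⊢
  have hββ : β⁻¹ * β = 1 := inv_mul_cancel₀ hβ.ne'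
  rw [real_inner_comm r dx, real_inner_comm u r, real_inner_comm e r, real_inner_comm e u,
    real_inner_comm u dx] at *
  linear_combination h₁ + 2 * h₂ + 2 * h₃ + (β * ⟪r, r⟫ - 4 * ⟪r, dx⟫) * hββ

theorem le_sq_ciInf_sqrt {ι : Sort*} [Nonempty ι] {a : ℝ} {f : ι → ℝ} (ha : 0 ≤ a)
    (h : ∀ i, a ≤ f i) : a ≤ (⨅ i, √(f i)) ^ 2 := by
  have hle : √a ≤ ⨅ i, √(f i) := le_ciInf fun i => Real.sqrt_le_sqrt (h i)
  calc a = √a ^ 2 := (Real.sq_sqrt ha).symm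
    _ ≤ _ := pow_le_pow_left₀ (Real.sqrt_nonneg a) hle 2

end

theorem sPADMM_first_residual_le {Y Z X : Type*}
    [NormedAddCommGroup Y] [InnerProductSpace ℝ Y] [FiniteDimensional ℝ Y]
    [NormedAddCommGroup Z] [InnerProductSpace ℝ Z] [FiniteDimensional ℝ Z]
    [NormedAddCommGroup X] [InnerProductSpace ℝ X] [FiniteDimensional ℝ X]
    {A : X →ₗ[ℝ] Y} {B : X →ₗ[ℝ] Z} {c : X} {β : ℝ} (hβ : 0 < β)
    {S : Y →ₗ[ℝ] Y} (hS : S.IsSymmetric) (hSpsd : ∀ v, 0 ≤ ⟪S v, v⟫)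
    {T : Z →ₗ[ℝ] Z} (hT : T.IsSymmetric) (hTpsd : ∀ v, 0 ≤ ⟪T v, v⟫)
    {y₀ y₁ ybar : Y} {z₀ z₁ zbar : Z} {x₀ xbar : X}
    (hc : LinearMap.adjoint A ybar + LinearMap.adjoint B zbar = c)
    (hy : ⟪S (y₁ - y₀), y₁ - ybar⟫ ≤ ⟪xbar - x₀ -
      β • (LinearMap.adjoint A y₁ + LinearMap.adjoint B z₀ - c), LinearMap.adjoint A (y₁ - ybar)⟫)
    (hz : ⟪T (z₁ - z₀), z₁ - zbar⟫ ≤ ⟪xbar - x₀ -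
      β • (LinearMap.adjoint A y₁ + LinearMap.adjoint B z₁ - c), LinearMap.adjoint B (z₁ - zbar)⟫) :
    β * ‖LinearMap.adjoint A y₁ + LinearMap.adjoint B z₁ - c‖ ^ 2
      ≤ ⟪ybar - y₀, S (ybar - y₀)⟫ + ⟪zbar - z₀, T (zbar - z₀)⟫
        + 2 * β * ‖LinearMap.adjoint B (zbar - z₀)‖ ^ 2 + 4 * β⁻¹ * ‖xbar - x₀‖ ^ 2 := by
  set r := LinearMap.adjoint A y₁ + LinearMap.adjoint B z₁ - c
  set u := LinearMap.adjoint B (z₁ - zbar)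
  set e := LinearMap.adjoint B (zbar - z₀)
  have hv : LinearMap.adjoint A y₁ + LinearMap.adjoint B z₀ - c = r - u - e := by
    simp only [r, u, e, map_sub]; abel
  have hAy : LinearMap.adjoint A (y₁ - ybar) = r - u := by
    simp only [r, u, map_sub, ← hc]; abel
  rw [hv, hAy] at hy
  have hSq := hS.neg_inner_le_four_mul_inner_map_add hSpsd (y₁ - ybar) (ybar - y₀)
  have hTq := hT.neg_inner_le_four_mul_inner_map_add hTpsd (z₁ - zbar) (zbar - z₀)
  rw [sub_add_sub_cancel] at hSq hTq
  linarith [mul_norm_sq_add_four_mul_inner_le hβ r u e (xbar - x₀),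
    real_inner_comm (S (ybar - y₀)) (ybar - y₀), real_inner_comm (T (zbar - z₀)) (zbar - z₀)]

theorem sPADMM_first_step_x_bound_general
    {Y Z X : Type*}
    [NormedAddCommGroup Y] [InnerProductSpace ℝ Y] [FiniteDimensional ℝ Y]
    [NormedAddCommGroup Z] [InnerProductSpace ℝ Z] [FiniteDimensional ℝ Z]
    [NormedAddCommGroup X] [InnerProductSpace ℝ X] [FiniteDimensional ℝ X]
    (ϑf : Y → EReal) (φg : Z → EReal)
    (A : X →ₗ[ℝ] Y) (B : X →ₗ[ℝ] Z) (c : X)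
    (β τ : ℝ) (hβ : 0 < β) (hτ : 0 < τ)
    (S : Y →ₗ[ℝ] Y) (hSsym : LinearMap.IsSymmetric S) (hSpsd : ∀ v, 0 ≤ ⟪S v, v⟫)
    (T₀ : Z →ₗ[ℝ] Z) (hTsym : LinearMap.IsSymmetric T₀) (hTpsd : ∀ v, 0 ≤ ⟪T₀ v, v⟫)
    (SigY : Y →ₗ[ℝ] Y)
    (hSigYpsd : ∀ v, 0 ≤ ⟪SigY v, v⟫)
    (hSigYmono : ∀ (y₁ y₂ ξ₁ ξ₂ : Y), ξ₁ ∈ subdiff ϑf y₁ → ξ₂ ∈ subdiff ϑf y₂ →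
      ⟪y₁ - y₂, SigY (y₁ - y₂)⟫ ≤ ⟪ξ₁ - ξ₂, y₁ - y₂⟫)
    (SigZ : Z →ₗ[ℝ] Z)
    (hSigZpsd : ∀ v, 0 ≤ ⟪SigZ v, v⟫)
    (hSigZmono : ∀ (z₁ z₂ η₁ η₂ : Z), η₁ ∈ subdiff φg z₁ → η₂ ∈ subdiff φg z₂ →
      ⟪z₁ - z₂, SigZ (z₁ - z₂)⟫ ≤ ⟪η₁ - η₂, z₁ - z₂⟫)
    (y : ℕ → Y) (z : ℕ → Z) (x : ℕ → X)
    (hADMMy : ∀ k : ℕ,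
      -(A (x k)) - β • A (LinearMap.adjoint A (y (k+1)) + LinearMap.adjoint B (z k) - c)
        - S (y (k+1) - y k) ∈ subdiff ϑf (y (k+1)))
    (hADMMz : ∀ k : ℕ,
      -(B (x k)) - β • B (LinearMap.adjoint A (y (k+1)) + LinearMap.adjoint B (z (k+1)) - c)
        - T₀ (z (k+1) - z k) ∈ subdiff φg (z (k+1)))
    (hADMMx : ∀ k : ℕ,
      x (k+1) = x k + (τ * β) • (LinearMap.adjoint A (y (k+1)) + LinearMap.adjoint B (z (k+1)) - c))
    (KKT : Y × Z × X → Prop)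
    (hKKT : ∀ w : Y × Z × X, KKT w ↔
      (-(A w.2.2) ∈ subdiff ϑf w.1 ∧ -(B w.2.2) ∈ subdiff φg w.2.1 ∧
        LinearMap.adjoint A w.1 + LinearMap.adjoint B w.2.1 = c))
    (hne : ∃ w, KKT w)
    (H3sq : Y → Z → X → ℝ)
    (hH3 : ∀ (vy : Y) (vz : Z) (vx : X), H3sq vy vz vx =
      4 * τ * (30 * (⟪vy, S vy⟫ + ⟪vy, SigY vy⟫ + 5 * β * ‖LinearMap.adjoint A vy‖ ^ 2)
        + 2 * (⟪vz, T₀ vz⟫ + ⟪vz, SigZ vz⟫ + 57 * β * ‖LinearMap.adjoint B vz‖ ^ 2)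
        + 112 * β⁻¹ * ‖vx‖ ^ 2)) :
    (τ * β)⁻¹ * ‖x 1 - x 0‖ ^ 2
      ≤ (⨅ w : {w : Y × Z × X // KKT w},
      Real.sqrt (H3sq (w.1.1 - y 0) (w.1.2.1 - z 0) (w.1.2.2 - x 0))) ^ 2 := by
  set r := LinearMap.adjoint A (y 1) + LinearMap.adjoint B (z 1) - c
  obtain ⟨w₀, hw₀⟩ := hne
  have : Nonempty {w : Y × Z × X // KKT w} := ⟨⟨w₀, hw₀⟩⟩
  have hlhs : (τ * β)⁻¹ * ‖x 1 - x 0‖ ^ 2 = τ * (β * ‖r‖ ^ 2) := by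
    have hx : x 1 = x 0 + (τ * β) • r := hADMMx 0
    rw [hx, add_sub_cancel_left, norm_smul, Real.norm_of_nonneg (by positivity)]
    field_simp
  rw [hlhs]
  refine le_sq_ciInf_sqrt (by positivity) fun ⟨⟨ybar, zbar, xbar⟩, hw⟩ => ?_
  obtain ⟨hy, hz, hc⟩ := (hKKT _).1 hw
  have hres := sPADMM_first_residual_le hβ hSsym hSpsd hTsym hTpsd hc
    (inner_map_le_of_mem_subdiff hSigYpsd hSigYmono A S β (hADMMy 0) hy)
    (inner_map_le_of_mem_subdiff hSigZpsd hSigZmono B T₀ β (hADMMz 0) hz)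
  have hS := hSpsd (ybar - y 0)
  have hT := hTpsd (zbar - z 0)
  have hSigY := hSigYpsd (ybar - y 0)
  have hSigZ := hSigZpsd (zbar - z 0)
  rw [real_inner_comm] at hS hT hSigY hSigZ
  rw [hH3, mul_comm 4 τ, mul_assoc]
  gcongr τ * ?_
  have hAy : 0 ≤ β * ‖LinearMap.adjoint A (ybar - y 0)‖ ^ 2 := by positivity
  have hBz : 0 ≤ β * ‖LinearMap.adjoint B (zbar - z 0)‖ ^ 2 := by positivity
  have hdx : 0 ≤ β⁻¹ * ‖xbar - x 0‖ ^ 2 := by positivity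
  linarith

theorem sPADMM_first_step_x_bound
    {Y Z X : Type*}
    [NormedAddCommGroup Y] [InnerProductSpace ℝ Y] [FiniteDimensional ℝ Y]
    [NormedAddCommGroup Z] [InnerProductSpace ℝ Z] [FiniteDimensional ℝ Z]
    [NormedAddCommGroup X] [InnerProductSpace ℝ X] [FiniteDimensional ℝ X]
    (ϑf : Y → EReal) (φg : Z → EReal)
    (hϑbot : ∀ v, ϑf v ≠ ⊥) (hϑproper : ∃ v, ϑf v ≠ ⊤)
    (hϑlsc : LowerSemicontinuous ϑf)
    (hϑconvex : ∀ (v v' : Y) (a b : ℝ), 0 ≤ a → 0 ≤ b → a + b = 1 →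
      ϑf (a • v + b • v') ≤ (a : EReal) * ϑf v + (b : EReal) * ϑf v')
    (hφbot : ∀ v, φg v ≠ ⊥) (hφproper : ∃ v, φg v ≠ ⊤)
    (hφlsc : LowerSemicontinuous φg)
    (hφconvex : ∀ (v v' : Z) (a b : ℝ), 0 ≤ a → 0 ≤ b → a + b = 1 →
      φg (a • v + b • v') ≤ (a : EReal) * φg v + (b : EReal) * φg v')
    (A : X →ₗ[ℝ] Y) (B : X →ₗ[ℝ] Z) (c : X)
    (β τ : ℝ) (hβ : 0 < β) (hτ : 0 < τ)
    (S : Y →ₗ[ℝ] Y) (hSsym : LinearMap.IsSymmetric S) (hSpsd : ∀ v, 0 ≤ ⟪S v, v⟫)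
    (T₀ : Z →ₗ[ℝ] Z) (hTsym : LinearMap.IsSymmetric T₀) (hTpsd : ∀ v, 0 ≤ ⟪T₀ v, v⟫)
    (SigY : Y →ₗ[ℝ] Y) (hSigYsym : LinearMap.IsSymmetric SigY)
    (hSigYpsd : ∀ v, 0 ≤ ⟪SigY v, v⟫)
    (hSigYmono : ∀ (y₁ y₂ ξ₁ ξ₂ : Y), ξ₁ ∈ subdiff ϑf y₁ → ξ₂ ∈ subdiff ϑf y₂ →
      ⟪y₁ - y₂, SigY (y₁ - y₂)⟫ ≤ ⟪ξ₁ - ξ₂, y₁ - y₂⟫)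
    (SigZ : Z →ₗ[ℝ] Z) (hSigZsym : LinearMap.IsSymmetric SigZ)
    (hSigZpsd : ∀ v, 0 ≤ ⟪SigZ v, v⟫)
    (hSigZmono : ∀ (z₁ z₂ η₁ η₂ : Z), η₁ ∈ subdiff φg z₁ → η₂ ∈ subdiff φg z₂ →
      ⟪z₁ - z₂, SigZ (z₁ - z₂)⟫ ≤ ⟪η₁ - η₂, z₁ - z₂⟫)
    (y : ℕ → Y) (z : ℕ → Z) (x : ℕ → X)
    (hADMMy : ∀ k : ℕ,
      -(A (x k)) - β • A (LinearMap.adjoint A (y (k+1)) + LinearMap.adjoint B (z k) - c)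
        - S (y (k+1) - y k) ∈ subdiff ϑf (y (k+1)))
    (hADMMz : ∀ k : ℕ,
      -(B (x k)) - β • B (LinearMap.adjoint A (y (k+1)) + LinearMap.adjoint B (z (k+1)) - c)
        - T₀ (z (k+1) - z k) ∈ subdiff φg (z (k+1)))
    (hADMMx : ∀ k : ℕ,
      x (k+1) = x k + (τ * β) • (LinearMap.adjoint A (y (k+1)) + LinearMap.adjoint B (z (k+1)) - c))
    (KKT : Y × Z × X → Prop)
    (hKKT : ∀ w : Y × Z × X, KKT w ↔
      (-(A w.2.2) ∈ subdiff ϑf w.1 ∧ -(B w.2.2) ∈ subdiff φg w.2.1 ∧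
        LinearMap.adjoint A w.1 + LinearMap.adjoint B w.2.1 = c))
    (hne : ∃ w, KKT w)
    (H3sq : Y → Z → X → ℝ)
    (hH3 : ∀ (vy : Y) (vz : Z) (vx : X), H3sq vy vz vx =
      4 * τ * (30 * (⟪vy, S vy⟫ + ⟪vy, SigY vy⟫ + 5 * β * ‖LinearMap.adjoint A vy‖ ^ 2)
        + 2 * (⟪vz, T₀ vz⟫ + ⟪vz, SigZ vz⟫ + 57 * β * ‖LinearMap.adjoint B vz‖ ^ 2)
        + 112 * β⁻¹ * ‖vx‖ ^ 2)) :
    (τ * β)⁻¹ * ‖x 1 - x 0‖ ^ 2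
      ≤ (⨅ w : {w : Y × Z × X // KKT w},
      Real.sqrt (H3sq (w.1.1 - y 0) (w.1.2.1 - z 0) (w.1.2.2 - x 0))) ^ 2 :=
  sPADMM_first_step_x_bound_general ϑf φg A B c β τ hβ hτ S hSsym hSpsd T₀ hTsym hTpsd SigY hSigYpsd
    hSigYmono SigZ hSigZpsd hSigZmono y z x hADMMy hADMMz hADMMx KKT hKKT hne H3sq hH3
end
end
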